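/- arXiv:0806.1416 — 12 statements merged into one kernel-verified Lean document; each statement's English description precedes it below -/
import Mathlib

section
/- Let v > 1 and set γ = π/2 + arcsin(1/v). Let a, b ∈ ℝ² and let H be a line (one-dimensional affine subspace) of ℝ². Then there exist points p, g ∈ H with dist a p + dist p g / v + dist g b ≤ dist a b if and only if H intersects the closed lens ℓ_γ(a,b) = {z ∈ ℝ² : ∠ a z b ≥ γ} ∪ segment ℝ a b. (Lemma 6 of the paper: the useful region of the pair {a,b} is exactly the lens ℓ_{α+π/2}(a,b), where α = arcsin(1/v).) -/
open Real
set_option maxHeartbeats 1000000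

private lemma cs_sqrt (s c X Y : ℝ) (hsc : s^2 + c^2 = 1) :
    s*X + c*Y ≤ Real.sqrt (X^2 + Y^2) := by
  rcases le_or_gt (s*X + c*Y) 0 with h | h
  · exact h.trans (Real.sqrt_nonneg _)
  · rw [show (X^2+Y^2 : ℝ) = (X^2+Y^2) from rfl]
    rw [← Real.sqrt_sq h.le] ; apply Real.sqrt_le_sqrt; nlinarith [sq_nonneg (c*X - s*Y)]

private lemma mink (x₁ y₁ x₂ y₂ : ℝ) :
    Real.sqrt ((x₁+x₂)^2 + (y₁+y₂)^2) ≤ Real.sqrt (x₁^2+y₁^2) + Real.sqrt (x₂^2+y₂^2) := by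
  have hA := Real.sqrt_nonneg (x₁^2+y₁^2)
  have hB := Real.sqrt_nonneg (x₂^2+y₂^2)
  have hA2 : (Real.sqrt (x₁^2+y₁^2))^2 = x₁^2+y₁^2 := Real.sq_sqrt (by positivity)
  have hB2 : (Real.sqrt (x₂^2+y₂^2))^2 = x₂^2+y₂^2 := Real.sq_sqrt (by positivity)
  rw [show ((x₁+x₂)^2 + (y₁+y₂)^2 : ℝ) = (x₁+x₂)^2 + (y₁+y₂)^2 from rfl,
    ← Real.sqrt_sq (by positivity : (0:ℝ) ≤ Real.sqrt (x₁^2+y₁^2) + Real.sqrt (x₂^2+y₂^2))]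
  apply Real.sqrt_le_sqrt
  have hcs : x₁*x₂ + y₁*y₂ ≤ Real.sqrt (x₁^2+y₁^2) * Real.sqrt (x₂^2+y₂^2) := by
    nlinarith [sq_nonneg (x₁*y₂ - x₂*y₁), mul_nonneg hA hB, sq_nonneg (x₁*x₂+y₁*y₂ - Real.sqrt (x₁^2+y₁^2) * Real.sqrt (x₂^2+y₂^2))]
  nlinarith

section core

section core
variable {s c h₁ h₂ L : ℝ}

private lemma B_to_lhs (hs : 0 < s) (hc : 0 < c) (hsc : s^2 + c^2 = 1)
    (h1 : 0 < h₁) (h2 : 0 < h₂) (hL : 0 ≤ L)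
    (hB1 : s*(h₁+h₂) ≤ c*L) (hB2 : 4*(h₁*h₂) ≤ (c*L - s*(h₁+h₂))^2) :
    ∃ p q : ℝ, Real.sqrt (p^2 + h₁^2) + s * |q - p| + Real.sqrt ((L-q)^2 + h₂^2)
        ≤ Real.sqrt (L^2 + (h₁-h₂)^2) := by
  refine ⟨s*h₁/c, L - s*h₂/c, ?_⟩
  have e1 : Real.sqrt ((s*h₁/c)^2 + h₁^2) = h₁/c := by
    rw [show (s*h₁/c)^2 + h₁^2 = (h₁/c)^2 by field_simp; nlinarith]
    exact Real.sqrt_sq (by positivity)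
  have e2 : Real.sqrt ((L-(L - s*h₂/c))^2 + h₂^2) = h₂/c := by
    rw [show (L-(L - s*h₂/c))^2 + h₂^2 = (h₂/c)^2 by field_simp; nlinarith]
    exact Real.sqrt_sq (by positivity)
  have e3 : |(L - s*h₂/c) - s*h₁/c| = L - s*h₂/c - s*h₁/c := by
    apply abs_of_nonneg
    have h4 : L - s*h₂/c - s*h₁/c = (c*L - s*(h₁+h₂))/c := by field_simp; ring
    rw [h4]
    exact div_nonneg (by linarith) hc.le
  rw [e1, e2, e3]
  have eT : h₁/c + s * (L - s*h₂/c - s*h₁/c) + h₂/c = c*(h₁+h₂) + s*L := by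
    field_simp; nlinarith [hsc]
  rw [eT, ← Real.sqrt_sq (by positivity : (0:ℝ) ≤ c*(h₁+h₂) + s*L)]
  apply Real.sqrt_le_sqrt
  nlinarith [hB2, hsc]

private lemma lhs_to_B (hs : 0 < s) (hs1 : s < 1) (hc : 0 < c) (hsc : s^2 + c^2 = 1)
    (h1 : 0 < h₁) (h2 : 0 < h₂) (hL : 0 ≤ L) {p q : ℝ}
    (h : Real.sqrt (p^2 + h₁^2) + s * |q - p| + Real.sqrt ((L-q)^2 + h₂^2)
        ≤ Real.sqrt (L^2 + (h₁-h₂)^2)) :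
    s*(h₁+h₂) ≤ c*L ∧ 4*(h₁*h₂) ≤ (c*L - s*(h₁+h₂))^2 := by
  have hMink := mink p h₁ (L-q) h₂
  have hT1 : Real.sqrt ((p+(L-q))^2 + (h₁+h₂)^2) + s*|q-p|
      ≤ Real.sqrt (L^2 + (h₁-h₂)^2) := by
    calc Real.sqrt ((p+(L-q))^2 + (h₁+h₂)^2) + s*|q-p|
        ≤ (Real.sqrt (p^2+h₁^2) + Real.sqrt ((L-q)^2+h₂^2)) + s*|q-p| := by linarith
      _ ≤ Real.sqrt (L^2 + (h₁-h₂)^2) := by linarith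
  have hCS := cs_sqrt s c (p+(L-q)) (h₁+h₂) hsc
  have habs : |q - p| ≥ q - p := le_abs_self _
  have habs' : s*(q-p) ≤ s*|q-p| := mul_le_mul_of_nonneg_left habs hs.le
  have hsLcH : s*L + c*(h₁+h₂) ≤ Real.sqrt (L^2 + (h₁-h₂)^2) := by linarith
  have hD2 : (s*L + c*(h₁+h₂))^2 ≤ L^2 + (h₁-h₂)^2 := by
    have h0 : 0 ≤ s*L + c*(h₁+h₂) := by positivity
    have := Real.sq_sqrt (by positivity : (0:ℝ) ≤ L^2 + (h₁-h₂)^2)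
    nlinarith [hsLcH]
  constructor
  · by_contra hcon
    push_neg at hcon
    set H := h₁ + h₂ with hH
    have hApos : (0:ℝ) ≤ L^2 + H^2 := by positivity
    set A := Real.sqrt (L^2+H^2) with hA
    have hA0 : 0 ≤ A := Real.sqrt_nonneg _
    have hA2 : A^2 = L^2+H^2 := Real.sq_sqrt hApos
    have hsl : L ≤ s * A := by
      have hsq : L^2 ≤ (s*A)^2 := by nlinarith [mul_le_mul hcon.le hcon.le (by positivity) (by positivity : (0:ℝ) ≤ s*H)]
      nlinarith [mul_nonneg hs.le hA0]
    set e := p - q with he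
    set E := |e| with hEdef
    have hE0 : (0:ℝ) ≤ E := abs_nonneg _
    have hE2 : E^2 = e^2 := sq_abs _
    have hEe : -e ≤ E := neg_le_abs _
    set B := Real.sqrt ((L+e)^2+H^2) with hB
    have hB0 : 0 ≤ B := Real.sqrt_nonneg _
    have hB2 : B^2 = (L+e)^2+H^2 := Real.sq_sqrt (by positivity)
    have hstep : A ≤ B + s*E := by
      rcases le_or_gt A (s*E) with hcase | hcase
      · linarith
      · have h0 : 0 ≤ A - s*E := by linarith
        have hkey : (A - s*E)^2 ≤ B^2 := by
          have i1 : L*E ≤ s*A*E := mul_le_mul_of_nonneg_right hsl hE0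
          have i2 : L*(-e) ≤ L*E := mul_le_mul_of_nonneg_left hEe hL
          have i3 : (0:ℝ) ≤ (1 - s^2)*E^2 := by nlinarith [sq_nonneg E]
          nlinarith [i1, i2, i3]
        nlinarith [hkey, h0, hB0]
    have hbig : Real.sqrt (L^2 + (h₁-h₂)^2) < A := by
      rw [hA]
      apply Real.sqrt_lt_sqrt (by positivity)
      nlinarith
    have heq : p + (L - q) = L + e := by ring
    rw [heq] at hT1
    have hqp : |q - p| = E := by rw [hEdef, he, abs_sub_comm]
    rw [hqp] at hT1
    linarith
  · nlinarith [hD2, hsc]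

end core

section core2
variable {s c h₁ h₂ L : ℝ}

private lemma B_to_rhs (hs : 0 < s) (hs1 : s < 1) (hc : 0 < c) (hsc : s^2 + c^2 = 1)
    (h1 : 0 < h₁) (h2 : 0 < h₂) (hL : 0 ≤ L)
    (hB1 : s*(h₁+h₂) ≤ c*L) (hB2 : 4*(h₁*h₂) ≤ (c*L - s*(h₁+h₂))^2) :
    ∃ x : ℝ, s * (Real.sqrt (x^2 + h₁^2) * Real.sqrt ((L-x)^2 + h₂^2))
        ≤ x*(L-x) - h₁*h₂ := by
  obtain ⟨k, hk⟩ : ∃ k, k = Real.sqrt (h₁*h₂) := ⟨_, rfl⟩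
  have hk0 : 0 < k := hk ▸ Real.sqrt_pos.mpr (by positivity)
  have hk2 : k^2 = h₁*h₂ := hk ▸ Real.sq_sqrt (by positivity)
  have hBk : 2*k ≤ c*L - s*(h₁+h₂) := by nlinarith [hB1, hB2, hk0]
  refine ⟨(s*h₁ + k)/c, ?_⟩
  obtain ⟨u, hu⟩ : ∃ u, u = (s*h₁ + k)/c := ⟨_, rfl⟩
  obtain ⟨w, hw⟩ : ∃ w, w = L - u := ⟨_, rfl⟩
  rw [show (s*h₁ + k)/c = u from hu.symm, show L - u = w from hw.symm]
  have hcu : c*u = s*h₁ + k := by rw [hu]; field_simp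
  have hcw : c*w = c*L - s*h₁ - k := by rw [hw, hu]; field_simp; ring
  have hcw2 : s*h₂ + k ≤ c*w := by rw [hcw]; linarith
  have hu0 : 0 < u := by rw [hu]; positivity
  have hw0 : 0 < w := by nlinarith [hcw2]
  have hkey : c^2*(u*w - h₁*h₂) - c*s*(u*h₂ + w*h₁) = k*((c*w - s*h₂) - k) := by
    have exp : (c*u)*(c*w) = (s*h₁ + k)*(c*w) := by rw [hcu]
    nlinarith [exp, hsc, hk2, hcw]
  have hP0 : 0 ≤ u*h₂ + w*h₁ := by positivity
  have hnn : 0 ≤ k*((c*w - s*h₂) - k) := mul_nonneg hk0.le (by linarith)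
  have hR0 : 0 ≤ u*w - h₁*h₂ := by
    nlinarith [hkey, hnn, mul_nonneg (mul_nonneg hc.le hs.le) hP0, mul_pos hc hc]
  have hcsr : s*(u*h₂ + w*h₁) ≤ c*(u*w - h₁*h₂) := by
    have hlin : 0 ≤ c*(c*(u*w - h₁*h₂) - s*(u*h₂ + w*h₁)) := by nlinarith [hkey, hnn]
    nlinarith [hlin, hc]
  have hgoal2 : s^2 * ((u^2+h₁^2) * (w^2+h₂^2)) ≤ (u*w - h₁*h₂)^2 := by
    have hid : (u^2+h₁^2)*(w^2+h₂^2) = (u*w - h₁*h₂)^2 + (u*h₂ + w*h₁)^2 := by ring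
    have h2' : (s*(u*h₂+w*h₁))*(s*(u*h₂+w*h₁)) ≤ (c*(u*w-h₁*h₂))*(c*(u*w-h₁*h₂)) :=
      mul_le_mul hcsr hcsr (by positivity) (by positivity)
    have h3 : (s^2+c^2)*(u*w-h₁*h₂)^2 = (u*w-h₁*h₂)^2 := by rw [hsc]; ring
    nlinarith [h2', hid, h3, sq_nonneg (u*w-h₁*h₂)]
  have hLHS : s * (Real.sqrt (u^2 + h₁^2) * Real.sqrt (w^2 + h₂^2))
      = Real.sqrt (s^2 * ((u^2+h₁^2) * (w^2+h₂^2))) := by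
    rw [Real.sqrt_mul (by positivity), Real.sqrt_mul (by positivity : (0:ℝ) ≤ (u:ℝ)^2+h₁^2), Real.sqrt_sq hs.le]
  rw [hLHS]
  calc Real.sqrt (s^2 * ((u^2+h₁^2) * (w^2+h₂^2))) ≤ Real.sqrt ((u*w - h₁*h₂)^2) :=
        Real.sqrt_le_sqrt hgoal2
    _ = u*w - h₁*h₂ := Real.sqrt_sq hR0

private lemma rhs_to_B (hs : 0 < s) (hs1 : s < 1) (hc : 0 < c) (hsc : s^2 + c^2 = 1)
    (h1 : 0 < h₁) (h2 : 0 < h₂) (hL : 0 ≤ L) {u : ℝ}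
    (h : s * (Real.sqrt (u^2 + h₁^2) * Real.sqrt ((L-u)^2 + h₂^2))
        ≤ u*(L-u) - h₁*h₂) :
    s*(h₁+h₂) ≤ c*L ∧ 4*(h₁*h₂) ≤ (c*L - s*(h₁+h₂))^2 := by
  obtain ⟨w, hw⟩ : ∃ w, w = L - u := ⟨_, rfl⟩
  rw [show L - u = w from hw.symm] at h
  have hR0 : 0 ≤ u*w - h₁*h₂ := le_trans (by positivity) h
  have hu0 : 0 < u := by
    rcases le_or_gt u 0 with h' | h'
    · exfalso
      have hw' : 0 ≤ w := by rw [hw]; linarith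
      nlinarith [mul_nonneg (neg_nonneg.mpr h') hw']
    · exact h'
  have hw0 : 0 < w := by
    rcases le_or_gt w 0 with h' | h'
    · exfalso; nlinarith [mul_nonpos_of_nonneg_of_nonpos hu0.le h']
    · exact h'
  have hA2 : (Real.sqrt (u^2+h₁^2))^2 = u^2+h₁^2 := Real.sq_sqrt (by positivity)
  have hB2 : (Real.sqrt (w^2+h₂^2))^2 = w^2+h₂^2 := Real.sq_sqrt (by positivity)
  have hA0 : 0 ≤ Real.sqrt (u^2+h₁^2) := Real.sqrt_nonneg _
  have hB0 : 0 ≤ Real.sqrt (w^2+h₂^2) := Real.sqrt_nonneg _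
  have hsq : s^2 * ((u^2+h₁^2)*(w^2+h₂^2)) ≤ (u*w - h₁*h₂)^2 := by
    have e : (s * (Real.sqrt (u^2+h₁^2) * Real.sqrt (w^2+h₂^2)))^2
        = s^2*((u^2+h₁^2)*(w^2+h₂^2)) := by
      rw [mul_pow, mul_pow, hA2, hB2]
    have e2 := pow_le_pow_left₀ (by positivity : (0:ℝ) ≤ s * (Real.sqrt (u^2+h₁^2) * Real.sqrt (w^2+h₂^2))) h 2
    rw [e] at e2; exact e2
  have hP0 : 0 < u*h₂ + w*h₁ := by positivity
  have hcsr : s*(u*h₂ + w*h₁) ≤ c*(u*w - h₁*h₂) := by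
    have hid : (u^2+h₁^2)*(w^2+h₂^2) = (u*w - h₁*h₂)^2 + (u*h₂ + w*h₁)^2 := by ring
    have h3 : (s^2+c^2)*(u*w-h₁*h₂)^2 = (u*w-h₁*h₂)^2 := by rw [hsc]; ring
    have h2' : (s*(u*h₂+w*h₁))^2 ≤ (c*(u*w-h₁*h₂))^2 := by nlinarith [hsq, hid, h3]
    nlinarith [h2', mul_nonneg hc.le hR0, mul_nonneg hs.le hP0.le]
  obtain ⟨k, hk⟩ : ∃ k, k = Real.sqrt (h₁*h₂) := ⟨_, rfl⟩
  have hk0 : 0 < k := hk ▸ Real.sqrt_pos.mpr (by positivity)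
  have hk2 : k^2 = h₁*h₂ := hk ▸ Real.sq_sqrt (by positivity)
  obtain ⟨m, hm⟩ : ∃ m, m = Real.sqrt (u*w) := ⟨_, rfl⟩
  have hm0 : 0 < m := hm ▸ Real.sqrt_pos.mpr (by positivity)
  have hm2 : m^2 = u*w := hm ▸ Real.sq_sqrt (by positivity)
  have hAMGM : 2*(m*k) ≤ u*h₂ + w*h₁ := by
    nlinarith [sq_nonneg (u*h₂ - w*h₁), mul_pos hm0 hk0, hm2, hk2, hP0]
  have hmk : (s+1)*k ≤ c*m := by
    have hq : 0 ≤ c*m^2 - 2*s*(k*m) - c*k^2 := by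
      nlinarith [hcsr, hm2, hk2, mul_le_mul_of_nonneg_left hAMGM hs.le]
    have hfac : (c*m - (s+1)*k)*(c*m - (s-1)*k) = c*(c*m^2 - 2*s*(k*m) - c*k^2) := by
      linear_combination (k^2)*hsc
    have hpos2 : 0 < c*m - (s-1)*k := by nlinarith [mul_pos hc hm0, mul_pos hk0 hk0]
    nlinarith [hq, hfac, hpos2, hc]
  clear h hA2 hB2 hA0 hB0 hsq hR0
  have hprod : k^2 ≤ (c*u - s*h₁)*(c*w - s*h₂) := by
    have h3 : (s^2+c^2)*(h₁*h₂) = h₁*h₂ := by rw [hsc]; ring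
    nlinarith [mul_le_mul_of_nonneg_left hcsr hc.le, h3, hk2]
  have hX : 0 < c*u - s*h₁ := by
    rcases le_or_gt (c*u - s*h₁) 0 with h' | h'
    · exfalso
      have h'' : c*w - s*h₂ ≤ 0 := by nlinarith [hprod, hk0]
      have hcc : (c*u)*(c*w) ≤ (s*h₁)*(s*h₂) := by
        nlinarith [mul_pos hc hu0, mul_pos hc hw0, h', h'']
      nlinarith [hmk, hm2, hk2, mul_pos hs hk0, mul_pos hk0 hk0, hm0]
    · exact h'
  have hY : 0 < c*w - s*h₂ := by nlinarith [hprod, hk0, hX]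
  have hsum : 2*k ≤ (c*u - s*h₁) + (c*w - s*h₂) := by
    nlinarith [hprod, hX, hY, sq_nonneg ((c*u - s*h₁) - (c*w - s*h₂)), hk0]
  have hLsum : c*L - s*(h₁+h₂) = (c*u - s*h₁) + (c*w - s*h₂) := by rw [hw]; ring
  constructor
  · nlinarith [hsum, hk0, hLsum]
  · nlinarith [hsum, hk0, hk2, hLsum]

end core2

private lemma scalar_core {s c h₁ h₂ L : ℝ} (hs : 0 < s) (hs1 : s < 1) (hc : 0 < c)
    (hsc : s^2 + c^2 = 1) (h1 : 0 < h₁) (h2 : 0 < h₂) (hL : 0 ≤ L) :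
    (∃ p q : ℝ, Real.sqrt (p^2 + h₁^2) + s * |q - p| + Real.sqrt ((L-q)^2 + h₂^2)
        ≤ Real.sqrt (L^2 + (h₁-h₂)^2)) ↔
    (∃ x : ℝ, s * (Real.sqrt (x^2 + h₁^2) * Real.sqrt ((L-x)^2 + h₂^2))
        ≤ x*(L-x) - h₁*h₂) := by
  constructor
  · rintro ⟨p, q, hpq⟩
    obtain ⟨hB1, hB2⟩ := lhs_to_B hs hs1 hc hsc h1 h2 hL hpq
    exact B_to_rhs hs hs1 hc hsc h1 h2 hL hB1 hB2
  · rintro ⟨x, hx⟩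
    obtain ⟨hB1, hB2⟩ := rhs_to_B hs hs1 hc hsc h1 h2 hL hx
    exact B_to_lhs hs hc hsc h1 h2 hL hB1 hB2

/-- general position wrapper: a = (a₁,h₁), b = (b₁,h₂) with h₁,h₂ > 0, axis = x-axis. -/
private lemma scalar_main {s a₁ b₁ h₁ h₂ : ℝ} (hs : 0 < s) (hs1 : s < 1)
    (h1 : 0 < h₁) (h2 : 0 < h₂) :
    (∃ p q : ℝ, Real.sqrt ((p-a₁)^2 + h₁^2) + s * |q - p| + Real.sqrt ((q-b₁)^2 + h₂^2)
        ≤ Real.sqrt ((a₁-b₁)^2 + (h₁-h₂)^2)) ↔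
    (∃ x : ℝ, s * (Real.sqrt ((x-a₁)^2 + h₁^2) * Real.sqrt ((x-b₁)^2 + h₂^2))
        ≤ (x-a₁)*(b₁-x) - h₁*h₂) := by
  obtain ⟨c, hcdef⟩ : ∃ c, c = Real.sqrt (1 - s^2) := ⟨_, rfl⟩
  have hc : 0 < c := hcdef ▸ Real.sqrt_pos.mpr (by nlinarith)
  have hsc : s^2 + c^2 = 1 := by
    have := hcdef ▸ Real.sq_sqrt (by nlinarith : (0:ℝ) ≤ 1 - s^2); linarith
  rcases le_total a₁ b₁ with hab | hab
  · have core := scalar_core hs hs1 hc hsc h1 h2 (by linarith : (0:ℝ) ≤ b₁ - a₁)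
    constructor
    · rintro ⟨p, q, hpq⟩
      have lhs : ∃ p' q' : ℝ, Real.sqrt (p'^2 + h₁^2) + s * |q' - p'|
          + Real.sqrt (((b₁-a₁)-q')^2 + h₂^2) ≤ Real.sqrt ((b₁-a₁)^2 + (h₁-h₂)^2) := by
        refine ⟨p - a₁, q - a₁, ?_⟩
        rw [show ((b₁-a₁)-(q-a₁))^2 = (q-b₁)^2 by ring, show (q-a₁)-(p-a₁) = q - p by ring,
          show ((b₁-a₁))^2 = (a₁-b₁)^2 by ring]
        rw [show (p-a₁)^2 = (p-a₁)^2 from rfl] at hpq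
        exact hpq
      obtain ⟨x, hx⟩ := core.mp lhs
      refine ⟨x + a₁, ?_⟩
      rw [show (x+a₁-a₁)^2 = x^2 by ring, show (x+a₁-b₁)^2 = ((b₁-a₁)-x)^2 by ring,
        show (x+a₁-a₁)*(b₁-(x+a₁)) = x*((b₁-a₁)-x) by ring]
      exact hx
    · rintro ⟨x, hx⟩
      have rhs : ∃ x' : ℝ, s * (Real.sqrt (x'^2 + h₁^2) * Real.sqrt (((b₁-a₁)-x')^2 + h₂^2))
          ≤ x'*((b₁-a₁)-x') - h₁*h₂ := by
        refine ⟨x - a₁, ?_⟩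
        rw [show ((b₁-a₁)-(x-a₁))^2 = (x-b₁)^2 by ring,
          show (x-a₁)*((b₁-a₁)-(x-a₁)) = (x-a₁)*(b₁-x) by ring]
        exact hx
      obtain ⟨p, q, hpq⟩ := core.mpr rhs
      refine ⟨p + a₁, q + a₁, ?_⟩
      rw [show (p+a₁-a₁)^2 = p^2 by ring, show (q+a₁) - (p+a₁) = q - p by ring,
        show (q+a₁-b₁)^2 = ((b₁-a₁)-q)^2 by ring, show (a₁-b₁)^2 = (b₁-a₁)^2 by ring]
      exact hpq
  · have core := scalar_core hs hs1 hc hsc h2 h1 (by linarith : (0:ℝ) ≤ a₁ - b₁)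
    constructor
    · rintro ⟨p, q, hpq⟩
      have lhs : ∃ p' q' : ℝ, Real.sqrt (p'^2 + h₂^2) + s * |q' - p'|
          + Real.sqrt (((a₁-b₁)-q')^2 + h₁^2) ≤ Real.sqrt ((a₁-b₁)^2 + (h₂-h₁)^2) := by
        refine ⟨q - b₁, p - b₁, ?_⟩
        rw [show ((a₁-b₁)-(p-b₁))^2 = (p-a₁)^2 by ring, show (h₂-h₁)^2 = (h₁-h₂)^2 by ring,
          abs_sub_comm, show (q-b₁)-(p-b₁) = q - p by ring]
        linarith [hpq]
      obtain ⟨x, hx⟩ := core.mp lhs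
      refine ⟨x + b₁, ?_⟩
      rw [show (x+b₁-a₁)^2 = ((a₁-b₁)-x)^2 by ring, show (x+b₁-b₁)^2 = x^2 by ring,
        show (x+b₁-a₁)*(b₁-(x+b₁)) = x*((a₁-b₁)-x) by ring]
      linarith [hx, mul_comm (Real.sqrt (x^2 + h₂^2)) (Real.sqrt (((a₁-b₁)-x)^2 + h₁^2))]
    · rintro ⟨x, hx⟩
      have rhs : ∃ x' : ℝ, s * (Real.sqrt (x'^2 + h₂^2) * Real.sqrt (((a₁-b₁)-x')^2 + h₁^2))
          ≤ x'*((a₁-b₁)-x') - h₂*h₁ := by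
        refine ⟨x - b₁, ?_⟩
        rw [show ((a₁-b₁)-(x-b₁))^2 = (x-a₁)^2 by ring,
          show (x-b₁)*((a₁-b₁)-(x-b₁)) = (x-a₁)*(b₁-x) by ring]
        have := mul_comm (Real.sqrt ((x-b₁)^2 + h₂^2)) (Real.sqrt ((x-a₁)^2 + h₁^2))
        nlinarith [hx]
      obtain ⟨p, q, hpq⟩ := core.mpr rhs
      refine ⟨q + b₁, p + b₁, ?_⟩
      rw [show (q+b₁-a₁)^2 = ((a₁-b₁)-q)^2 by ring, show (p+b₁) - (q+b₁) = p - q by ring,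
        show (p+b₁-b₁)^2 = p^2 by ring, show (a₁-b₁)^2 = (a₁-b₁)^2 from rfl,
        abs_sub_comm, show (a₁-b₁)^2 + (h₁-h₂)^2 = (a₁-b₁)^2 + (h₂-h₁)^2 by ring]
      linarith [hpq]

private lemma angle_iff (v : ℝ) (hv : 1 < v) (a z b : EuclideanSpace ℝ (Fin 2)) :
    π/2 + Real.arcsin (1/v) ≤ EuclideanGeometry.angle a z b ↔
    (inner ℝ (a - z) (b - z) : ℝ) / (‖a - z‖ * ‖b - z‖) ≤ -(1/v) := by
  have hv0 : (0:ℝ) < v := by linarith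
  have h01 : (0:ℝ) < 1/v := by positivity
  have h11 : 1/v < 1 := by rw [div_lt_one hv0]; linarith
  have hγ0 : 0 ≤ π/2 + Real.arcsin (1/v) := by
    have := Real.arcsin_pos.mpr h01
    have := Real.pi_pos
    linarith
  have hγπ : π/2 + Real.arcsin (1/v) ≤ π := by
    have := Real.arcsin_le_pi_div_two (1/v)
    linarith
  have hcosγ : Real.cos (π/2 + Real.arcsin (1/v)) = -(1/v) := by
    rw [show Real.cos (π/2 + Real.arcsin (1/v)) = -Real.sin (Real.arcsin (1/v)) by
      simp [Real.cos_add]]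
    rw [Real.sin_arcsin (by linarith) (by linarith)]
  have hcosang : Real.cos (EuclideanGeometry.angle a z b)
      = (inner ℝ (a - z) (b - z) : ℝ) / (‖a - z‖ * ‖b - z‖) := by
    rw [show EuclideanGeometry.angle a z b = InnerProductGeometry.angle (a - z) (b - z) from rfl,
      InnerProductGeometry.cos_angle]
  constructor
  · intro hle
    rw [← hcosang, ← hcosγ]
    exact Real.cos_le_cos_of_nonneg_of_le_pi hγ0 (EuclideanGeometry.angle_le_pi a z b) hle
  · intro hle
    by_contra hlt
    push_neg at hlt
    have := Real.cos_lt_cos_of_nonneg_of_le_pi (EuclideanGeometry.angle_nonneg a z b) hγπ hlt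
    rw [hcosγ, hcosang] at this
    linarith

private lemma exists_frame (H : AffineSubspace ℝ (EuclideanSpace ℝ (Fin 2)))
    (hH : Module.finrank ℝ H.direction = 1) :
    ∃ (z₀ u n : EuclideanSpace ℝ (Fin 2)), z₀ ∈ H ∧
      (∀ y, y ∈ H ↔ ∃ t : ℝ, y = z₀ + t • u) ∧
      (∀ y : EuclideanSpace ℝ (Fin 2),
        y = (inner ℝ u y : ℝ) • u + (inner ℝ n y : ℝ) • n) ∧
      (∀ y₁ y₂ : EuclideanSpace ℝ (Fin 2),
        (inner ℝ y₁ y₂ : ℝ) = (inner ℝ u y₁ : ℝ) * (inner ℝ u y₂ : ℝ)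
          + (inner ℝ n y₁ : ℝ) * (inner ℝ n y₂ : ℝ)) ∧
      (inner ℝ u u : ℝ) = 1 ∧ (inner ℝ n u : ℝ) = 0 := by
  have hne : (H : Set (EuclideanSpace ℝ (Fin 2))).Nonempty := by
    rw [AffineSubspace.nonempty_iff_ne_bot]
    intro hbot
    rw [hbot, AffineSubspace.direction_bot] at hH
    simp at hH
  obtain ⟨z₀, hz₀⟩ := hne
  have hdne : H.direction ≠ ⊥ := by
    intro hbot; rw [hbot] at hH; simp at hH
  obtain ⟨w, hwH, hw0⟩ := Submodule.exists_mem_ne_zero_of_ne_bot hdne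
  obtain ⟨u, hu⟩ : ∃ u : EuclideanSpace ℝ (Fin 2), u = (‖w‖:ℝ)⁻¹ • w := ⟨_, rfl⟩
  have hu1 : ‖u‖ = 1 := by rw [hu]; exact norm_smul_inv_norm hw0
  have hu0 : u ≠ 0 := by
    intro h; rw [h] at hu1; simp at hu1
  have huH : u ∈ H.direction := by rw [hu]; exact H.direction.smul_mem _ hwH
  have hspan : Submodule.span ℝ {u} = H.direction := by
    apply Submodule.eq_of_le_of_finrank_le
    · rw [Submodule.span_le, Set.singleton_subset_iff]; exact huH
    · rw [hH, finrank_span_singleton hu0]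
  have huu : (inner ℝ u u : ℝ) = 1 := by
    rw [real_inner_self_eq_norm_sq, hu1]; norm_num
  set K := Submodule.span ℝ {u} with hK
  have hKfin : Module.finrank ℝ K = 1 := finrank_span_singleton hu0
  have hKorth : Module.finrank ℝ Kᗮ = 1 := by
    have := Submodule.finrank_add_finrank_orthogonal (K := K)
    rw [hKfin, finrank_euclideanSpace_fin] at this
    omega
  have hKone : Kᗮ ≠ ⊥ := by
    intro hbot; rw [hbot] at hKorth; simp at hKorth
  obtain ⟨w', hw'H, hw'0⟩ := Submodule.exists_mem_ne_zero_of_ne_bot hKone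
  obtain ⟨n, hn⟩ : ∃ n : EuclideanSpace ℝ (Fin 2), n = (‖w'‖:ℝ)⁻¹ • w' := ⟨_, rfl⟩
  have hn1 : ‖n‖ = 1 := by rw [hn]; exact norm_smul_inv_norm hw'0
  have hn0 : n ≠ 0 := by intro h; rw [h] at hn1; simp at hn1
  have hnK : n ∈ Kᗮ := by rw [hn]; exact Kᗮ.smul_mem _ hw'H
  have hnn : (inner ℝ n n : ℝ) = 1 := by
    rw [real_inner_self_eq_norm_sq, hn1]; norm_num
  have hnu : (inner ℝ n u : ℝ) = 0 := by
    have := (Submodule.mem_orthogonal K n).mp hnK u (Submodule.mem_span_singleton_self u)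
    rw [real_inner_comm]; exact this
  have hun : (inner ℝ u n : ℝ) = 0 := by rw [real_inner_comm]; exact hnu
  have hspan_n : Submodule.span ℝ {n} = Kᗮ := by
    apply Submodule.eq_of_le_of_finrank_le
    · rw [Submodule.span_le, Set.singleton_subset_iff]; exact hnK
    · rw [hKorth, finrank_span_singleton hn0]
  have hdec : ∀ y : EuclideanSpace ℝ (Fin 2),
      y = (inner ℝ u y : ℝ) • u + (inner ℝ n y : ℝ) • n := by
    intro y
    set r := y - (inner ℝ u y : ℝ) • u - (inner ℝ n y : ℝ) • n with hr
    have hru : (inner ℝ u r : ℝ) = 0 := by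
      rw [hr, inner_sub_right, inner_sub_right, real_inner_smul_right,
        real_inner_smul_right, huu, hun]; ring
    have hrn : (inner ℝ n r : ℝ) = 0 := by
      rw [hr, inner_sub_right, inner_sub_right, real_inner_smul_right,
        real_inner_smul_right, hnn, hnu]; ring
    have hrK : r ∈ Kᗮ := by
      rw [Submodule.mem_orthogonal]
      intro x hx
      rw [hK] at hx
      obtain ⟨t, rfl⟩ := Submodule.mem_span_singleton.mp hx
      rw [real_inner_smul_left, hru]; ring
    rw [← hspan_n] at hrK
    obtain ⟨t, ht⟩ := Submodule.mem_span_singleton.mp hrK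
    have ht0 : t = 0 := by
      have h' := hrn
      rw [← ht, real_inner_smul_right, hnn] at h'
      linarith
    rw [ht0, zero_smul] at ht
    have hr0 : r = 0 := ht.symm
    rw [hr, sub_sub, sub_eq_zero] at hr0
    exact hr0
  have hinner : ∀ y₁ y₂ : EuclideanSpace ℝ (Fin 2),
      (inner ℝ y₁ y₂ : ℝ) = (inner ℝ u y₁ : ℝ) * (inner ℝ u y₂ : ℝ)
        + (inner ℝ n y₁ : ℝ) * (inner ℝ n y₂ : ℝ) := by
    intro y₁ y₂
    conv_lhs => rw [hdec y₁]
    rw [inner_add_left, real_inner_smul_left, real_inner_smul_left]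
  have hmem : ∀ y, y ∈ H ↔ ∃ t : ℝ, y = z₀ + t • u := by
    intro y
    constructor
    · intro hy
      have h' := (AffineSubspace.vsub_right_mem_direction_iff_mem hz₀ y).mpr hy
      rw [← hspan] at h'
      obtain ⟨t, ht⟩ := Submodule.mem_span_singleton.mp h'
      refine ⟨t, ?_⟩
      have h2 : t • u = y - z₀ := by rw [ht]; rfl
      rw [h2]; abel
    · rintro ⟨t, rfl⟩
      apply (AffineSubspace.vsub_right_mem_direction_iff_mem hz₀ _).mp
      rw [← hspan]
      have : (z₀ + t • u) -ᵥ z₀ = t • u := by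
        rw [vsub_eq_sub]; abel
      rw [this]
      exact Submodule.mem_span_singleton.mpr ⟨t, rfl⟩
  exact ⟨z₀, u, n, hz₀, hmem, hdec, hinner, huu, hnu⟩

/-- The useful region of the pair {a,b} is exactly the lens
ℓ_{π/2 + arcsin(1/v)}(a,b): a line H admits entry/exit points giving travel time
at most `dist a b` iff H intersects the closed lens. -/
theorem useful_iff_meets_lens (v : ℝ) (hv : 1 < v)
    (a b : EuclideanSpace ℝ (Fin 2))
    (H : AffineSubspace ℝ (EuclideanSpace ℝ (Fin 2)))
    (hH : Module.finrank ℝ H.direction = 1) :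
    (∃ p ∈ H, ∃ g ∈ H, dist a p + dist p g / v + dist g b ≤ dist a b) ↔
      ((H : Set (EuclideanSpace ℝ (Fin 2))) ∩
        ({z | π / 2 + Real.arcsin (1 / v) ≤ EuclideanGeometry.angle a z b} ∪
          segment ℝ a b)).Nonempty := by
  obtain ⟨z₀, u, n, hz₀, hmem, hdec, hinner, huu, hnu⟩ := exists_frame H hH
  have hv0 : (0:ℝ) < v := by linarith
  have hs : (0:ℝ) < 1/v := by positivity
  have hs1 : 1/v < 1 := by rw [div_lt_one hv0]; linarith
  obtain ⟨A1, hA1⟩ : ∃ r : ℝ, (inner ℝ u (a - z₀) : ℝ) = r := ⟨_, rfl⟩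
  obtain ⟨A2, hA2⟩ : ∃ r : ℝ, (inner ℝ n (a - z₀) : ℝ) = r := ⟨_, rfl⟩
  obtain ⟨B1, hB1⟩ : ∃ r : ℝ, (inner ℝ u (b - z₀) : ℝ) = r := ⟨_, rfl⟩
  obtain ⟨B2, hB2⟩ : ∃ r : ℝ, (inner ℝ n (b - z₀) : ℝ) = r := ⟨_, rfl⟩
  have hnormf : ∀ y : EuclideanSpace ℝ (Fin 2),
      ‖y‖ = Real.sqrt ((inner ℝ u y : ℝ)^2 + (inner ℝ n y : ℝ)^2) := by
    intro y
    rw [← Real.sqrt_sq (norm_nonneg y)]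
    congr 1
    rw [← real_inner_self_eq_norm_sq, hinner y y]; ring
  have hau : ∀ x : ℝ, (inner ℝ u (a - (z₀ + x • u)) : ℝ) = A1 - x := by
    intro x
    rw [show a - (z₀ + x • u) = (a - z₀) - x • u by abel, inner_sub_right,
      real_inner_smul_right, huu, hA1]; ring
  have han : ∀ x : ℝ, (inner ℝ n (a - (z₀ + x • u)) : ℝ) = A2 := by
    intro x
    rw [show a - (z₀ + x • u) = (a - z₀) - x • u by abel, inner_sub_right,
      real_inner_smul_right, hnu, hA2]; ring
  have hbu : ∀ x : ℝ, (inner ℝ u (b - (z₀ + x • u)) : ℝ) = B1 - x := by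
    intro x
    rw [show b - (z₀ + x • u) = (b - z₀) - x • u by abel, inner_sub_right,
      real_inner_smul_right, huu, hB1]; ring
  have hbn : ∀ x : ℝ, (inner ℝ n (b - (z₀ + x • u)) : ℝ) = B2 := by
    intro x
    rw [show b - (z₀ + x • u) = (b - z₀) - x • u by abel, inner_sub_right,
      real_inner_smul_right, hnu, hB2]; ring
  have hab_u : (inner ℝ u (a - b) : ℝ) = A1 - B1 := by
    rw [show a - b = (a - z₀) - (b - z₀) by abel, inner_sub_right, hA1, hB1]
  have hab_n : (inner ℝ n (a - b) : ℝ) = A2 - B2 := by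
    rw [show a - b = (a - z₀) - (b - z₀) by abel, inner_sub_right, hA2, hB2]
  have hHn : ∀ x : ℝ, (inner ℝ n ((z₀ + x • u) - z₀) : ℝ) = 0 := by
    intro x
    rw [show (z₀ + x • u) - z₀ = x • u by abel, real_inner_smul_right, hnu]; ring
  rcases le_or_gt (A2*B2) 0 with hsign | hsign
  · -- segment ∩ H nonempty : both sides true
    obtain ⟨θ, hθ0, hθ1, hθz⟩ : ∃ θ:ℝ, 0 ≤ θ ∧ θ ≤ 1 ∧ (1-θ)*A2 + θ*B2 = 0 := by
      by_cases hEq : A2 - B2 = 0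
      · have hA0 : A2 = 0 := by nlinarith
        exact ⟨0, le_refl 0, zero_le_one, by rw [hA0]; nlinarith⟩
      · refine ⟨A2/(A2-B2), ?_, ?_, by field_simp; ring⟩
        · rcases mul_nonpos_iff.mp hsign with ⟨ha, hb⟩ | ⟨ha, hb⟩
          · exact div_nonneg ha (by linarith)
          · exact div_nonneg_iff.mpr (Or.inr ⟨ha, by linarith⟩)
        · rcases mul_nonpos_iff.mp hsign with ⟨ha, hb⟩ | ⟨ha, hb⟩
          · have hd : 0 < A2 - B2 := lt_of_le_of_ne (by linarith) (Ne.symm hEq)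
            rw [div_le_one hd]; linarith
          · have hd : A2 - B2 < 0 := lt_of_le_of_ne (by linarith) hEq
            rw [div_le_one_iff]
            exact Or.inr (Or.inr ⟨hd, by linarith⟩)
    have hseg : a + θ • (b - a) ∈ segment ℝ a b := by
      rw [segment_eq_image']
      exact ⟨θ, Set.mem_Icc.mpr ⟨hθ0, hθ1⟩, rfl⟩
    have hinb : (inner ℝ n (b - a) : ℝ) = B2 - A2 := by
      rw [show b - a = (b - z₀) - (a - z₀) by abel, inner_sub_right, hA2, hB2]
    have hzn : (inner ℝ n ((a + θ • (b - a)) - z₀) : ℝ) = 0 := by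
      rw [show (a + θ • (b - a)) - z₀ = (a - z₀) + θ • (b - a) by abel, inner_add_right,
        real_inner_smul_right, hinb, hA2]
      linarith
    have hzH : a + θ • (b - a) ∈ H := by
      have hd := hdec ((a + θ • (b - a)) - z₀)
      rw [hzn, zero_smul, add_zero] at hd
      refine (hmem _).mpr ⟨(inner ℝ u ((a + θ • (b - a)) - z₀) : ℝ), ?_⟩
      rw [← hd]; abel
    have hdistsum : dist a (a + θ • (b - a)) + dist (a + θ • (b - a)) b = dist a b :=
      dist_add_dist_eq_iff.mpr (mem_segment_iff_wbtw.mp hseg)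
    apply iff_of_true
    · exact ⟨_, hzH, _, hzH, by rw [dist_self, zero_div]; linarith⟩
    · exact ⟨_, hzH, Or.inr hseg⟩
  · -- main case
    have hA2ne : A2 ≠ 0 := by intro h; rw [h] at hsign; simp at hsign
    have hB2ne : B2 ≠ 0 := by intro h; rw [h] at hsign; simp at hsign
    have h1 : 0 < |A2| := abs_pos.mpr hA2ne
    have h2 : 0 < |B2| := abs_pos.mpr hB2ne
    have habs : |A2| * |B2| = A2*B2 := by rw [← abs_mul]; exact abs_of_pos hsign
    have hdiffsq : (|A2| - |B2|)^2 = (A2 - B2)^2 := by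
      nlinarith [habs, sq_abs A2, sq_abs B2]
    have main := scalar_main (s := 1/v) (a₁ := A1) (b₁ := B1) (h₁ := |A2|) (h₂ := |B2|)
      hs hs1 h1 h2
    have hdistf : ∀ x y : EuclideanSpace ℝ (Fin 2),
        dist x y = Real.sqrt ((inner ℝ u (x-y):ℝ)^2 + (inner ℝ n (x-y):ℝ)^2) := by
      intro x y; rw [dist_eq_norm, hnormf]
    have e1 : ∀ t : ℝ, dist a (z₀ + t • u) = Real.sqrt ((t - A1)^2 + |A2|^2) := by
      intro t; rw [hdistf, hau, han]; congr 1; rw [sq_abs]; ring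
    have e2 : ∀ t r : ℝ, dist (z₀ + t • u) (z₀ + r • u) = |r - t| := by
      intro t r
      rw [hdistf]
      have d1 : (z₀ + t•u) - (z₀ + r•u) = (t - r) • u := by rw [sub_smul]; abel
      rw [d1, real_inner_smul_right, real_inner_smul_right, huu, hnu,
        show ((t-r)*1)^2 + ((t-r)*0)^2 = (t-r)^2 by ring, Real.sqrt_sq_eq_abs, abs_sub_comm]
    have e3 : ∀ r : ℝ, dist (z₀ + r • u) b = Real.sqrt ((r - B1)^2 + |B2|^2) := by
      intro r
      rw [hdistf, show (z₀ + r•u) - b = -(b - (z₀ + r•u)) by abel, inner_neg_right,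
        inner_neg_right, hbu, hbn]
      congr 1; rw [sq_abs]; ring
    have e4 : dist a b = Real.sqrt ((A1 - B1)^2 + (|A2| - |B2|)^2) := by
      rw [hdistf, hab_u, hab_n]; congr 1; rw [hdiffsq]
    have eang : ∀ x : ℝ,
        (π/2 + Real.arcsin (1/v) ≤ EuclideanGeometry.angle a (z₀ + x • u) b) ↔
        (1/v) * (Real.sqrt ((x - A1)^2 + |A2|^2) * Real.sqrt ((x - B1)^2 + |B2|^2))
          ≤ (x - A1)*(B1 - x) - |A2| * |B2| := by
      intro x
      rw [angle_iff v hv]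
      have hNa : ‖a - (z₀ + x•u)‖ = Real.sqrt ((x - A1)^2 + |A2|^2) := by
        rw [hnormf, hau, han]; congr 1; rw [sq_abs]; ring
      have hNb : ‖b - (z₀ + x•u)‖ = Real.sqrt ((x - B1)^2 + |B2|^2) := by
        rw [hnormf, hbu, hbn]; congr 1; rw [sq_abs]; ring
      have hIn : (inner ℝ (a - (z₀+x•u)) (b - (z₀+x•u)) : ℝ) = (A1-x)*(B1-x) + A2*B2 := by
        rw [hinner, hau, han, hbu, hbn]
      have hpos : 0 < ‖a - (z₀+x•u)‖ * ‖b - (z₀+x•u)‖ := by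
        rw [hNa, hNb]
        apply mul_pos <;> (apply Real.sqrt_pos.mpr; positivity)
      rw [div_le_iff₀ hpos, hIn, hNa, hNb]
      constructor <;> intro hh <;> nlinarith [habs, hh]
    constructor
    · rintro ⟨p, hp, g, hg, hle⟩
      obtain ⟨t, rfl⟩ := (hmem p).mp hp
      obtain ⟨r, rfl⟩ := (hmem g).mp hg
      rw [e1, e2, e3, e4] at hle
      have hdiv : |r-t|/v = (1/v)*|r-t| := by ring
      obtain ⟨x, hx⟩ := main.mp ⟨t, r, by linarith [hle]⟩
      exact ⟨z₀ + x • u, (hmem _).mpr ⟨x, rfl⟩, Or.inl ((eang x).mpr hx)⟩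
    · rintro ⟨z, hzH, hz⟩
      rcases hz with hang | hseg
      · obtain ⟨x, rfl⟩ := (hmem z).mp hzH
        obtain ⟨p, q, hpq⟩ := main.mpr ⟨x, (eang x).mp hang⟩
        refine ⟨z₀ + p • u, (hmem _).mpr ⟨p, rfl⟩, z₀ + q • u, (hmem _).mpr ⟨q, rfl⟩, ?_⟩
        rw [e1, e2, e3, e4]
        have hdiv : |q-p|/v = (1/v)*|q-p| := by ring
        linarith [hpq]
      · exfalso
        rw [segment_eq_image'] at hseg
        obtain ⟨θ, hθmem, hzeq⟩ := hseg
        have hzeq2 : a + θ • (b - a) = z := hzeq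
        obtain ⟨hθ0, hθ1⟩ := Set.mem_Icc.mp hθmem
        obtain ⟨x, hx⟩ := (hmem _).mp hzH
        have hzn : (inner ℝ n ((a + θ • (b - a)) - z₀) : ℝ) = 0 := by
          rw [hzeq2, hx]; exact hHn x
        have hinb : (inner ℝ n (b - a) : ℝ) = B2 - A2 := by
          rw [show b - a = (b - z₀) - (a - z₀) by abel, inner_sub_right, hA2, hB2]
        have hzval : (inner ℝ n ((a + θ • (b - a)) - z₀) : ℝ) = (1-θ)*A2 + θ*B2 := by
          rw [show (a + θ • (b - a)) - z₀ = (a - z₀) + θ • (b - a) by abel, inner_add_right,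
            real_inner_smul_right, hinb, hA2]
          ring
        rw [hzval] at hzn
        have hB2sq : 0 < B2^2 := by positivity
        have heq2 : (1-θ)*(A2*B2) + θ*B2^2 = 0 := by linear_combination B2 * hzn
        have hθB : θ*B2^2 ≤ 0 := by
          nlinarith [mul_nonneg (by linarith : (0:ℝ) ≤ 1-θ) hsign.le]
        have hθeq : θ = 0 := le_antisymm (by nlinarith [hB2sq]) hθ0
        rw [hθeq] at heq2
        nlinarith [hsign]
end core
end

section
/- Let v > 1 and set γ = π/2 + arcsin(1/v). Let a, b ∈ ℝ² and let H be a line in ℝ². Suppose there exists c ∈ H with ∠ a c b = γ, and that ∠ a z b ≤ γ for every z ∈ H (so H is a supporting/tangent line of the lens ℓ_γ(a,b), touching it at c). Then there exist p, g ∈ H with dist a p + dist p g / v + dist g b = dist a b; that is, the travel time from a to b using the tangent highway H equals the Euclidean distance between a and b. -/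
open EuclideanGeometry Real

set_option maxHeartbeats 1000000


lemma key_travel (v w ra rb p1 p2 q1 q2 : ℝ) (hv : 1 < v) (hw : w^2 = v^2 - 1) (hw0 : 0 < w)
    (hra : ra^2 = p1^2 + p2^2) (hrb : rb^2 = q1^2 + q2^2)
    (hra0 : 0 < ra) (hrb0 : 0 < rb)
    (hA : v * (p1*q1 + p2*q2) + ra*rb = 0)
    (hT : v*(p1+q1)*(ra*rb) + p1*rb^2 + q1*ra^2 = 0)
    (ha2 : 0 ≤ p2) (hb2 : 0 ≤ q2) (h1 : p1 ≤ q1) :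
    ∃ s t : ℝ, Real.sqrt ((p1-s)^2+p2^2) + |s-t|/v + Real.sqrt ((q1-t)^2+q2^2)
      = Real.sqrt ((p1-q1)^2+(p2-q2)^2) := by
  have hv0 : (0:ℝ) < v := lt_trans one_pos hv
  have hQU : (p2*rb^2 - q2*ra^2) * (v*p1*rb + q1*ra) = 0 := by
    linear_combination (rb*(p2*q1+p1*q2)) * hA + (rb*q1*q2*v) * hra + (rb*p1*p2*v) * hrb
      - (q2*ra) * hT
  have hQV : (p2*rb^2 - q2*ra^2) * (p1*rb + v*q1*ra) = 0 := by
    linear_combination (-(ra*(p2*q1+p1*q2))) * hA - (ra*q1*q2*v) * hra - (ra*p1*p2*v) * hrb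
      + (p2*rb) * hT
  have hQ : p2*rb^2 - q2*ra^2 = 0 := by
    by_cases hq : p2*rb^2 - q2*ra^2 = 0
    · exact hq
    · exfalso
      have hU : v*p1*rb + q1*ra = 0 := by
        rcases mul_eq_zero.1 hQU with h | h
        · exact absurd h hq
        · exact h
      have hV : p1*rb + v*q1*ra = 0 := by
        rcases mul_eq_zero.1 hQV with h | h
        · exact absurd h hq
        · exact h
      have hp1 : p1 = 0 := by
        have h2 : (v^2-1)*(p1*rb) = 0 := by linear_combination v*hU - hV
        have h3 : p1*rb = 0 := by
          have : v^2 - 1 ≠ 0 := by nlinarith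
          exact (mul_eq_zero.1 h2).resolve_left this
        rcases mul_eq_zero.1 h3 with h | h
        · exact h
        · exact absurd h (ne_of_gt hrb0)
      have hq1 : q1 = 0 := by
        have h2 : (v^2-1)*(q1*ra) = 0 := by linear_combination v*hV - hU
        have h3 : q1*ra = 0 := by
          have : v^2 - 1 ≠ 0 := by nlinarith
          exact (mul_eq_zero.1 h2).resolve_left this
        rcases mul_eq_zero.1 h3 with h | h
        · exact h
        · exact absurd h (ne_of_gt hra0)
      rw [hp1, hq1] at hA
      nlinarith [mul_pos hra0 hrb0, mul_nonneg ha2 hb2]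
  -- both p2 q2 positive
  have hcontra0 : ¬ (p2 = 0 ∧ q2 = 0) := by
    rintro ⟨h2, h4⟩
    rw [h2] at hA hra
    rw [h4] at hA hrb
    have e2 : v^2*(p1*q1)^2 = ra^2*rb^2 := by
      linear_combination (v*(p1*q1) - ra*rb) * hA
    have e3 : (v^2-1)*(p1*q1)^2 = 0 := by
      rw [hra, hrb] at e2; linear_combination e2
    have e4 : p1*q1 = 0 := by
      have hne : v^2 - 1 ≠ 0 := by nlinarith
      have h5 := (mul_eq_zero.1 e3).resolve_left hne
      exact pow_eq_zero_iff (n := 2) (by norm_num) |>.mp h5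
    rw [e4] at hA
    nlinarith [mul_pos hra0 hrb0]
  have hp2 : 0 < p2 := by
    rcases lt_or_eq_of_le ha2 with h | h
    · exact h
    · exfalso
      have h2 : q2*ra^2 = 0 := by linear_combination -hQ - rb^2 * h
      have h4 : q2 = 0 := by
        rcases mul_eq_zero.1 h2 with h' | h'
        · exact h'
        · exact absurd h' (by positivity)
      exact hcontra0 ⟨h.symm, h4⟩
  have hq2 : 0 < q2 := by
    rcases lt_or_eq_of_le hb2 with h | h
    · exact h
    · exfalso
      have h2 : p2*rb^2 = 0 := by linear_combination hQ - ra^2 * h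
      have h4 : p2 = 0 := by
        rcases mul_eq_zero.1 h2 with h' | h'
        · exact h'
        · exact absurd h' (by positivity)
      exact hcontra0 ⟨h4, h.symm⟩
  -- the supporting-line disjunction
  have hC : (rb*(w*p1+p2) + v*ra*q2) * (ra*(w*q1+q2) + v*rb*p2) = 0 := by
    linear_combination (v*ra*rb + p2*q2 + p2*q1*w + p1*q2*w + p1*q1*w^2 - p1*q1*v^2) * hA
      + (-(v*rb^2) + q2^2*v + q1*q2*v*w) * hra + (p1*p2*v*w - p1^2*v) * hrb
      + (-(p1*p2*q1*q2*v) - p1^2*q1^2*v) * hw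
  have hC1 : rb*(w*p1+p2) + v*ra*q2 = 0 := by
    rcases mul_eq_zero.1 hC with h | h
    · exact h
    · exfalso
      -- C2 = 0 forces q1 < 0 < p1, contradicting p1 ≤ q1
      have h2 : w*q1 + q2 < 0 := by
        by_contra hcon
        push_neg at hcon
        nlinarith [mul_nonneg hra0.le hcon, mul_pos (mul_pos hv0 hrb0) hp2]
      have hbneg : q1 < 0 := by
        by_contra hcon
        push_neg at hcon
        nlinarith [mul_nonneg hw0.le hcon]
      have hapos : 0 < p1 := by
        by_contra hcon
        push_neg at hcon
        nlinarith [mul_pos hra0 hrb0, mul_pos (mul_pos hv0 hp2) hq2,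
          mul_nonneg (mul_nonneg hv0.le (neg_nonneg.mpr hcon)) (neg_nonneg.mpr hbneg.le)]
      linarith
  have hp1neg : p1 < 0 := by
    have h2 : w*p1 + p2 < 0 := by
      by_contra hcon
      push_neg at hcon
      nlinarith [mul_nonneg hrb0.le hcon, mul_pos (mul_pos hv0 hra0) hq2]
    nlinarith [mul_nonneg hw0.le ha2]
  have hN' : v*ra*q2*(p1+q1) + rb*(p2*q1+p1*q2) = 0 := by
    have hraN : ra*(v*ra*q2*(p1+q1) + rb*(p2*q1+p1*q2)) = 0 := by
      linear_combination (-(v*p1)) * hQ + (p2*q1+p1*q2) * hA + (q1*q2*v) * hra + (p1*p2*v) * hrb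
    rcases mul_eq_zero.1 hraN with h | h
    · exact absurd h (ne_of_gt hra0)
    · exact h
  have hN0 : w*(p1+q1) + p2 - q2 = 0 := by
    have hX : (rb*p1)*(w*(p1+q1)+p2-q2) = 0 := by
      linear_combination (p1+q1) * hC1 - hN'
    rcases mul_eq_zero.1 hX with h | h
    · exfalso
      rcases mul_eq_zero.1 h with h' | h'
      · exact absurd h' (ne_of_gt hrb0)
      · exact absurd h' (ne_of_lt hp1neg)
    · exact h
  set M : ℝ := w*(q1-p1) - (p2+q2) with hMdef
  have hM : rb*M = 2*v*ra*q2 := by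
    rw [hMdef]; linear_combination rb * hN0 - 2*hC1
  have hM0 : 0 < M := by
    nlinarith [mul_pos (mul_pos (mul_pos (by norm_num : (0:ℝ) < 2) hv0) hra0) hq2]
  have hM2 : M^2 = 4*v^2*(p2*q2) := by
    have h2 : rb^2*(M^2 - 4*v^2*(p2*q2)) = 0 := by
      linear_combination (rb*M + 2*v*ra*q2) * hM - (4*v^2*q2) * hQ
    have h3 : M^2 - 4*v^2*(p2*q2) = 0 := by
      rcases mul_eq_zero.1 h2 with h | h
      · exact absurd h (by positivity)
      · exact h
    linarith
  set Tv : ℝ := (q1-p1) + (p2+q2)*w with hTvdef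
  have hTv : w*Tv = M + v^2*(p2+q2) := by
    rw [hTvdef, hMdef]; linear_combination (p2+q2) * hw
  have hTv0 : 0 ≤ Tv := by nlinarith [hM0, mul_pos (mul_pos hv0 hv0) (by linarith : (0:ℝ) < p2+q2)]
  have hE : Tv^2 = v^2*((p1-q1)^2+(p2-q2)^2) := by
    rw [hTvdef]
    linear_combination (-1) * hM2 + ((p1-q1)^2+(p2+q2)^2) * hw
  refine ⟨p1 + p2/w, q1 - q2/w, ?_⟩
  have hwne : w ≠ 0 := ne_of_gt hw0
  have hvne : v ≠ 0 := ne_of_gt hv0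
  have d1 : Real.sqrt ((p1-(p1 + p2/w))^2+p2^2) = p2*v/w := by
    rw [show (p1-(p1 + p2/w))^2+p2^2 = (p2*v/w)^2 by
      field_simp; linear_combination p2^2 * hw]
    exact Real.sqrt_sq (by positivity)
  have d2 : Real.sqrt ((q1-(q1 - q2/w))^2+q2^2) = q2*v/w := by
    rw [show (q1-(q1 - q2/w))^2+q2^2 = (q2*v/w)^2 by
      field_simp; linear_combination q2^2 * hw]
    exact Real.sqrt_sq (by positivity)
  have d3 : Real.sqrt ((p1-q1)^2+(p2-q2)^2) = Tv/v := by
    rw [show (p1-q1)^2+(p2-q2)^2 = (Tv/v)^2 by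
      rw [div_pow]; rw [eq_div_iff (by positivity)]; linear_combination -hE]
    exact Real.sqrt_sq (div_nonneg hTv0 hv0.le)
  have hdiff : (q1 - q2/w) - (p1 + p2/w) = M/w := by
    rw [hMdef]; field_simp; ring
  have d4 : |(p1 + p2/w) - (q1 - q2/w)| = M/w := by
    rw [abs_sub_comm, hdiff]
    exact abs_of_nonneg (by positivity)
  rw [d1, d2, d3, d4]
  rw [show Tv/v = (M + v^2*(p2+q2))/(w*v) by
    rw [← hTv, mul_comm w Tv, mul_comm w v, mul_div_mul_right _ _ hwne]]
  field_simp
  ring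

lemma coord_main (v A1 A2 B1 B2 ra rb : ℝ) (hv : 1 < v)
    (hra2 : ra^2 = A1^2+A2^2) (hrb2 : rb^2 = B1^2+B2^2) (hra0 : 0 < ra) (hrb0 : 0 < rb)
    (hA : v*(A1*B1 + A2*B2) + ra*rb = 0)
    (hsupp : ∀ t:ℝ, -(1/v) * (Real.sqrt ((A1-t)^2+A2^2) * Real.sqrt ((B1-t)^2+B2^2))
      ≤ (A1-t)*(B1-t)+A2*B2) :
    ∃ s t : ℝ, Real.sqrt ((A1-s)^2+A2^2) + |s-t|/v + Real.sqrt ((B1-t)^2+B2^2)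
      = Real.sqrt ((A1-B1)^2+(A2-B2)^2) := by
  have hv0 : (0:ℝ) < v := by linarith
  have hvne : v ≠ 0 := ne_of_gt hv0
  have h1v1 : 1/v < 1 := by rw [div_lt_one hv0]; exact hv
  have hw2pos : (0:ℝ) < v^2 - 1 := by nlinarith
  set w : ℝ := Real.sqrt (v^2-1) with hwdef
  have hw : w^2 = v^2 - 1 := Real.sq_sqrt hw2pos.le
  have hw0 : 0 < w := Real.sqrt_pos.2 hw2pos
  -- a and b lie on the same side of the highway
  have hs : 0 ≤ A2*B2 := by
    by_contra hcon
    push_neg at hcon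
    have hA2ne : A2 ≠ 0 := by intro h; rw [h] at hcon; simp at hcon
    have hBA : B2 - A2 ≠ 0 := by
      intro h
      have h2 : B2 = A2 := by linarith
      rw [h2] at hcon
      nlinarith [sq_nonneg A2]
    set μ : ℝ := B2/A2 with hμdef
    have hμ : μ < 0 := by
      rw [hμdef, div_neg_iff]
      rcases mul_neg_iff.mp hcon with ⟨h1, h2⟩ | ⟨h1, h2⟩
      · exact Or.inr ⟨h2, h1⟩
      · exact Or.inl ⟨h2, h1⟩
    set t₀ : ℝ := (A1*B2 - A2*B1)/(B2 - A2) with ht₀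
    set X : ℝ := (A1-t₀)^2 + A2^2 with hXdef
    have hX : 0 < X := by
      rw [hXdef]
      have : 0 < A2^2 := by rcases hA2ne.lt_or_gt with h|h <;> nlinarith
      nlinarith [sq_nonneg (A1 - t₀)]
    have hB1t : B1 - t₀ = μ*(A1 - t₀) := by
      rw [hμdef, ht₀]; field_simp; ring
    have hB2e : B2 = μ*A2 := by
      rw [hμdef]; field_simp
    have hkey := hsupp t₀
    rw [show (B1-t₀)^2+B2^2 = μ^2*X by rw [hB1t, hB2e, hXdef]; ring] at hkey
    rw [Real.sqrt_mul (sq_nonneg μ), Real.sqrt_sq_eq_abs, abs_of_neg hμ] at hkey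
    rw [show (A1-t₀)*(B1-t₀)+A2*B2 = μ*X by rw [hB1t, hB2e, hXdef]; ring] at hkey
    rw [← hXdef] at hkey
    have hsq : Real.sqrt X * Real.sqrt X = X := Real.mul_self_sqrt hX.le
    have e : -(1/v) * (Real.sqrt X * (-μ * Real.sqrt X))
        = (1/v)*(μ*(Real.sqrt X*Real.sqrt X)) := by ring
    rw [e, hsq] at hkey
    have hkey2 : (1/v)*(μ*X) ≤ μ*X := hkey
    nlinarith [mul_pos (sub_pos.2 h1v1) (neg_pos.2 (mul_neg_of_neg_of_pos hμ hX))]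
  -- tangency via the first-order condition at t = 0
  set F : ℝ → ℝ := fun t => ((A1-t)*(B1-t)+A2*B2)
    + (1/v)*(Real.sqrt ((A1-t)^2+A2^2) * Real.sqrt ((B1-t)^2+B2^2)) with hFdef
  have hsqa : Real.sqrt ((A1-0)^2+A2^2) = ra := by
    rw [show (A1-0)^2+A2^2 = ra^2 by rw [hra2]; ring]
    exact Real.sqrt_sq hra0.le
  have hsqb : Real.sqrt ((B1-0)^2+B2^2) = rb := by
    rw [show (B1-0)^2+B2^2 = rb^2 by rw [hrb2]; ring]
    exact Real.sqrt_sq hrb0.le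
  have hF0 : F 0 = 0 := by
    rw [hFdef]
    simp only
    rw [hsqa, hsqb]
    field_simp
    linear_combination hA
  have hFnonneg : ∀ t, 0 ≤ F t := by
    intro t
    have := hsupp t
    rw [hFdef]
    simp only
    linarith
  have hmin : IsLocalMin F 0 := by
    apply Filter.Eventually.of_forall
    intro t
    rw [hF0]
    exact hFnonneg t
  have hrane : (A1-0)^2+A2^2 ≠ 0 := by rw [show (A1-0)^2+A2^2 = ra^2 by rw [hra2]; ring]; positivity
  have hrbne : (B1-0)^2+B2^2 ≠ 0 := by rw [show (B1-0)^2+B2^2 = rb^2 by rw [hrb2]; ring]; positivity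
  have hda : HasDerivAt (fun t:ℝ => (A1-t)^2+A2^2) (2*(A1-(0:ℝ))^1*(-1)) 0 :=
    (((hasDerivAt_id (0:ℝ)).const_sub A1).pow 2).add_const _
  have hdb : HasDerivAt (fun t:ℝ => (B1-t)^2+B2^2) (2*(B1-(0:ℝ))^1*(-1)) 0 :=
    (((hasDerivAt_id (0:ℝ)).const_sub B1).pow 2).add_const _
  have hsa : HasDerivAt (fun t:ℝ => Real.sqrt ((A1-t)^2+A2^2))
      ((2*(A1-(0:ℝ))^1*(-1)) / (2 * ra)) 0 := by
    have := hda.sqrt hrane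
    rwa [hsqa] at this
  have hsb : HasDerivAt (fun t:ℝ => Real.sqrt ((B1-t)^2+B2^2))
      ((2*(B1-(0:ℝ))^1*(-1)) / (2 * rb)) 0 := by
    have := hdb.sqrt hrbne
    rwa [hsqb] at this
  have hpoly : HasDerivAt (fun t:ℝ => (A1-t)*(B1-t)+A2*B2)
      ((-1)*(B1-(0:ℝ)) + (A1-(0:ℝ))*(-1)) 0 :=
    (((hasDerivAt_id (0:ℝ)).const_sub A1).mul ((hasDerivAt_id (0:ℝ)).const_sub B1)).add_const _
  have hder : HasDerivAt F
      (((-1)*(B1-(0:ℝ)) + (A1-(0:ℝ))*(-1))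
        + (1/v)*((2*(A1-(0:ℝ))^1*(-1)) / (2 * ra) * Real.sqrt ((B1-(0:ℝ))^2+B2^2)
          + Real.sqrt ((A1-(0:ℝ))^2+A2^2) * ((2*(B1-(0:ℝ))^1*(-1)) / (2 * rb)))) 0 := by
    exact hpoly.add ((hsa.mul hsb).const_mul (1/v))
  have hD := hmin.hasDerivAt_eq_zero hder
  rw [hsqa, hsqb] at hD
  have hT : v*(A1+B1)*(ra*rb) + A1*rb^2 + B1*ra^2 = 0 := by
    have hrane' : ra ≠ 0 := ne_of_gt hra0
    have hrbne' : rb ≠ 0 := ne_of_gt hrb0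
    field_simp at hD
    linear_combination (-(1:ℝ)) * hD
  -- symmetrize signs and apply the key algebraic lemma
  obtain ⟨e₁, he₁, he₁le⟩ : ∃ e:ℝ, e^2 = 1 ∧ e*A1 ≤ e*B1 := by
    rcases le_total A1 B1 with h | h
    · exact ⟨1, by norm_num, by simpa using h⟩
    · exact ⟨-1, by norm_num, by simpa using h⟩
  obtain ⟨e₂, he₂, he₂a, he₂b⟩ : ∃ e:ℝ, e^2 = 1 ∧ 0 ≤ e*A2 ∧ 0 ≤ e*B2 := by
    rcases le_or_gt 0 A2 with h | h
    · rcases le_or_gt 0 B2 with h' | h'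
      · exact ⟨1, by norm_num, by simpa using h, by simpa using h'⟩
      · refine ⟨-1, by norm_num, ?_, ?_⟩
        · have : A2 ≤ 0 := by nlinarith
          linarith [this]
        · linarith
    · refine ⟨-1, by norm_num, ?_, ?_⟩
      · linarith
      · have : B2 ≤ 0 := by nlinarith
        linarith [this]
  obtain ⟨s, t, heq⟩ := key_travel v w ra rb (e₁*A1) (e₂*A2) (e₁*B1) (e₂*B2) hv hw hw0
    (by linear_combination hra2 - A1^2*he₁ - A2^2*he₂)
    (by linear_combination hrb2 - B1^2*he₁ - B2^2*he₂)
    hra0 hrb0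
    (by linear_combination hA + v*A1*B1*he₁ + v*A2*B2*he₂)
    (by linear_combination e₁*hT)
    he₂a he₂b he₁le
  have habs : |e₁| = 1 := by
    have h2 : (e₁-1)*(e₁+1) = 0 := by linear_combination he₁
    rcases mul_eq_zero.1 h2 with h | h
    · rw [show e₁ = 1 by linarith]; norm_num
    · rw [show e₁ = -1 by linarith]; norm_num
  refine ⟨e₁*s, e₁*t, ?_⟩
  rw [show (A1-e₁*s)^2+A2^2 = (e₁*A1-s)^2+(e₂*A2)^2 by
      linear_combination (s^2 - A1^2)*he₁ - A2^2*he₂]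
  rw [show (B1-e₁*t)^2+B2^2 = (e₁*B1-t)^2+(e₂*B2)^2 by
      linear_combination (t^2 - B1^2)*he₁ - B2^2*he₂]
  rw [show (A1-B1)^2+(A2-B2)^2 = (e₁*A1-e₁*B1)^2+(e₂*A2-e₂*B2)^2 by
      linear_combination (-(A1-B1)^2)*he₁ + (-(A2-B2)^2)*he₂]
  rw [show |e₁*s-e₁*t| = |s-t| by
      rw [show e₁*s-e₁*t = e₁*(s-t) by ring, abs_mul, habs, one_mul]]
  exact heq


/-- A highway on a supporting/tangent line of the lens
ℓ_{π/2+arcsin(1/v)}(a,b), touching it at some point c, admits entry/exit points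
for which the travel time from a to b equals the Euclidean distance. -/
theorem tangent_line_travel_time_eq (v : ℝ) (hv : 1 < v)
    (a b : EuclideanSpace ℝ (Fin 2))
    (H : AffineSubspace ℝ (EuclideanSpace ℝ (Fin 2)))
    (hH : Module.finrank ℝ H.direction = 1)
    (c : EuclideanSpace ℝ (Fin 2)) (hc : c ∈ H)
    (hangle_c : EuclideanGeometry.angle a c b = π / 2 + Real.arcsin (1 / v))
    (hsupport : ∀ z ∈ H, EuclideanGeometry.angle a z b ≤ π / 2 + Real.arcsin (1 / v)) :
    ∃ p ∈ H, ∃ g ∈ H, dist a p + dist p g / v + dist g b = dist a b := by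
  have hv0 : (0:ℝ) < v := by linarith
  have h1v : (0:ℝ) < 1/v := by positivity
  have h1v1 : 1/v < 1 := by rw [div_lt_one hv0]; exact hv
  have harc_pos : 0 < Real.arcsin (1/v) := Real.arcsin_pos.2 h1v
  have harc_lt : Real.arcsin (1/v) < π/2 := Real.arcsin_lt_pi_div_two.2 h1v1
  have hπ : π/2 + π/2 = π := add_halves π
  have hγπ : π/2 + Real.arcsin (1/v) < π := by linarith
  have hcosγ : Real.cos (π/2 + Real.arcsin (1/v)) = -(1/v) := by
    rw [add_comm, Real.cos_add_pi_div_two, Real.sin_arcsin (by linarith) (le_of_lt h1v1)]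
  -- a and b are distinct from c
  have hac : a ≠ c := by
    intro h
    rw [h, EuclideanGeometry.angle, vsub_self, InnerProductGeometry.angle_zero_left] at hangle_c
    linarith
  have hbc : b ≠ c := by
    intro h
    rw [h, EuclideanGeometry.angle, vsub_self, InnerProductGeometry.angle_zero_right] at hangle_c
    linarith
  -- unit direction vector of H
  obtain ⟨u, hu_mem, hu_norm, hu_span⟩ :
      ∃ u : EuclideanSpace ℝ (Fin 2), u ∈ H.direction ∧ ‖u‖ = 1 ∧
        ∀ x ∈ H.direction, ∃ r : ℝ, x = r • u := by
    have : Module.Finite ℝ H.direction := inferInstance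
    let B := Module.finBasisOfFinrankEq ℝ H.direction hH
    have hB0 : (B 0 : EuclideanSpace ℝ (Fin 2)) ≠ 0 := by
      simpa using B.ne_zero 0
    have hBnorm : ‖(B 0 : EuclideanSpace ℝ (Fin 2))‖ ≠ 0 := norm_ne_zero_iff.2 hB0
    refine ⟨‖(B 0 : EuclideanSpace ℝ (Fin 2))‖⁻¹ • (B 0 : EuclideanSpace ℝ (Fin 2)),
      Submodule.smul_mem _ _ (B 0).2, norm_smul_inv_norm hB0, ?_⟩
    intro x hx
    have hrepr := B.sum_repr ⟨x, hx⟩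
    rw [Fin.sum_univ_one] at hrepr
    refine ⟨(B.repr ⟨x, hx⟩ 0) * ‖(B 0 : EuclideanSpace ℝ (Fin 2))‖, ?_⟩
    have hval : (B.repr ⟨x, hx⟩ 0) • (B 0 : EuclideanSpace ℝ (Fin 2)) = x := by
      simpa using congrArg (Subtype.val) hrepr
    rw [smul_smul, mul_assoc, mul_inv_cancel₀ hBnorm, mul_one, hval]
  -- coordinates
  have hunit : (u 0)^2 + (u 1)^2 = 1 := by
    have h2 := hu_norm
    rw [EuclideanSpace.norm_eq, Fin.sum_univ_two] at h2
    have h3 := Real.sqrt_eq_one.1 h2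
    simpa [sq_abs] using h3
  have hraeq : (dist a c)^2 = (a 0 - c 0)^2 + (a 1 - c 1)^2 := by
    rw [EuclideanSpace.dist_eq, Fin.sum_univ_two, Real.sq_sqrt (by positivity)]
    simp [Real.dist_eq, sq_abs]
  have hrbeq : (dist b c)^2 = (b 0 - c 0)^2 + (b 1 - c 1)^2 := by
    rw [EuclideanSpace.dist_eq, Fin.sum_univ_two, Real.sq_sqrt (by positivity)]
    simp [Real.dist_eq, sq_abs]
  -- the inner product at c from the angle hypothesis
  have hcos := congrArg Real.cos hangle_c
  rw [hcosγ] at hcos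
  have hna : ‖a - c‖ ≠ 0 := by
    rw [norm_ne_zero_iff, sub_ne_zero]; exact hac
  have hnb : ‖b - c‖ ≠ 0 := by
    rw [norm_ne_zero_iff, sub_ne_zero]; exact hbc
  have hinner : (inner ℝ (a - c) (b - c) : ℝ) = -(1/v) * (‖a - c‖ * ‖b - c‖) := by
    have h2 : Real.cos (InnerProductGeometry.angle (a -ᵥ c) (b -ᵥ c)) = -(1/v) := hcos
    rw [InnerProductGeometry.cos_angle, vsub_eq_sub, vsub_eq_sub] at h2
    rw [div_eq_iff (by positivity : ‖a - c‖ * ‖b - c‖ ≠ 0)] at h2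
    rw [h2]
  -- coordinate formulas along the highway
  have happly : ∀ (t : ℝ) (x : EuclideanSpace ℝ (Fin 2)) (i : Fin 2),
      (x - (t • u + c)) i = x i - (t * u i + c i) := by
    intro t x i
    simp [PiLp.sub_apply, PiLp.add_apply, PiLp.smul_apply, smul_eq_mul]
  have hnorm_a : ∀ t : ℝ, ‖a - (t • u + c)‖
      = Real.sqrt ((u 0 * (a 0 - c 0) + u 1 * (a 1 - c 1) - t)^2
        + (u 0 * (a 1 - c 1) - u 1 * (a 0 - c 0))^2) := by
    intro t
    rw [EuclideanSpace.norm_eq, Fin.sum_univ_two, happly, happly]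
    congr 1
    rw [Real.norm_eq_abs, Real.norm_eq_abs, sq_abs, sq_abs]
    linear_combination (t^2 - ((a 0 - c 0)^2+(a 1 - c 1)^2)) * hunit
  have hnorm_b : ∀ t : ℝ, ‖b - (t • u + c)‖
      = Real.sqrt ((u 0 * (b 0 - c 0) + u 1 * (b 1 - c 1) - t)^2
        + (u 0 * (b 1 - c 1) - u 1 * (b 0 - c 0))^2) := by
    intro t
    rw [EuclideanSpace.norm_eq, Fin.sum_univ_two, happly, happly]
    congr 1
    rw [Real.norm_eq_abs, Real.norm_eq_abs, sq_abs, sq_abs]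
    linear_combination (t^2 - ((b 0 - c 0)^2+(b 1 - c 1)^2)) * hunit
  have hinner_t : ∀ t : ℝ, (inner ℝ (a - (t • u + c)) (b - (t • u + c)) : ℝ)
      = (u 0 * (a 0 - c 0) + u 1 * (a 1 - c 1) - t)*(u 0 * (b 0 - c 0) + u 1 * (b 1 - c 1) - t)
        + (u 0 * (a 1 - c 1) - u 1 * (a 0 - c 0))*(u 0 * (b 1 - c 1) - u 1 * (b 0 - c 0)) := by
    intro t
    rw [PiLp.inner_apply, Fin.sum_univ_two, happly, happly, happly, happly]
    simp only [RCLike.inner_apply, conj_trivial]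
    linear_combination (t^2 - ((a 0 - c 0)*(b 0 - c 0)+(a 1 - c 1)*(b 1 - c 1))) * hunit
  -- membership of highway points
  have hmemH : ∀ t : ℝ, t • u + c ∈ H := by
    intro t
    have h2 := AffineSubspace.vadd_mem_of_mem_direction (Submodule.smul_mem _ t hu_mem) hc
    simpa [vadd_eq_add] using h2
  -- the angle identity at c in coordinates
  have hA_c : v*((u 0 * (a 0 - c 0) + u 1 * (a 1 - c 1))*(u 0 * (b 0 - c 0) + u 1 * (b 1 - c 1))
      + (u 0 * (a 1 - c 1) - u 1 * (a 0 - c 0))*(u 0 * (b 1 - c 1) - u 1 * (b 0 - c 0)))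
      + dist a c * dist b c = 0 := by
    have h3 := hinner_t 0
    rw [show (0:ℝ) • u + c = c by simp] at h3
    rw [hinner] at h3
    rw [dist_eq_norm, dist_eq_norm]
    have hv' : v ≠ 0 := ne_of_gt hv0
    field_simp at h3
    linear_combination -h3
  -- the support inequality in coordinates
  have hsupp_t : ∀ t : ℝ,
      -(1/v) * (Real.sqrt ((u 0 * (a 0 - c 0) + u 1 * (a 1 - c 1) - t)^2
          + (u 0 * (a 1 - c 1) - u 1 * (a 0 - c 0))^2)
        * Real.sqrt ((u 0 * (b 0 - c 0) + u 1 * (b 1 - c 1) - t)^2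
          + (u 0 * (b 1 - c 1) - u 1 * (b 0 - c 0))^2))
      ≤ (u 0 * (a 0 - c 0) + u 1 * (a 1 - c 1) - t)*(u 0 * (b 0 - c 0) + u 1 * (b 1 - c 1) - t)
        + (u 0 * (a 1 - c 1) - u 1 * (a 0 - c 0))*(u 0 * (b 1 - c 1) - u 1 * (b 0 - c 0)) := by
    intro t
    rw [← hnorm_a t, ← hnorm_b t, ← hinner_t t]
    by_cases haz : a = t • u + c
    · have h0 : a - (t • u + c) = 0 := sub_eq_zero.2 haz
      rw [h0]
      simp
    · by_cases hbz : b = t • u + c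
      · have h0 : b - (t • u + c) = 0 := sub_eq_zero.2 hbz
        rw [h0]
        simp
      · have hna' : 0 < ‖a - (t • u + c)‖ :=
          norm_pos_iff.2 (sub_ne_zero.2 haz)
        have hnb' : 0 < ‖b - (t • u + c)‖ :=
          norm_pos_iff.2 (sub_ne_zero.2 hbz)
        have hang := hsupport (t • u + c) (hmemH t)
        have h4 := Real.cos_le_cos_of_nonneg_of_le_pi
          (EuclideanGeometry.angle_nonneg a (t • u + c) b) hγπ.le hang
        rw [hcosγ] at h4
        rw [EuclideanGeometry.angle, InnerProductGeometry.cos_angle,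
          vsub_eq_sub, vsub_eq_sub] at h4
        rw [le_div_iff₀ (mul_pos hna' hnb')] at h4
        linarith
  -- apply the analytic lemma
  obtain ⟨s, t, heq⟩ := coord_main v
    (u 0 * (a 0 - c 0) + u 1 * (a 1 - c 1)) (u 0 * (a 1 - c 1) - u 1 * (a 0 - c 0))
    (u 0 * (b 0 - c 0) + u 1 * (b 1 - c 1)) (u 0 * (b 1 - c 1) - u 1 * (b 0 - c 0))
    (dist a c) (dist b c) hv
    (by rw [hraeq]; linear_combination (-((a 0 - c 0)^2+(a 1 - c 1)^2)) * hunit)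
    (by rw [hrbeq]; linear_combination (-((b 0 - c 0)^2+(b 1 - c 1)^2)) * hunit)
    (dist_pos.2 hac) (dist_pos.2 hbc) hA_c hsupp_t
  refine ⟨s • u + c, hmemH s, t • u + c, hmemH t, ?_⟩
  have hd1 : dist a (s • u + c) = Real.sqrt ((u 0 * (a 0 - c 0) + u 1 * (a 1 - c 1) - s)^2
      + (u 0 * (a 1 - c 1) - u 1 * (a 0 - c 0))^2) := by
    rw [dist_eq_norm]; exact hnorm_a s
  have hd2 : dist (t • u + c) b = Real.sqrt ((u 0 * (b 0 - c 0) + u 1 * (b 1 - c 1) - t)^2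
      + (u 0 * (b 1 - c 1) - u 1 * (b 0 - c 0))^2) := by
    rw [dist_comm, dist_eq_norm]; exact hnorm_b t
  have hd3 : dist (s • u + c) (t • u + c) = |s - t| := by
    rw [dist_eq_norm, show s • u + c - (t • u + c) = (s-t) • u by
      rw [sub_smul]; abel, norm_smul, hu_norm, Real.norm_eq_abs, mul_one]
  have hd4 : dist a b = Real.sqrt (((u 0 * (a 0 - c 0) + u 1 * (a 1 - c 1))
        - (u 0 * (b 0 - c 0) + u 1 * (b 1 - c 1)))^2
      + ((u 0 * (a 1 - c 1) - u 1 * (a 0 - c 0))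
        - (u 0 * (b 1 - c 1) - u 1 * (b 0 - c 0)))^2) := by
    rw [EuclideanSpace.dist_eq, Fin.sum_univ_two]
    congr 1
    rw [Real.dist_eq, Real.dist_eq, sq_abs, sq_abs]
    linear_combination (-((a 0 - b 0)^2+(a 1 - b 1)^2)) * hunit
  rw [hd1, hd2, hd3, hd4]
  convert heq using 3 <;> ring
end

section
/- Let v > 1 and set γ = π/2 + arcsin(1/v). Let a, b ∈ ℝ² and let H be a line in ℝ² disjoint from the closed lens ℓ_γ(a,b), i.e., every z ∈ H satisfies ∠ a z b < γ and z ∉ segment ℝ a b. Then for all p, g ∈ H one has dist a p + dist p g / v + dist g b > dist a b; that is, a highway avoiding the lens is useless for the pair (a,b): every path using it is strictly longer (in time) than the direct segment. -/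
open EuclideanGeometry Real RealInnerProductSpace

lemma proj_bound (c1 c2 x y : ℝ) (h : c1^2 + c2^2 ≤ 1) :
    c1*x + c2*y ≤ Real.sqrt (x^2 + y^2) := by
  have h2 : (c1*x + c2*y)^2 ≤ x^2 + y^2 := by
    nlinarith [sq_nonneg (c1*y - c2*x), sq_nonneg x, sq_nonneg y]
  rcases le_or_gt (c1*x + c2*y) 0 with h0 | h0
  · exact h0.trans (Real.sqrt_nonneg _)
  · exact (Real.le_sqrt' h0).mpr h2

lemma key_ineq (k r1 r2 e : ℝ) (hk0 : 0 < k) (hk1 : k < 1) (hr1 : 0 < r1)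
    (hr2 : 0 < r2) (he : 0 < e) (hee : r1*r2 ≤ e^2) :
    (1-k^2)*(r1*r2) - (k*r1+e)*(k*r2+e)
      ≤ -(k * (Real.sqrt (r1^2+2*k*e*r1+e^2) * Real.sqrt (r2^2+2*k*e*r2+e^2))) := by
  set A := Real.sqrt (r1^2+2*k*e*r1+e^2) with hA
  set B := Real.sqrt (r2^2+2*k*e*r2+e^2) with hB
  have hA0 : 0 ≤ A := Real.sqrt_nonneg _
  have hB0 : 0 ≤ B := Real.sqrt_nonneg _
  have hA2 : A^2 = r1^2+2*k*e*r1+e^2 := Real.sq_sqrt (by positivity)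
  have hB2 : B^2 = r2^2+2*k*e*r2+e^2 := Real.sq_sqrt (by positivity)
  have hR : 0 ≤ (k*r1+e)*(k*r2+e) - (1-k^2)*(r1*r2) := by
    nlinarith [mul_pos (mul_pos hk0 he) hr1, mul_pos (mul_pos hk0 he) hr2,
      mul_pos (mul_pos hk0 hk0) (mul_pos hr1 hr2)]
  have hfact : 0 ≤ (e^2 - r1*r2) * ((1-k^2) * (e^2 + 2*k*e*(r1+r2) + (4*k^2-1)*(r1*r2))) := by
    have h1 : 0 ≤ e^2 - r1*r2 := by linarith
    have h2 : 0 ≤ e^2 + 2*k*e*(r1+r2) + (4*k^2-1)*(r1*r2) := by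
      nlinarith [mul_pos (mul_pos hk0 he) hr1, mul_pos (mul_pos hk0 he) hr2,
        mul_pos (mul_pos hk0 hk0) (mul_pos hr1 hr2)]
    have h3 : (0:ℝ) ≤ 1 - k^2 := by nlinarith
    positivity
  have hPP : (k*(A*B))^2 = k^2*((r1^2+2*k*e*r1+e^2)*(r2^2+2*k*e*r2+e^2)) := by
    rw [mul_pow, mul_pow, hA2, hB2]
  have hid : ((k*r1+e)*(k*r2+e) - (1-k^2)*(r1*r2))^2
      - k^2*((r1^2+2*k*e*r1+e^2)*(r2^2+2*k*e*r2+e^2))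
      = (e^2 - r1*r2) * ((1-k^2) * (e^2 + 2*k*e*(r1+r2) + (4*k^2-1)*(r1*r2))) := by
    ring
  have hP0 : 0 ≤ k*(A*B) := by positivity
  nlinarith [hPP, hid, hfact, hR, hP0]

lemma real_aux (k xa ya xb yb : ℝ) (hk0 : 0 < k) (hk1 : k < 1)
    (hya : 0 < ya) (hyb : 0 < yb)
    (hX : k * Real.sqrt ((xb-xa)^2 + (ya+yb)^2) < xb - xa)
    (hang : ∀ t : ℝ, -(k * (Real.sqrt ((xa-t)^2+ya^2) * Real.sqrt ((xb-t)^2+yb^2)))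
      < (xa-t)*(xb-t) + ya*yb) :
    Real.sqrt ((xb-xa)^2 + (yb-ya)^2) < k*(xb-xa) + Real.sqrt (1-k^2) * (ya+yb) := by
  set s := Real.sqrt (1-k^2) with hs_def
  have hs : 0 < s := Real.sqrt_pos.mpr (by nlinarith)
  have hs2 : s^2 = 1-k^2 := Real.sq_sqrt (by nlinarith)
  set X := xb - xa with hX_def
  set Y := ya + yb with hY_def
  have hY : 0 < Y := by positivity
  have hM2 : Real.sqrt (X^2+Y^2)^2 = X^2+Y^2 := Real.sq_sqrt (by positivity)
  have hX0 : 0 < X := lt_of_le_of_lt (by positivity) hX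
  have hkY : k*Y < s*X := by
    have hM0 : 0 ≤ k * Real.sqrt (X^2+Y^2) := by positivity
    have h1 : (k * Real.sqrt (X^2+Y^2))^2 < X^2 := by nlinarith [hX, hM0]
    rw [mul_pow, hM2] at h1
    have h2 : (k*Y)^2 < (s*X)^2 := by rw [mul_pow, mul_pow, hs2]; nlinarith
    nlinarith [mul_pos hk0 hY, mul_pos hs hX0]
  set r1 := ya / s with hr1_def
  set r2 := yb / s with hr2_def
  have hr1 : 0 < r1 := by positivity
  have hr2 : 0 < r2 := by positivity
  have hya' : ya = s * r1 := by rw [hr1_def]; field_simp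
  have hyb' : yb = s * r2 := by rw [hr2_def]; field_simp
  set e := (X - k*Y/s)/2 with he_def
  have he : 0 < e := by
    rw [he_def]
    have : k*Y/s < X := by rw [div_lt_iff₀ hs]; nlinarith
    linarith
  have hXe : X = 2*e + k*(r1+r2) := by
    rw [he_def, hr1_def, hr2_def, hY_def]
    field_simp
    ring
  set t0 := xa + k*r1 + e with ht0_def
  have h1 : xa - t0 = -(k*r1+e) := by rw [ht0_def]; ring
  have h2 : xb - t0 = k*r2 + e := by
    have hXb : xb = xa + X := by rw [hX_def]; ring
    rw [ht0_def, hXb, hXe]; ring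
  have hee : e^2 < r1*r2 := by
    by_contra hcon
    push_neg at hcon
    have hk := key_ineq k r1 r2 e hk0 hk1 hr1 hr2 he hcon
    have hg := hang t0
    rw [h1, h2, hya', hyb'] at hg
    have e1 : (-(k*r1+e))^2 + (s*r1)^2 = r1^2+2*k*e*r1+e^2 := by
      linear_combination (r1^2) * hs2
    have e2 : (k*r2+e)^2 + (s*r2)^2 = r2^2+2*k*e*r2+e^2 := by
      linear_combination (r2^2) * hs2
    rw [e1, e2] at hg
    have hprod : (s*r1)*(s*r2) = (1-k^2)*(r1*r2) := by
      linear_combination (r1*r2) * hs2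
    have hneg : (-(k*r1+e))*(k*r2+e) = -((k*r1+e)*(k*r2+e)) := by ring
    rw [hneg, hprod] at hg
    linarith
  have hL2 : Real.sqrt (X^2 + (yb-ya)^2)^2 = X^2 + (yb-ya)^2 := Real.sq_sqrt (by positivity)
  have hpos : 0 < k*X + s*Y := by positivity
  have key2 : (k*X+s*Y)^2 - (X^2 + (yb-ya)^2) = s^2*(4*(r1*r2) - 4*e^2) := by
    rw [hXe, hY_def, hya', hyb']
    ring_nf
    linear_combination ((r1+r2)^2*(s^2+1-k^2) + 2*(2*k*e+k^2*(r1+r2))*(r1+r2) - (r1+r2)^2 + 4*e^2) * hs2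
  have hsq : X^2 + (yb-ya)^2 < (k*X + s*Y)^2 := by
    have hpos2 : 0 < s^2*(4*(r1*r2) - 4*e^2) := by
      apply mul_pos (by positivity); linarith
    linarith
  refine lt_of_pow_lt_pow_left₀ 2 hpos.le ?_
  rw [hL2]
  exact hsq

lemma real_main (k xa ya xb yb xp xg : ℝ) (hk0 : 0 < k) (hk1 : k < 1)
    (hya : 0 < ya) (hyb : 0 < yb)
    (hang : ∀ t : ℝ, -(k * (Real.sqrt ((xa-t)^2+ya^2) * Real.sqrt ((xb-t)^2+yb^2)))
      < (xa-t)*(xb-t) + ya*yb) :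
    Real.sqrt ((xb-xa)^2 + (yb-ya)^2)
      < Real.sqrt ((xa-xp)^2 + ya^2) + k * Real.sqrt ((xp-xg)^2)
        + Real.sqrt ((xg-xb)^2 + yb^2) := by
  set X := xb - xa with hX_def
  set Y := ya + yb with hY_def
  have hY : 0 < Y := by positivity
  -- generic lower bound on the travel time
  have step : ∀ c1 c2 : ℝ, c1^2 + c2^2 ≤ 1 → |c1| ≤ k → c1*X + c2*Y ≤
      Real.sqrt ((xa-xp)^2 + ya^2) + k * Real.sqrt ((xp-xg)^2)
        + Real.sqrt ((xg-xb)^2 + yb^2) := by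
    intro c1 c2 h1 h2
    have b1 : c1*(xp-xa) + c2*ya ≤ Real.sqrt ((xa-xp)^2 + ya^2) := by
      have := proj_bound c1 c2 (xp-xa) ya h1
      rw [show (xp-xa)^2 = (xa-xp)^2 by ring] at this
      exact this
    have b3 : c1*(xb-xg) + c2*yb ≤ Real.sqrt ((xg-xb)^2 + yb^2) := by
      have := proj_bound c1 c2 (xb-xg) yb h1
      rw [show (xb-xg)^2 = (xg-xb)^2 by ring] at this
      exact this
    have b2 : c1*(xg-xp) ≤ k * Real.sqrt ((xp-xg)^2) := by
      rw [show ((xp-xg):ℝ)^2 = (xg-xp)^2 by ring, Real.sqrt_sq_eq_abs]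
      calc c1*(xg-xp) ≤ |c1*(xg-xp)| := le_abs_self _
        _ = |c1| * |xg-xp| := abs_mul _ _
        _ ≤ k * |xg-xp| := by
            apply mul_le_mul_of_nonneg_right h2 (abs_nonneg _)
    have : c1*(xp-xa) + c2*ya + c1*(xg-xp) + (c1*(xb-xg) + c2*yb) = c1*X + c2*Y := by
      rw [hX_def, hY_def]; ring
    linarith
  have hM2 : Real.sqrt (X^2+Y^2)^2 = X^2+Y^2 := Real.sq_sqrt (by positivity)
  have hM0 : 0 < Real.sqrt (X^2+Y^2) := Real.sqrt_pos.mpr (by positivity)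
  set M := Real.sqrt (X^2+Y^2) with hM_def
  have hLM : Real.sqrt (X^2 + (yb-ya)^2) < M := by
    apply Real.sqrt_lt_sqrt (by positivity)
    rw [hY_def]; nlinarith [mul_pos hya hyb]
  rcases le_or_gt (|X|) (k*M) with hcase | hcase
  · -- gentle slope: direct bound by M
    have h1 : (X/M)^2 + (Y/M)^2 ≤ 1 := by
      rw [div_pow, div_pow, ← add_div, div_le_one (by positivity)]
      linarith [hM2]
    have h2 : |X/M| ≤ k := by
      rw [abs_div, abs_of_pos hM0, div_le_iff₀ hM0]
      exact hcase
    have := step (X/M) (Y/M) h1 h2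
    have hval : (X/M)*X + (Y/M)*Y = M := by
      field_simp
      linear_combination -hM2
    rw [hval] at this
    linarith
  · -- steep slope
    have hs2 : Real.sqrt (1-k^2)^2 = 1-k^2 := Real.sq_sqrt (by nlinarith)
    have hs0 : 0 ≤ Real.sqrt (1-k^2) := Real.sqrt_nonneg _
    have habs : k^2 + Real.sqrt (1-k^2)^2 ≤ 1 := by rw [hs2]; linarith
    have hkk : |k| ≤ k := le_of_eq (abs_of_pos hk0)
    set s := Real.sqrt (1-k^2) with hs_def
    rcases le_or_gt 0 X with hx0 | hx0
    · have hXX : k * M < X := by rwa [abs_of_nonneg hx0] at hcase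
      have haux := real_aux k xa ya xb yb hk0 hk1 hya hyb hXX hang
      rw [← hs_def, ← hY_def, ← hX_def] at haux
      have hstep := step k s habs hkk
      linarith
    · have hXX : k * M < xa - xb := by
        rw [abs_of_neg hx0] at hcase
        rw [hX_def] at hcase
        linarith
      have hang' : ∀ t : ℝ, -(k * (Real.sqrt ((xb-t)^2+yb^2) * Real.sqrt ((xa-t)^2+ya^2)))
          < (xb-t)*(xa-t) + yb*ya := by
        intro t
        have h := hang t
        have e1 : (xb-t)*(xa-t) + yb*ya = (xa-t)*(xb-t)+ya*yb := by ring
        have e2 : Real.sqrt ((xb-t)^2+yb^2) * Real.sqrt ((xa-t)^2+ya^2)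
            = Real.sqrt ((xa-t)^2+ya^2) * Real.sqrt ((xb-t)^2+yb^2) := mul_comm _ _
        rw [e1, e2]; exact h
      have hXX' : k * Real.sqrt ((xa-xb)^2 + (yb+ya)^2) < xa - xb := by
        rw [show ((xa-xb):ℝ)^2 = (xb-xa)^2 by ring, show yb+ya = ya+yb by ring]
        exact hXX
      have haux := real_aux k xb yb xa ya hk0 hk1 hyb hya hXX' hang'
      rw [show ((xa-xb):ℝ)^2 = (xb-xa)^2 by ring, show ((ya-yb):ℝ)^2 = (yb-ya)^2 by ring,
        ← hs_def, ← hX_def] at haux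
      have hstep := step (-k) s (by rw [neg_pow]; simpa using habs) (by rw [abs_neg]; exact hkk)
      have : k*(xa-xb) = -k*X := by rw [hX_def]; ring
      have hYY : yb + ya = Y := by rw [hY_def]; ring
      rw [this, hYY] at haux
      linarith

local notation "E2" => EuclideanSpace ℝ (Fin 2)

lemma geom_main (v : ℝ) (hv : 1 < v) (a b : E2)
    (H : AffineSubspace ℝ E2) (u n : E2)
    (hu : ‖u‖ = 1) (hn : ‖n‖ = 1) (hun : ⟪u, n⟫ = 0)
    (hdec : ∀ w : E2, w = ⟪w, u⟫ • u + ⟪w, n⟫ • n)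
    (p : E2) (hp : p ∈ H) (hdir : H.direction = Submodule.span ℝ {u})
    (hdisj : ∀ z ∈ H, EuclideanGeometry.angle a z b < π / 2 + Real.arcsin (1 / v) ∧
      z ∉ segment ℝ a b)
    (hya : 0 < ⟪a - p, n⟫) (hyb : 0 < ⟪b - p, n⟫)
    (g : E2) (hg : g ∈ H) :
    dist a b < dist a p + dist p g / v + dist g b := by
  have hv0 : (0:ℝ) < v := by linarith
  set k : ℝ := 1/v with hk_def
  have hk0 : 0 < k := by positivity
  have hk1 : k < 1 := by rw [hk_def, div_lt_one hv0]; exact hv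
  have huu : ⟪u, u⟫ = (1:ℝ) := by rw [real_inner_self_eq_norm_sq, hu]; norm_num
  have hnn : ⟪n, n⟫ = (1:ℝ) := by rw [real_inner_self_eq_norm_sq, hn]; norm_num
  have hnu : ⟪n, u⟫ = (0:ℝ) := by rw [real_inner_comm]; exact hun
  -- inner product in coordinates
  have hinner : ∀ w₁ w₂ : E2, ⟪w₁, w₂⟫ = ⟪w₁,u⟫*⟪w₂,u⟫ + ⟪w₁,n⟫*⟪w₂,n⟫ := by
    intro w₁ w₂
    conv_lhs => rw [hdec w₁, hdec w₂]
    simp only [inner_add_left, inner_add_right, real_inner_smul_left, real_inner_smul_right,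
      huu, hnn, hun, hnu]
    ring
  -- distance in coordinates
  have hdist : ∀ w₁ w₂ : E2, dist w₁ w₂ =
      Real.sqrt ((⟪w₁ - p, u⟫ - ⟪w₂ - p, u⟫)^2 + (⟪w₁ - p, n⟫ - ⟪w₂ - p, n⟫)^2) := by
    intro w₁ w₂
    rw [dist_eq_norm]
    rw [show ‖w₁ - w₂‖ = Real.sqrt ⟪w₁ - w₂, w₁ - w₂⟫ by
      rw [real_inner_self_eq_norm_sq, Real.sqrt_sq (norm_nonneg _)]]
    rw [show w₁ - w₂ = (w₁ - p) - (w₂ - p) by abel, hinner]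
    simp only [inner_sub_left]
    congr 1
    ring
  -- membership gives zero n-coordinate
  have hmem : ∀ z : E2, z ∈ H → ⟪z - p, n⟫ = 0 := by
    intro z hz
    have h1 : z - p ∈ H.direction := by
      have := (AffineSubspace.vsub_right_mem_direction_iff_mem hp z).mpr hz
      simpa using this
    rw [hdir, Submodule.mem_span_singleton] at h1
    obtain ⟨c, hc⟩ := h1
    rw [← hc, real_inner_smul_left, hun, mul_zero]
  set xa := ⟪a - p, u⟫ with hxa_def
  set ya := ⟪a - p, n⟫ with hya_def
  set xb := ⟪b - p, u⟫ with hxb_def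
  set yb := ⟪b - p, n⟫ with hyb_def
  set xg := ⟪g - p, u⟫ with hxg_def
  -- a, b not on H
  have haH : a ∉ H := fun h => (hdisj a h).2 (left_mem_segment ℝ a b)
  have hbH : b ∉ H := fun h => (hdisj b h).2 (right_mem_segment ℝ a b)
  -- the angle hypothesis in coordinates
  have hang : ∀ t : ℝ, -(k * (Real.sqrt ((xa-t)^2+ya^2) * Real.sqrt ((xb-t)^2+yb^2)))
      < (xa-t)*(xb-t) + ya*yb := by
    intro t
    set z : E2 := t • u + p with hz_def
    have hzH : z ∈ H := by
      have h1 : t • u ∈ H.direction := by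
        rw [hdir]; exact Submodule.smul_mem _ t (Submodule.mem_span_singleton_self u)
      have := AffineSubspace.vadd_mem_of_mem_direction h1 hp
      simpa using this
    have hzu : ⟪z - p, u⟫ = t := by
      rw [hz_def, show t • u + p - p = t • u by abel, real_inner_smul_left, huu, mul_one]
    have hzn : ⟪z - p, n⟫ = 0 := hmem z hzH
    have hnaz : ‖a - z‖ = Real.sqrt ((xa-t)^2 + ya^2) := by
      rw [← dist_eq_norm, hdist a z, hzu, hzn, sub_zero]
    have hnbz : ‖b - z‖ = Real.sqrt ((xb-t)^2 + yb^2) := by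
      rw [← dist_eq_norm, hdist b z, hzu, hzn, sub_zero]
    have hiz : ⟪a - z, b - z⟫ = (xa-t)*(xb-t) + ya*yb := by
      rw [hinner (a-z) (b-z),
        show ⟪a-z,u⟫ = ⟪a-p,u⟫ - ⟪z-p,u⟫ by
          rw [show a - z = (a-p) - (z-p) by abel, inner_sub_left],
        show ⟪a-z,n⟫ = ⟪a-p,n⟫ - ⟪z-p,n⟫ by
          rw [show a - z = (a-p) - (z-p) by abel, inner_sub_left],
        show ⟪b-z,u⟫ = ⟪b-p,u⟫ - ⟪z-p,u⟫ by
          rw [show b - z = (b-p) - (z-p) by abel, inner_sub_left],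
        show ⟪b-z,n⟫ = ⟪b-p,n⟫ - ⟪z-p,n⟫ by
          rw [show b - z = (b-p) - (z-p) by abel, inner_sub_left],
        hzu, hzn]
      ring
    -- positivity of the norms
    have hpaz : 0 < ‖a - z‖ := by
      rw [norm_pos_iff, sub_ne_zero]
      intro h
      exact haH (h ▸ hzH)
    have hpbz : 0 < ‖b - z‖ := by
      rw [norm_pos_iff, sub_ne_zero]
      intro h
      exact hbH (h ▸ hzH)
    -- the angle bound
    have hcos : -k < Real.cos (EuclideanGeometry.angle a z b) := by
      have hγ := (hdisj z hzH).1
      have h1 : Real.cos (π / 2 + Real.arcsin (1/v)) < Real.cos (EuclideanGeometry.angle a z b) := by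
        apply Real.strictAntiOn_cos
        · exact ⟨EuclideanGeometry.angle_nonneg a z b, EuclideanGeometry.angle_le_pi a z b⟩
        · constructor
          · have h3 : 0 ≤ Real.arcsin (1/v) := Real.arcsin_nonneg.mpr (by positivity)
            linarith [Real.pi_pos]
          · have := Real.arcsin_le_pi_div_two (1/v)
            linarith
        · exact hγ
      have h2 : Real.cos (π / 2 + Real.arcsin (1/v)) = -k := by
        rw [Real.cos_add, Real.cos_pi_div_two, Real.sin_pi_div_two, Real.sin_arcsin (by linarith [hk0] : (-1:ℝ) ≤ 1/v) (by linarith [hk1] : (1:ℝ)/v ≤ 1)]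
        rw [hk_def]; ring
      rw [h2] at h1; exact h1
    have hcos2 : Real.cos (EuclideanGeometry.angle a z b) = ⟪a - z, b - z⟫ / (‖a - z‖ * ‖b - z‖) := by
      rw [EuclideanGeometry.angle]
      rw [InnerProductGeometry.cos_angle]
      norm_num
    rw [hcos2, lt_div_iff₀ (by positivity : 0 < ‖a-z‖ * ‖b-z‖)] at hcos
    rw [hnaz, hnbz, hiz] at hcos
    calc -(k * (Real.sqrt ((xa-t)^2+ya^2) * Real.sqrt ((xb-t)^2+yb^2)))
        = -k * (Real.sqrt ((xa-t)^2+ya^2) * Real.sqrt ((xb-t)^2+yb^2)) := by ring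
      _ < (xa-t)*(xb-t) + ya*yb := hcos
  -- coordinates of p and g
  have hpu : ⟪p - p, u⟫ = (0:ℝ) := by simp
  have hpn : ⟪p - p, n⟫ = (0:ℝ) := by simp
  have hgn : ⟪g - p, n⟫ = (0:ℝ) := hmem g hg
  -- distances
  have e1 : dist a b = Real.sqrt ((xb-xa)^2 + (yb-ya)^2) := by
    rw [hdist a b]; congr 1; ring
  have e2 : dist a p = Real.sqrt ((xa-(0:ℝ))^2 + ya^2) := by
    rw [hdist a p, hpu, hpn]; congr 1; ring
  have e3 : dist p g = Real.sqrt (((0:ℝ)-xg)^2) := by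
    rw [hdist p g, hpu, hpn, hgn]; congr 1; ring
  have e4 : dist g b = Real.sqrt ((xg-xb)^2 + yb^2) := by
    rw [hdist g b, hgn]; congr 1; ring
  have e5 : dist p g / v = k * dist p g := by
    rw [hk_def]; field_simp
  have main := real_main k xa ya xb yb 0 xg hk0 hk1 hya hyb hang
  rw [e1, e2, e5, e3, e4]
  exact main



set_option maxHeartbeats 2000000 in
/-- A highway on a line disjoint from the closed lens
ℓ_{π/2+arcsin(1/v)}(a,b) is useless for the pair (a,b): every path using it takes
strictly more time than the direct segment. -/
theorem useless_of_avoids_lens (v : ℝ) (hv : 1 < v)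
    (a b : EuclideanSpace ℝ (Fin 2))
    (H : AffineSubspace ℝ (EuclideanSpace ℝ (Fin 2)))
    (hH : Module.finrank ℝ H.direction = 1)
    (hdisj : ∀ z ∈ H, EuclideanGeometry.angle a z b < π / 2 + Real.arcsin (1 / v) ∧
      z ∉ segment ℝ a b) :
    ∀ p ∈ H, ∀ g ∈ H, dist a b < dist a p + dist p g / v + dist g b := by
  intro p hp g hg
  -- direction spanned by a unit vector u
  have hfin : Module.finrank ℝ (EuclideanSpace ℝ (Fin 2)) = 2 := by simp
  have hne : H.direction ≠ ⊥ := by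
    intro h
    rw [h, finrank_bot] at hH
    norm_num at hH
  obtain ⟨v0, hv0mem, hv0ne⟩ := Submodule.exists_mem_ne_zero_of_ne_bot hne
  have hspan_v0 : Submodule.span ℝ {v0} = H.direction := by
    apply Submodule.eq_of_le_of_finrank_le
    · rw [Submodule.span_le, Set.singleton_subset_iff]; exact hv0mem
    · rw [hH, finrank_span_singleton hv0ne]
  set u : E2 := (‖v0‖:ℝ)⁻¹ • v0 with hu_def
  have hu : ‖u‖ = 1 := norm_smul_inv_norm hv0ne
  have hune : u ≠ 0 := by
    intro h; rw [h, norm_zero] at hu; norm_num at hu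
  have hdir : H.direction = Submodule.span ℝ {u} := by
    rw [← hspan_v0]
    rw [hu_def]
    rw [Submodule.span_singleton_smul_eq (isUnit_iff_ne_zero.mpr
      (inv_ne_zero (norm_ne_zero_iff.mpr hv0ne))) v0]
  -- orthogonal unit vector n₀
  have hWrank : Module.finrank ℝ ((Submodule.span ℝ {u})ᗮ : Submodule ℝ E2) = 1 := by
    have h1 := Submodule.finrank_add_finrank_orthogonal (Submodule.span ℝ {u})
    rw [finrank_span_singleton hune, hfin] at h1
    omega
  have hWne : ((Submodule.span ℝ {u})ᗮ : Submodule ℝ E2) ≠ ⊥ := by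
    intro h
    rw [h, finrank_bot] at hWrank
    norm_num at hWrank
  obtain ⟨w0, hw0mem, hw0ne⟩ := Submodule.exists_mem_ne_zero_of_ne_bot hWne
  set n0 : E2 := (‖w0‖:ℝ)⁻¹ • w0 with hn0_def
  have hn0 : ‖n0‖ = 1 := norm_smul_inv_norm hw0ne
  have hn0ne : n0 ≠ 0 := by
    intro h; rw [h, norm_zero] at hn0; norm_num at hn0
  have hn0mem : n0 ∈ (Submodule.span ℝ {u})ᗮ :=
    Submodule.smul_mem _ _ hw0mem
  have hun0 : ⟪u, n0⟫ = (0:ℝ) := Submodule.mem_orthogonal_singleton_iff_inner_right.mp hn0mem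
  have huu : ⟪u, u⟫ = (1:ℝ) := by rw [real_inner_self_eq_norm_sq, hu]; norm_num
  have hn0n0 : ⟪n0, n0⟫ = (1:ℝ) := by rw [real_inner_self_eq_norm_sq, hn0]; norm_num
  -- orthogonal complement is spanned by n0
  have hWspan : Submodule.span ℝ {n0} = (Submodule.span ℝ {u})ᗮ := by
    apply Submodule.eq_of_le_of_finrank_le
    · rw [Submodule.span_le, Set.singleton_subset_iff]; exact hn0mem
    · rw [hWrank, finrank_span_singleton hn0ne]
  -- decomposition
  have hdec : ∀ w : E2, w = ⟪w, u⟫ • u + ⟪w, n0⟫ • n0 := by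
    intro w
    have hw' : w - ⟪w, u⟫ • u ∈ (Submodule.span ℝ {u})ᗮ := by
      rw [Submodule.mem_orthogonal_singleton_iff_inner_right]
      rw [inner_sub_right, real_inner_smul_right, huu, mul_one, real_inner_comm, sub_self]
    rw [← hWspan, Submodule.mem_span_singleton] at hw'
    obtain ⟨c, hc⟩ := hw'
    have hn0u : ⟪n0, u⟫ = (0:ℝ) := by rw [real_inner_comm]; exact hun0
    have hcval : c = ⟪w, n0⟫ := by
      have h5 := congrArg (fun x => (⟪n0, x⟫ : ℝ)) hc
      simp only [real_inner_smul_right, inner_sub_right] at h5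
      rw [hn0n0, hn0u] at h5
      linarith [h5, real_inner_comm w n0]
    rw [hcval] at hc
    rw [hc]; abel
  -- membership criterion (reverse direction)
  have hmem_rev : ∀ z : E2, ⟪z - p, n0⟫ = 0 → z ∈ H := by
    intro z h0
    rw [← AffineSubspace.vsub_right_mem_direction_iff_mem hp z]
    have : (z -ᵥ p : E2) = z - p := rfl
    rw [this, hdir, Submodule.mem_span_singleton]
    refine ⟨⟪z - p, u⟫, ?_⟩
    have := hdec (z - p)
    rw [h0, zero_smul, add_zero] at this
    exact this.symm
  -- a, b off the line
  have haH : a ∉ H := fun h => (hdisj a h).2 (left_mem_segment ℝ a b)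
  have hbH : b ∉ H := fun h => (hdisj b h).2 (right_mem_segment ℝ a b)
  have hya0 : ⟪a - p, n0⟫ ≠ 0 := fun h => haH (hmem_rev a h)
  have hyb0 : ⟪b - p, n0⟫ ≠ 0 := fun h => hbH (hmem_rev b h)
  clear_value u n0
  -- same side
  have hsame : 0 < ⟪a - p, n0⟫ * ⟪b - p, n0⟫ := by
    rcases lt_or_gt_of_ne (mul_ne_zero hya0 hyb0) with hlt | hgt
    · exfalso
      have hcases : (⟪a - p, n0⟫ < 0 ∧ 0 < ⟪b - p, n0⟫) ∨ (0 < ⟪a - p, n0⟫ ∧ ⟪b - p, n0⟫ < 0) := by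
        rcases lt_or_gt_of_ne hya0 with h1 | h1
        · left; exact ⟨h1, by nlinarith⟩
        · right; exact ⟨h1, by nlinarith⟩
      have hd : ⟪a - p, n0⟫ - ⟪b - p, n0⟫ ≠ 0 := by
        rcases hcases with ⟨h1, h2⟩ | ⟨h1, h2⟩ <;> intro h <;> linarith [sub_eq_zero.mp h]
      obtain ⟨θ, hθ0, hθ1, hθeq⟩ : ∃ θ : ℝ, 0 ≤ θ ∧ θ ≤ 1 ∧
          θ * (⟪a - p, n0⟫ - ⟪b - p, n0⟫) = ⟪a - p, n0⟫ := by
        refine ⟨⟪a - p, n0⟫ / (⟪a - p, n0⟫ - ⟪b - p, n0⟫), ?_, ?_, div_mul_cancel₀ _ hd⟩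
        · rcases hcases with ⟨h1, h2⟩ | ⟨h1, h2⟩
          · rw [div_nonneg_iff]; right; constructor <;> linarith
          · apply div_nonneg h1.le; linarith
        · rcases hcases with ⟨h1, h2⟩ | ⟨h1, h2⟩
          · rw [div_le_one_iff]; right; right; constructor <;> linarith
          · rw [div_le_one (by linarith)]; linarith
      have hz0seg : (1-θ) • a + θ • b ∈ segment ℝ a b :=
        ⟨1-θ, θ, by linarith, hθ0, by ring, rfl⟩
      have hz0H : (1-θ) • a + θ • b ∈ H := by
        apply hmem_rev
        have hveq : (1-θ) • a + θ • b - p = (1-θ) • (a - p) + θ • (b - p) := by module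
        rw [hveq, inner_add_left, real_inner_smul_left, real_inner_smul_left]
        linear_combination -hθeq
      exact (hdisj _ hz0H).2 hz0seg
    · exact hgt
  -- sign cases
  rcases lt_or_gt_of_ne hya0 with hneg | hpos
  · -- use n := -n0
    have hyb' : ⟪b - p, n0⟫ < 0 := by nlinarith
    apply geom_main v hv a b H u (-n0) hu (by rw [norm_neg]; exact hn0) (by rw [inner_neg_right, hun0]; ring)
      (fun w => by rw [inner_neg_right, neg_smul, smul_neg, neg_neg]; exact hdec w)
      p hp hdir hdisj ?_ ?_ g hg
    · rw [inner_neg_right]; linarith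
    · rw [inner_neg_right]; linarith
  · have hyb' : 0 < ⟪b - p, n0⟫ := by nlinarith
    exact geom_main v hv a b H u n0 hu hn0 hun0 hdec p hp hdir hdisj hpos hyb' g hg
end

section
/- Let γ be a real number with π/2 < γ ≤ π, and let S ⊆ ℝ² be a set with at least two elements. Then the union R = ⋃_{a,b ∈ S, a ≠ b} ℓ_γ(a,b) of the closed lenses over all pairs of distinct points of S is a connected subset of ℝ². -/
set_option maxHeartbeats 800000

open EuclideanGeometry Real Set
open scoped RealInnerProductSpace

private lemma aux_div (A B V K c : ℝ) (hA : 0 < A) (hB : 0 < B) (hV : 0 ≤ V)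
    (hVK : V < K) (hc0 : 0 ≤ c) (hc1 : c ≤ 1) :
    (c*V - K) / (Real.sqrt (A + c*V) * Real.sqrt (B + c*V))
      ≤ (V - K) / (Real.sqrt (A + V) * Real.sqrt (B + V)) := by
  have hcV : c*V ≤ V := by nlinarith
  have hcV0 : 0 ≤ c*V := mul_nonneg hc0 hV
  have hD0 : 0 < Real.sqrt (A + c*V) * Real.sqrt (B + c*V) :=
    mul_pos (Real.sqrt_pos.2 (by linarith)) (Real.sqrt_pos.2 (by linarith))
  have hD1 : 0 < Real.sqrt (A + V) * Real.sqrt (B + V) :=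
    mul_pos (Real.sqrt_pos.2 (by linarith)) (Real.sqrt_pos.2 (by linarith))
  have hDle : Real.sqrt (A + c*V) * Real.sqrt (B + c*V)
      ≤ Real.sqrt (A + V) * Real.sqrt (B + V) :=
    mul_le_mul (Real.sqrt_le_sqrt (by linarith)) (Real.sqrt_le_sqrt (by linarith))
      (Real.sqrt_nonneg _) (Real.sqrt_nonneg _)
  rw [div_le_div_iff₀ hD0 hD1]
  have h1 : (c*V - K) * (Real.sqrt (A + V) * Real.sqrt (B + V))
      ≤ (V - K) * (Real.sqrt (A + V) * Real.sqrt (B + V)) :=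
    mul_le_mul_of_nonneg_right (by linarith) hD1.le
  have h2 : (V - K) * (Real.sqrt (A + V) * Real.sqrt (B + V))
      ≤ (V - K) * (Real.sqrt (A + c*V) * Real.sqrt (B + c*V)) := by
    apply mul_le_mul_of_nonpos_left hDle (by linarith)
  linarith

private lemma lens_segment (γ : ℝ) (hγ1 : π / 2 < γ) (a b z : EuclideanSpace ℝ (Fin 2))
    (hz : γ ≤ EuclideanGeometry.angle a z b) :
    ∃ p ∈ segment ℝ a b, segment ℝ z p ⊆ {w | γ ≤ EuclideanGeometry.angle a w b} := by
  have hangle : ∀ w : EuclideanSpace ℝ (Fin 2),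
      EuclideanGeometry.angle a w b = InnerProductGeometry.angle (a - w) (b - w) := by
    intro w; rw [EuclideanGeometry.angle]; simp [vsub_eq_sub]
  have hle_pi := EuclideanGeometry.angle_le_pi a z b
  have hcos : Real.cos (EuclideanGeometry.angle a z b) < 0 :=
    Real.cos_neg_of_pi_div_two_lt_of_lt (lt_of_lt_of_le hγ1 hz)
      (by linarith [Real.pi_pos])
  rw [hangle, InnerProductGeometry.cos_angle] at hcos
  have hinner : ⟪a - z, b - z⟫ < 0 := by
    rcases div_neg_iff.1 hcos with ⟨_, h⟩ | ⟨h, _⟩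
    · exact absurd h (not_lt.2 (mul_nonneg (norm_nonneg _) (norm_nonneg _)))
    · exact h
  have hba : b - a ≠ 0 := by
    intro h
    have : b = a := by rwa [sub_eq_zero] at h
    rw [this] at hinner
    exact absurd hinner (not_lt.2 (real_inner_self_nonneg))
  set u : EuclideanSpace ℝ (Fin 2) := b - a with hu_def
  have hune : u ≠ 0 := by rw [hu_def]; exact hba
  have hu2 : 0 < ‖u‖^2 := pow_pos (norm_pos_iff.mpr hune) 2
  set s : ℝ := ⟪z - a, u⟫ / ‖u‖^2 with hs_def
  set v : EuclideanSpace ℝ (Fin 2) := z - a - s • u with hv_def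
  have hv : ⟪v, u⟫ = 0 := by
    rw [hv_def, inner_sub_left, real_inner_smul_left, hs_def,
      real_inner_self_eq_norm_sq, div_mul_cancel₀ _ (ne_of_gt hu2)]
    ring
  have hv' : ⟪u, v⟫ = 0 := by rw [real_inner_comm]; exact hv
  have expand : ∀ x y x' y' : ℝ,
      ⟪x • u + y • v, x' • u + y' • v⟫ = x*x'*‖u‖^2 + y*y'*‖v‖^2 := by
    intro x y x' y'
    simp only [inner_add_left, inner_add_right, real_inner_smul_left,
      real_inner_smul_right, hv, hv', real_inner_self_eq_norm_sq]
    ring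
  have hzav : z - a = s • u + v := by rw [hv_def]; abel
  have ha : ∀ t : ℝ, a - (z - t • v) = (-s) • u + (-(1-t)) • v := by
    intro t
    have : a - (z - t • v) = -(z - a) + t • v := by abel
    rw [this, hzav]; module
  have hb : ∀ t : ℝ, b - (z - t • v) = (1-s) • u + (-(1-t)) • v := by
    intro t
    have : b - (z - t • v) = u - (z - a) + t • v := by rw [hu_def]; abel
    rw [this, hzav]; module
  have hinn : ∀ t : ℝ, ⟪a - (z - t • v), b - (z - t • v)⟫
      = (1-t)^2 * ‖v‖^2 - s*(1-s)*‖u‖^2 := by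
    intro t; rw [ha, hb, expand]; ring
  have hna : ∀ t : ℝ, ‖a - (z - t • v)‖^2 = s^2*‖u‖^2 + (1-t)^2*‖v‖^2 := by
    intro t
    rw [← real_inner_self_eq_norm_sq, ha, expand]; ring
  have hnb : ∀ t : ℝ, ‖b - (z - t • v)‖^2 = (1-s)^2*‖u‖^2 + (1-t)^2*‖v‖^2 := by
    intro t
    rw [← real_inner_self_eq_norm_sq, hb, expand]; ring
  have hz0 : z - (0:ℝ) • v = z := by simp
  have hVK : ‖v‖^2 < s*(1-s)*‖u‖^2 := by
    have := hinn 0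
    rw [hz0] at this
    rw [this] at hinner
    nlinarith
  have hs0 : 0 < s ∧ s < 1 := by
    have hprod : 0 < s * (1-s) := by nlinarith [sq_nonneg ‖v‖]
    constructor <;> nlinarith
  have hA : 0 < s^2*‖u‖^2 := by nlinarith [hs0.1, hs0.2]
  have hB : 0 < (1-s)^2*‖u‖^2 := by nlinarith [hs0.1, hs0.2]
  -- cos formula at parameter t
  have hcosw : ∀ t : ℝ, Real.cos (EuclideanGeometry.angle a (z - t • v) b)
      = ((1-t)^2*‖v‖^2 - s*(1-s)*‖u‖^2) /
        (Real.sqrt (s^2*‖u‖^2 + (1-t)^2*‖v‖^2) * Real.sqrt ((1-s)^2*‖u‖^2 + (1-t)^2*‖v‖^2)) := by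
    intro t
    rw [hangle, InnerProductGeometry.cos_angle, hinn]
    have h1 : ‖a - (z - t • v)‖ = Real.sqrt (s^2*‖u‖^2 + (1-t)^2*‖v‖^2) := by
      rw [← Real.sqrt_sq (norm_nonneg (a - (z - t • v))), hna]
    have h2 : ‖b - (z - t • v)‖ = Real.sqrt ((1-s)^2*‖u‖^2 + (1-t)^2*‖v‖^2) := by
      rw [← Real.sqrt_sq (norm_nonneg (b - (z - t • v))), hnb]
    rw [h1, h2]
  -- monotonicity: angle at z - t•v is at least angle at z
  have hmono : ∀ t : ℝ, 0 ≤ t → t ≤ 1 →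
      EuclideanGeometry.angle a z b ≤ EuclideanGeometry.angle a (z - t • v) b := by
    intro t ht0 ht1
    have hc0 : (0:ℝ) ≤ (1-t)^2 := sq_nonneg _
    have hc1 : (1-t)^2 ≤ 1 := by nlinarith
    have key := aux_div (s^2*‖u‖^2) ((1-s)^2*‖u‖^2) (‖v‖^2) (s*(1-s)*‖u‖^2) ((1-t)^2)
      hA hB (by positivity) hVK hc0 hc1
    have hcz : Real.cos (EuclideanGeometry.angle a z b)
        = (‖v‖^2 - s*(1-s)*‖u‖^2) /
          (Real.sqrt (s^2*‖u‖^2 + ‖v‖^2) * Real.sqrt ((1-s)^2*‖u‖^2 + ‖v‖^2)) := by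
      have h := hcosw 0
      rw [hz0] at h
      rw [h]; norm_num
    have hcw := hcosw t
    have hlecos : Real.cos (EuclideanGeometry.angle a (z - t • v) b)
        ≤ Real.cos (EuclideanGeometry.angle a z b) := by
      rw [hcz, hcw]
      convert key using 3 <;> ring
    have m1 : EuclideanGeometry.angle a (z - t • v) b ∈ Set.Icc 0 π :=
      ⟨EuclideanGeometry.angle_nonneg _ _ _, EuclideanGeometry.angle_le_pi _ _ _⟩
    have m2 : EuclideanGeometry.angle a z b ∈ Set.Icc 0 π :=
      ⟨EuclideanGeometry.angle_nonneg _ _ _, EuclideanGeometry.angle_le_pi _ _ _⟩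
    exact (Real.strictAntiOn_cos.le_iff_ge m1 m2).1 hlecos
  refine ⟨z - v, ?_, ?_⟩
  · rw [segment_eq_image' ℝ a b]
    refine ⟨s, ⟨hs0.1.le, hs0.2.le⟩, ?_⟩
    have h : z - v = a + s • u := by rw [hv_def]; abel
    exact h.symm
  · intro w hw
    rw [segment_eq_image' ℝ z (z - v)] at hw
    obtain ⟨t, ht, hwt⟩ := hw
    have hw' : w = z - t • v := by
      rw [← hwt]
      show z + t • (z - v - z) = z - t • v
      have h : z - v - z = -v := by abel
      rw [h]; module
    rw [hw']
    exact le_trans hz (hmono t ht.1 ht.2)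

private lemma lens_preconnected (γ : ℝ) (hγ1 : π / 2 < γ) (a b : EuclideanSpace ℝ (Fin 2)) :
    IsPreconnected ({z | γ ≤ EuclideanGeometry.angle a z b} ∪ segment ℝ a b) := by
  apply isPreconnected_of_forall a
  intro y hy
  rcases hy with hy | hy
  · obtain ⟨p, hp, hseg⟩ := lens_segment γ hγ1 a b y hy
    refine ⟨segment ℝ a b ∪ segment ℝ y p, ?_, ?_, ?_, ?_⟩
    · exact union_subset subset_union_right (hseg.trans subset_union_left)
    · exact Or.inl (left_mem_segment ℝ a b)
    · exact Or.inr (left_mem_segment ℝ y p)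
    · exact IsPreconnected.union p hp (right_mem_segment ℝ y p)
        (convex_segment a b).isPreconnected (convex_segment y p).isPreconnected
  · exact ⟨segment ℝ a b, subset_union_right, left_mem_segment ℝ a b, hy,
      (convex_segment a b).isPreconnected⟩

/-- For π/2 < γ ≤ π and a set S with at least two elements, the union
of the closed lenses ℓ_γ(a,b) over all pairs of distinct points of S is connected. -/
theorem union_of_lenses_connected (γ : ℝ) (hγ1 : π / 2 < γ) (hγ2 : γ ≤ π)
    (S : Set (EuclideanSpace ℝ (Fin 2))) (hS2 : S.Nontrivial) :
    IsConnected (⋃ (a ∈ S) (b ∈ S) (_ : a ≠ b),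
      ({z | γ ≤ EuclideanGeometry.angle a z b} ∪ segment ℝ a b)) := by
  obtain ⟨a₀, ha₀, b₀, hb₀, hab₀⟩ := hS2
  set ι := {q : EuclideanSpace ℝ (Fin 2) × EuclideanSpace ℝ (Fin 2) //
    q.1 ∈ S ∧ q.2 ∈ S ∧ q.1 ≠ q.2} with hι_def
  set f : ι → Set (EuclideanSpace ℝ (Fin 2)) := fun q =>
    {z | γ ≤ EuclideanGeometry.angle q.1.1 z q.1.2} ∪ segment ℝ q.1.1 q.1.2 with hf_def
  have hmem1 : ∀ i : ι, i.1.1 ∈ f i := fun i =>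
    Or.inr (left_mem_segment ℝ i.1.1 i.1.2)
  have hmem2 : ∀ i : ι, i.1.2 ∈ f i := fun i =>
    Or.inr (right_mem_segment ℝ i.1.1 i.1.2)
  have heq : (⋃ (a ∈ S) (b ∈ S) (_ : a ≠ b),
      ({z | γ ≤ EuclideanGeometry.angle a z b} ∪ segment ℝ a b)) = ⋃ i : ι, f i := by
    ext x
    simp only [mem_iUnion, hf_def]
    constructor
    · rintro ⟨a, ha, b, hb, hab, hx⟩
      exact ⟨⟨(a, b), ha, hb, hab⟩, hx⟩
    · rintro ⟨⟨⟨a, b⟩, ha, hb, hab⟩, hx⟩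
      exact ⟨a, ha, b, hb, hab, hx⟩
  rw [heq]
  have : Nonempty ι := ⟨⟨(a₀, b₀), ha₀, hb₀, hab₀⟩⟩
  constructor
  · exact ⟨a₀, mem_iUnion.2 ⟨⟨(a₀, b₀), ha₀, hb₀, hab₀⟩, hmem1 _⟩⟩
  · apply IsPreconnected.iUnion_of_reflTransGen
    · intro i
      exact lens_preconnected γ hγ1 i.1.1 i.1.2
    · rintro ⟨⟨a, b⟩, ha, hb, hab⟩ ⟨⟨c, d⟩, hc, hd, hcd⟩
      by_cases hac : a = c
      · apply Relation.ReflTransGen.single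
        refine ⟨a, hmem1 _, ?_⟩
        show a ∈ f ⟨(c, d), hc, hd, hcd⟩
        rw [hac]
        exact hmem1 _
      · set k : ι := ⟨(a, c), ha, hc, hac⟩
        apply Relation.ReflTransGen.head (b := k)
        · exact ⟨a, hmem1 _, hmem1 k⟩
        · apply Relation.ReflTransGen.single
          exact ⟨c, hmem2 k, hmem1 _⟩
end

section
/- Let C ⊆ ℝ² be a connected set and let L ⊆ ℝ² be a line (one-dimensional affine subspace) with C ∩ L = ∅. Then convexHull ℝ C ∩ L = ∅. (A line intersects the convex hull of a connected planar set if and only if it intersects the set itself; this is the key step in the proof of Lemma 7.) -/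
open RealInnerProductSpace

/-- If a connected planar set C is disjoint from a line L, then so is
its convex hull. -/
theorem convexHull_disjoint_line_of_connected
    (C : Set (EuclideanSpace ℝ (Fin 2))) (hC : IsConnected C)
    (L : AffineSubspace ℝ (EuclideanSpace ℝ (Fin 2)))
    (hL : Module.finrank ℝ L.direction = 1)
    (hdisj : C ∩ (L : Set (EuclideanSpace ℝ (Fin 2))) = ∅) :
    convexHull ℝ C ∩ (L : Set (EuclideanSpace ℝ (Fin 2))) = ∅ := by
  classical
  -- L is nonempty
  have hLne : (L : Set (EuclideanSpace ℝ (Fin 2))).Nonempty := by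
    by_contra h
    rw [Set.not_nonempty_iff_eq_empty, AffineSubspace.coe_eq_bot_iff] at h
    rw [h, AffineSubspace.direction_bot, finrank_bot] at hL
    exact absurd hL (by norm_num)
  obtain ⟨p, hp⟩ := hLne
  set D := L.direction with hD
  -- D is not the whole space
  have hE : Module.finrank ℝ (EuclideanSpace ℝ (Fin 2)) = 2 := by
    simp [finrank_euclideanSpace]
  have hDne : D ≠ ⊤ := by
    intro h
    rw [h, finrank_top, hE] at hL
    norm_num at hL
  -- pick a nonzero vector orthogonal to D
  have hobot : Dᗮ ≠ ⊥ := by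
    intro h
    exact hDne (by simpa using congrArg (fun s => Submodule.orthogonal s) h)
  obtain ⟨v, hvD, hv0⟩ := Submodule.exists_mem_ne_zero_of_ne_bot hobot
  set f : EuclideanSpace ℝ (Fin 2) →L[ℝ] ℝ := innerSL ℝ v with hf
  have hfD : D ≤ LinearMap.ker (f : EuclideanSpace ℝ (Fin 2) →ₗ[ℝ] ℝ) := by
    intro d hd
    have h0 : ⟪v, d⟫ = 0 := by
      rw [real_inner_comm]; exact (Submodule.mem_orthogonal D v).mp hvD d hd
    rw [LinearMap.mem_ker]
    simp only [hf, ContinuousLinearMap.coe_coe, innerSL_apply_apply]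
    exact h0
  have hfker : D = LinearMap.ker (f : EuclideanSpace ℝ (Fin 2) →ₗ[ℝ] ℝ) := by
    refine Submodule.eq_of_le_of_finrank_eq hfD ?_
    have hrn := LinearMap.finrank_range_add_finrank_ker
      (f : EuclideanSpace ℝ (Fin 2) →ₗ[ℝ] ℝ)
    have hrange :
        Module.finrank ℝ (LinearMap.range (f : EuclideanSpace ℝ (Fin 2) →ₗ[ℝ] ℝ)) = 1 := by
      have htop : LinearMap.range (f : EuclideanSpace ℝ (Fin 2) →ₗ[ℝ] ℝ) = ⊤ := by
        refine LinearMap.range_eq_top.mpr ?_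
        intro c
        have hvv : ⟪v, v⟫ ≠ 0 := fun h => hv0 (inner_self_eq_zero.mp h)
        refine ⟨(c / ⟪v, v⟫) • v, ?_⟩
        simp only [hf, ContinuousLinearMap.coe_coe, innerSL_apply_apply, real_inner_smul_right]
        exact div_mul_cancel₀ c hvv
      rw [htop, finrank_top, Module.finrank_self]
    rw [hE, hrange] at hrn
    omega
  -- membership in L is f x = f p
  have hmemL : ∀ x : EuclideanSpace ℝ (Fin 2), x ∈ L ↔ f x = f p := by
    intro x
    rw [← AffineSubspace.vsub_right_mem_direction_iff_mem hp x, ← hD]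
    rw [hfker, LinearMap.mem_ker]
    have : (f : EuclideanSpace ℝ (Fin 2) →ₗ[ℝ] ℝ) (x -ᵥ p) = f x - f p := by
      have hxp : (x -ᵥ p : EuclideanSpace ℝ (Fin 2)) = x - p := rfl
      rw [hxp, map_sub]; rfl
    rw [this, sub_eq_zero]
  -- f has constant side relative to f p on C
  have hCne : ∀ x ∈ C, f x ≠ f p := by
    intro x hx hfx
    have hxL : x ∈ L := (hmemL x).mpr hfx
    have : x ∈ C ∩ (L : Set (EuclideanSpace ℝ (Fin 2))) := ⟨hx, hxL⟩
    rw [hdisj] at this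
    exact this
  have hsub : C ⊆ {x | f x < f p} ∪ {x | f p < f x} := by
    intro x hx
    rcases lt_or_gt_of_ne (hCne x hx) with h | h
    · exact Or.inl h
    · exact Or.inr h
  have hopen1 : IsOpen {x : EuclideanSpace ℝ (Fin 2) | f x < f p} :=
    isOpen_lt f.continuous continuous_const
  have hopen2 : IsOpen {x : EuclideanSpace ℝ (Fin 2) | f p < f x} :=
    isOpen_lt continuous_const f.continuous
  have hdisj2 : Disjoint {x : EuclideanSpace ℝ (Fin 2) | f x < f p}
      {x : EuclideanSpace ℝ (Fin 2) | f p < f x} := by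
    rw [Set.disjoint_left]
    intro a h1 h2
    simp only [Set.mem_setOf_eq] at h1 h2
    exact absurd (lt_trans h1 h2) (lt_irrefl _)
  have hside := hC.isPreconnected.subset_or_subset hopen1 hopen2 hdisj2 hsub
  have hconv1 : Convex ℝ {x : EuclideanSpace ℝ (Fin 2) | f x < f p} :=
    convex_halfSpace_lt ⟨fun a b => map_add f a b, fun c a => map_smul f c a⟩ _
  have hconv2 : Convex ℝ {x : EuclideanSpace ℝ (Fin 2) | f p < f x} :=
    convex_halfSpace_gt ⟨fun a b => map_add f a b, fun c a => map_smul f c a⟩ _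
  rw [Set.eq_empty_iff_forall_notMem]
  rintro x ⟨hxhull, hxL⟩
  have hfx : f x = f p := (hmemL x).mp hxL
  rcases hside with h | h
  · have := convexHull_min h hconv1 hxhull
    simp only [Set.mem_setOf_eq, hfx] at this
    exact lt_irrefl _ this
  · have := convexHull_min h hconv2 hxhull
    simp only [Set.mem_setOf_eq, hfx] at this
    exact lt_irrefl _ this
end

section
/- Let a, b ∈ ℝ² and let γ be a real number with π/2 ≤ γ ≤ π. Then the closed lens ℓ_γ(a,b) = {z ∈ ℝ² : ∠ a z b ≥ γ} ∪ segment ℝ a b is a convex set. (The lens is bounded by two circular arcs of equal radii joined at a and b, from every point of which the segment ab subtends angle γ; for γ ≥ π/2 it is the intersection of two closed disks and hence convex.) -/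
open EuclideanGeometry Real

lemma inner2 (x y : EuclideanSpace ℝ (Fin 2)) :
    inner ℝ x y = x 0 * y 0 + x 1 * y 1 := by
  simp [PiLp.inner_apply, Fin.sum_univ_two, RCLike.inner_apply, mul_comm]

lemma norm2 (x : EuclideanSpace ℝ (Fin 2)) : ‖x‖^2 = (x 0)^2 + (x 1)^2 := by
  rw [← real_inner_self_eq_norm_sq, inner2]; ring

lemma sqrt_trick {X Y : ℝ} (hX : 0 ≤ X) (h : Y^2 ≤ X^2) : Y ≤ X := by
  nlinarith [sq_nonneg (X - Y), sq_nonneg (X + Y)]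

lemma key1 (h c s p q A B : ℝ) (hc : c ≤ 0) (hs : 0 < s) (hcs : c^2 + s^2 = 1)
    (hA : 0 ≤ A) (hB : 0 ≤ B) (hA2 : A^2 = (p+h)^2 + q^2) (hB2 : B^2 = (p-h)^2 + q^2)
    (hK : p^2 + q^2 - h^2 ≤ c * (A * B)) :
    (p^2+q^2-h^2)*s ≤ 2*h*c*q ∧ (p^2+q^2-h^2)*s ≤ -(2*h*c*q) := by
  set K := p^2+q^2-h^2 with hKdef
  have hAB : 0 ≤ A * B := mul_nonneg hA hB
  have hcAB : c * (A*B) ≤ 0 := mul_nonpos_of_nonpos_of_nonneg hc hAB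
  have hK0 : K ≤ 0 := hK.trans hcAB
  have hABsq : (A*B)^2 = K^2 + 4*h^2*q^2 := by rw [mul_pow, hA2, hB2]; ring
  have h1 : c^2 * (A*B)^2 ≤ K^2 := by nlinarith
  have h2 : (2*h*c*q)^2 ≤ (K*s)^2 := by nlinarith
  have h3 : 0 ≤ -(K*s) := by nlinarith
  have h4 : |2*h*c*q| ≤ -(K*s) := by
    apply sqrt_trick h3; rw [sq_abs]; nlinarith
  rw [abs_le] at h4
  constructor <;> nlinarith [h4.1, h4.2]

lemma key2 (h c s p q A B : ℝ) (hc : c ≤ 0) (hs : 0 < s) (hcs : c^2 + s^2 = 1)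
    (hA : 0 ≤ A) (hB : 0 ≤ B) (hA2 : A^2 = (p+h)^2 + q^2) (hB2 : B^2 = (p-h)^2 + q^2)
    (h1 : (p^2+q^2-h^2)*s ≤ 2*h*c*q) (h2 : (p^2+q^2-h^2)*s ≤ -(2*h*c*q)) :
    p^2 + q^2 - h^2 ≤ c * (A * B) := by
  set K := p^2+q^2-h^2 with hKdef
  have hK0 : K ≤ 0 := by nlinarith
  have hABsq : (A*B)^2 = K^2 + 4*h^2*q^2 := by rw [mul_pow, hA2, hB2]; ring
  have hsq : (2*h*c*q)^2 ≤ (K*s)^2 := by nlinarith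
  have hKsq : (c*(A*B))^2 ≤ K^2 := by nlinarith
  have := sqrt_trick (X := -K) (Y := -(c*(A*B))) (by linarith) (by nlinarith)
  linarith

set_option maxHeartbeats 1000000 in
/-- For π/2 ≤ γ ≤ π, the closed lens
ℓ_γ(a,b) = {z : ∠ a z b ≥ γ} ∪ segment ℝ a b is convex. -/
theorem lens_convex (a b : EuclideanSpace ℝ (Fin 2)) (γ : ℝ)
    (hγ1 : π / 2 ≤ γ) (hγ2 : γ ≤ π) :
    Convex ℝ ({z | γ ≤ EuclideanGeometry.angle a z b} ∪ segment ℝ a b) := by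
  have hπ := Real.pi_pos
  rcases eq_or_ne a b with rfl | hab
  · -- degenerate: a = b
    have hset : ({z | γ ≤ EuclideanGeometry.angle a z a} ∪ segment ℝ a a) = {a} := by
      rw [segment_same]
      apply Set.Subset.antisymm
      · rintro z (hz | hz)
        · by_contra hne
          have hne' : a ≠ z := fun e => hne (by simp [e.symm])
          rw [Set.mem_setOf_eq, EuclideanGeometry.angle_self_of_ne hne'] at hz
          linarith
        · exact hz
      · intro z hz; exact Or.inr hz
    rw [hset]; exact convex_singleton a
  rcases eq_or_lt_of_le hγ2 with rfl | hγπ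
  · -- γ = π
    have hset : ({z | π ≤ EuclideanGeometry.angle a z b} ∪ segment ℝ a b)
        = segment ℝ a b := by
      apply Set.Subset.antisymm
      · rintro z (hz | hz)
        · have : EuclideanGeometry.angle a z b = π :=
            le_antisymm (EuclideanGeometry.angle_le_pi _ _ _) hz
          exact (EuclideanGeometry.angle_eq_pi_iff_sbtw.mp this).wbtw.mem_segment
        · exact hz
      · intro z hz; exact Or.inr hz
    rw [hset]; exact convex_segment a b
  -- main case : a ≠ b, π/2 ≤ γ < π
  obtain ⟨c, hcdef⟩ : ∃ x : ℝ, x = Real.cos γ := ⟨_, rfl⟩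
  obtain ⟨s, hsdef⟩ : ∃ x : ℝ, x = Real.sin γ := ⟨_, rfl⟩
  have hs : 0 < s := hsdef ▸ Real.sin_pos_of_pos_of_lt_pi (by linarith) hγπ
  have hc : c ≤ 0 := hcdef ▸ Real.cos_nonpos_of_pi_div_two_le_of_le hγ1 (by linarith)
  have hcs : c^2 + s^2 = 1 := by
    rw [hcdef, hsdef]; exact Real.cos_sq_add_sin_sq γ
  obtain ⟨H, hHdef⟩ : ∃ x : ℝ, x = ((b 0 - a 0)^2 + (b 1 - a 1)^2)/2 := ⟨_, rfl⟩
  have hH : 0 < H := by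
    have h01 : a 0 ≠ b 0 ∨ a 1 ≠ b 1 := by
      by_contra hcon
      push_neg at hcon
      apply hab
      ext i
      fin_cases i
      · exact hcon.1
      · exact hcon.2
    rw [hHdef]
    rcases h01 with h | h <;> · have := sub_ne_zero.mpr h.symm; positivity
  obtain ⟨k, hkdef⟩ : ∃ x : ℝ, x = -c/(2*s) := ⟨_, rfl⟩
  have hk : 0 ≤ k := hkdef ▸ div_nonneg (by linarith) (by linarith)
  have hck : c = -(2*k*s) := by rw [hkdef]; field_simp
  obtain ⟨R, hRdef⟩ : ∃ x : ℝ, x = Real.sqrt (H/2 + 2*k^2*H) := ⟨_, rfl⟩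
  have hR0 : 0 ≤ R := hRdef ▸ Real.sqrt_nonneg _
  have hR2 : R^2 = H/2 + 2*k^2*H := by rw [hRdef]; exact Real.sq_sqrt (by positivity)
  obtain ⟨D, hDdef⟩ : ∃ x : ℝ, x = Real.sqrt (2*H) := ⟨_, rfl⟩
  have hD2 : D^2 = 2*H := by rw [hDdef]; exact Real.sq_sqrt (by positivity)
  have hD0 : 0 ≤ D := hDdef ▸ Real.sqrt_nonneg _
  obtain ⟨c₁, hc₁⟩ : ∃ x : EuclideanSpace ℝ (Fin 2),
      x = WithLp.toLp 2 ![(a 0 + b 0)/2 + k*(a 1 - b 1), (a 1 + b 1)/2 + k*(b 0 - a 0)] := ⟨_, rfl⟩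
  obtain ⟨c₂, hc₂⟩ : ∃ x : EuclideanSpace ℝ (Fin 2),
      x = WithLp.toLp 2 ![(a 0 + b 0)/2 - k*(a 1 - b 1), (a 1 + b 1)/2 - k*(b 0 - a 0)] := ⟨_, rfl⟩
  suffices hset : ({z | γ ≤ EuclideanGeometry.angle a z b} ∪ segment ℝ a b)
      = Metric.closedBall c₁ R ∩ Metric.closedBall c₂ R by
    rw [hset]; exact (convex_closedBall _ _).inter (convex_closedBall _ _)
  ext z
  simp only [Set.mem_union, Set.mem_setOf_eq, Set.mem_inter_iff, Metric.mem_closedBall]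
  obtain ⟨p, hpdef⟩ : ∃ x : ℝ,
      x = (z 0 - (a 0 + b 0)/2)*(b 0 - a 0) + (z 1 - (a 1 + b 1)/2)*(b 1 - a 1) := ⟨_, rfl⟩
  obtain ⟨q, hqdef⟩ : ∃ x : ℝ,
      x = (z 0 - (a 0 + b 0)/2)*(a 1 - b 1) + (z 1 - (a 1 + b 1)/2)*(b 0 - a 0) := ⟨_, rfl⟩
  -- ball membership characterizations
  have hball1 : dist z c₁ ≤ R ↔ p^2 + q^2 - H^2 ≤ 4*k*H*q := by
    have hid1 : (R^2 - ((z 0 - ((a 0 + b 0)/2 + k*(a 1 - b 1)))^2 +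
        (z 1 - ((a 1 + b 1)/2 + k*(b 0 - a 0)))^2)) * (2*H)
        = 4*k*H*q - (p^2 + q^2 - H^2) := by
      rw [hR2, hpdef, hqdef, hHdef]; ring
    rw [dist_eq_norm, ← pow_le_pow_iff_left₀ (norm_nonneg _) hR0 two_ne_zero, norm2]
    have e1 : (z - c₁) 0 = z 0 - ((a 0 + b 0)/2 + k*(a 1 - b 1)) := by rw [hc₁]; rfl
    have e2 : (z - c₁) 1 = z 1 - ((a 1 + b 1)/2 + k*(b 0 - a 0)) := by rw [hc₁]; rfl
    rw [e1, e2]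
    constructor
    · intro hyp
      have h0 : 0 ≤ (R^2 - ((z 0 - ((a 0 + b 0)/2 + k*(a 1 - b 1)))^2 +
          (z 1 - ((a 1 + b 1)/2 + k*(b 0 - a 0)))^2)) * (2*H) :=
        mul_nonneg (by linarith) (by linarith)
      linarith [hid1 ▸ h0]
    · intro hyp
      have h0 : 0 ≤ (R^2 - ((z 0 - ((a 0 + b 0)/2 + k*(a 1 - b 1)))^2 +
          (z 1 - ((a 1 + b 1)/2 + k*(b 0 - a 0)))^2)) * (2*H) := by
        rw [hid1]; linarith
      have := (mul_nonneg_iff_of_pos_right (by linarith : (0:ℝ) < 2*H)).mp h0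
      linarith
  have hball2 : dist z c₂ ≤ R ↔ p^2 + q^2 - H^2 ≤ -(4*k*H*q) := by
    have hid1 : (R^2 - ((z 0 - ((a 0 + b 0)/2 - k*(a 1 - b 1)))^2 +
        (z 1 - ((a 1 + b 1)/2 - k*(b 0 - a 0)))^2)) * (2*H)
        = -(4*k*H*q) - (p^2 + q^2 - H^2) := by
      rw [hR2, hpdef, hqdef, hHdef]; ring
    rw [dist_eq_norm, ← pow_le_pow_iff_left₀ (norm_nonneg _) hR0 two_ne_zero, norm2]
    have e1 : (z - c₂) 0 = z 0 - ((a 0 + b 0)/2 - k*(a 1 - b 1)) := by rw [hc₂]; rfl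
    have e2 : (z - c₂) 1 = z 1 - ((a 1 + b 1)/2 - k*(b 0 - a 0)) := by rw [hc₂]; rfl
    rw [e1, e2]
    constructor
    · intro hyp
      have h0 : 0 ≤ (R^2 - ((z 0 - ((a 0 + b 0)/2 - k*(a 1 - b 1)))^2 +
          (z 1 - ((a 1 + b 1)/2 - k*(b 0 - a 0)))^2)) * (2*H) :=
        mul_nonneg (by linarith) (by linarith)
      linarith [hid1 ▸ h0]
    · intro hyp
      have h0 : 0 ≤ (R^2 - ((z 0 - ((a 0 + b 0)/2 - k*(a 1 - b 1)))^2 +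
          (z 1 - ((a 1 + b 1)/2 - k*(b 0 - a 0)))^2)) * (2*H) := by
        rw [hid1]; linarith
      have := (mul_nonneg_iff_of_pos_right (by linarith : (0:ℝ) < 2*H)).mp h0
      linarith
  -- A, B facts
  have hA2 : (‖z - a‖*D)^2 = (p + H)^2 + q^2 := by
    rw [mul_pow, hD2, norm2]
    have e1 : (z - a) 0 = z 0 - a 0 := rfl
    have e2 : (z - a) 1 = z 1 - a 1 := rfl
    rw [e1, e2, hpdef, hqdef, hHdef]; ring
  have hB2 : (‖z - b‖*D)^2 = (p - H)^2 + q^2 := by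
    rw [mul_pow, hD2, norm2]
    have e1 : (z - b) 0 = z 0 - b 0 := rfl
    have e2 : (z - b) 1 = z 1 - b 1 := rfl
    rw [e1, e2, hpdef, hqdef, hHdef]; ring
  have hA0 : 0 ≤ ‖z - a‖*D := mul_nonneg (norm_nonneg _) hD0
  have hB0 : 0 ≤ ‖z - b‖*D := mul_nonneg (norm_nonneg _) hD0
  -- angle characterization (z ≠ a, z ≠ b)
  have hangle : z ≠ a → z ≠ b →
      (γ ≤ EuclideanGeometry.angle a z b ↔
        p^2 + q^2 - H^2 ≤ c * ((‖z - a‖*D) * (‖z - b‖*D))) := by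
    intro hza hzb
    have hna : (0:ℝ) < ‖a - z‖ := by
      rw [norm_pos_iff, sub_ne_zero]; exact fun e => hza e.symm
    have hnb : (0:ℝ) < ‖b - z‖ := by
      rw [norm_pos_iff, sub_ne_zero]; exact fun e => hzb e.symm
    have hmem : EuclideanGeometry.angle a z b ∈ Set.Icc 0 π :=
      ⟨EuclideanGeometry.angle_nonneg _ _ _, EuclideanGeometry.angle_le_pi _ _ _⟩
    have hγmem : γ ∈ Set.Icc 0 π := ⟨by linarith, hγ2⟩
    rw [← Real.strictAntiOn_cos.le_iff_ge hmem hγmem]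
    have hcos : Real.cos (EuclideanGeometry.angle a z b)
        = inner ℝ (a - z) (b - z) / (‖a - z‖ * ‖b - z‖) := by
      rw [EuclideanGeometry.angle, InnerProductGeometry.cos_angle]; norm_num
    rw [hcos, div_le_iff₀ (by positivity), ← hcdef]
    have hKid : (inner ℝ (a - z) (b - z) : ℝ) * (2*H) = p^2 + q^2 - H^2 := by
      rw [inner2]
      have e1 : (a - z) 0 = a 0 - z 0 := rfl
      have e2 : (a - z) 1 = a 1 - z 1 := rfl
      have e3 : (b - z) 0 = b 0 - z 0 := rfl
      have e4 : (b - z) 1 = b 1 - z 1 := rfl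
      rw [e1, e2, e3, e4, hpdef, hqdef, hHdef]; ring
    have hABid : c * ((‖z - a‖*D) * (‖z - b‖*D)) = (c * (‖a - z‖ * ‖b - z‖)) * (2*H) := by
      rw [norm_sub_rev z a, norm_sub_rev z b, ← hD2]; ring
    rw [← hKid, hABid]
    exact (mul_le_mul_iff_of_pos_right (by positivity)).symm
  -- segment : forward
  have hsegpq : z ∈ segment ℝ a b → q = 0 ∧ |p| ≤ H := by
    rintro ⟨u, v, hu, hv, huv, hz⟩
    have hz0 : z 0 = u * a 0 + v * b 0 := by rw [← hz]; rfl
    have hz1 : z 1 = u * a 1 + v * b 1 := by rw [← hz]; rfl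
    have hv1 : v ≤ 1 := by linarith
    constructor
    · rw [hqdef, hz0, hz1]
      linear_combination (a 1 * b 0 - a 0 * b 1) * huv
    · have hpv : p = (2*v - 1)*H := by
        rw [hpdef, hz0, hz1, hHdef]
        linear_combination (a 0 * (b 0 - a 0) + a 1 * (b 1 - a 1)) * huv
      rw [hpv, abs_le]
      constructor <;> nlinarith
  -- segment : backward
  have hpqseg : q = 0 → |p| ≤ H → z ∈ segment ℝ a b := by
    intro hq0 hpH
    rw [hqdef] at hq0
    rw [abs_le] at hpH
    have h2H : (0:ℝ) < 2*H := by linarith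
    refine ⟨1/2 - p/(2*H), 1/2 + p/(2*H), ?_, ?_, by ring, ?_⟩
    · have : p/(2*H) ≤ 1/2 := by
        rw [div_le_iff₀ h2H]; nlinarith [hpH.2]
      linarith
    · have : -(1/2) ≤ p/(2*H) := by
        rw [le_div_iff₀ h2H]; nlinarith [hpH.1]
      linarith
    · ext i
      fin_cases i
      · show (1/2 - p/(2*H)) * a 0 + (1/2 + p/(2*H)) * b 0 = z 0
        apply mul_left_cancel₀ (ne_of_gt h2H)
        field_simp
        rw [hpdef, hHdef]
        linear_combination (b 1 - a 1) * hq0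
      · show (1/2 - p/(2*H)) * a 1 + (1/2 + p/(2*H)) * b 1 = z 1
        apply mul_left_cancel₀ (ne_of_gt h2H)
        field_simp
        rw [hpdef, hHdef]
        linear_combination (a 0 - b 0) * hq0
  -- segment implies in both balls
  have hsegball : z ∈ segment ℝ a b → dist z c₁ ≤ R ∧ dist z c₂ ≤ R := by
    intro hseg
    obtain ⟨hq0, hpH⟩ := hsegpq hseg
    rw [abs_le] at hpH
    have hp2 : p^2 ≤ H^2 := sq_le_sq' hpH.1 hpH.2
    constructor
    · rw [hball1, hq0]; linarith [hp2]
    · rw [hball2, hq0]; linarith [hp2]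
  constructor
  · rintro (hang | hseg)
    · by_cases hza : z = a
      · exact hsegball (hza ▸ left_mem_segment ℝ a b)
      by_cases hzb : z = b
      · exact hsegball (hzb ▸ right_mem_segment ℝ a b)
      have hK := (hangle hza hzb).mp hang
      obtain ⟨k1, k2⟩ := key1 H c s p q (‖z - a‖*D) (‖z - b‖*D) hc hs hcs hA0 hB0 hA2 hB2 hK
      constructor
      · rw [hball1]
        have e : (4*k*H*q)*s = -(2*H*c*q) := by rw [hck]; ring
        rw [← e] at k2
        exact le_of_mul_le_mul_right k2 hs
      · rw [hball2]
        have e : (-(4*k*H*q))*s = 2*H*c*q := by rw [hck]; ring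
        rw [← e] at k1
        exact le_of_mul_le_mul_right k1 hs
    · exact hsegball hseg
  · rintro ⟨h1m, h2m⟩
    rw [hball1] at h1m
    rw [hball2] at h2m
    by_cases hq0 : q = 0
    · right
      apply hpqseg hq0
      rw [hq0] at h1m
      have hp2 : p^2 ≤ H^2 := by linarith [h1m]
      have := sqrt_trick (X := H) (Y := |p|) hH.le (by rw [sq_abs]; linarith)
      linarith [abs_le.mp this, this]
    · left
      have hza : z ≠ a := by
        intro he
        apply hq0
        rw [hqdef, he]
        ring
      have hzb : z ≠ b := by
        intro he
        apply hq0
        rw [hqdef, he]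
        ring
      rw [hangle hza hzb]
      apply key2 H c s p q (‖z - a‖*D) (‖z - b‖*D) hc hs hcs hA0 hB0 hA2 hB2
      · have e : (-(4*k*H*q))*s = 2*H*c*q := by rw [hck]; ring
        calc (p^2+q^2-H^2)*s ≤ (-(4*k*H*q))*s := mul_le_mul_of_nonneg_right h2m hs.le
          _ = 2*H*c*q := e
      · have e : (4*k*H*q)*s = -(2*H*c*q) := by rw [hck]; ring
        calc (p^2+q^2-H^2)*s ≤ (4*k*H*q)*s := mul_le_mul_of_nonneg_right h1m hs.le
          _ = -(2*H*c*q) := e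
end

section
/- Let v > 1, let a, b ∈ ℝ², and let n ∈ ℝ² be a unit vector. Let D = {d ∈ ℝ : ∃ p g ∈ ℝ², ⟪p, n⟫ = d ∧ ⟪g, n⟫ = d ∧ dist a p + dist p g / v + dist g b ≤ dist a b} be the set of offsets d for which the line {z : ⟪z, n⟫ = d} is useful for the pair (a,b). Then there exist real numbers d₁ ≤ d₂ with D = Set.Icc d₁ d₂; in particular, in every direction the useful lines for (a,b) form a nonempty closed strip bounded by two parallel lines. -/
open Set

private lemma dist_combo {E : Type*} [NormedAddCommGroup E] [NormedSpace ℝ E]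
    (p₁ p₂ g₁ g₂ : E) {s t : ℝ} (hs : 0 ≤ s) (ht : 0 ≤ t) (hst : s + t = 1) :
    dist (s • p₁ + t • p₂) (s • g₁ + t • g₂) ≤ s * dist p₁ g₁ + t * dist p₂ g₂ := by
  rw [dist_eq_norm]
  have h : s • p₁ + t • p₂ - (s • g₁ + t • g₂) = s • (p₁ - g₁) + t • (p₂ - g₂) := by module
  rw [h]
  calc ‖s • (p₁ - g₁) + t • (p₂ - g₂)‖ ≤ ‖s • (p₁ - g₁)‖ + ‖t • (p₂ - g₂)‖ := norm_add_le _ _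
    _ = s * dist p₁ g₁ + t * dist p₂ g₂ := by
        rw [norm_smul, norm_smul, Real.norm_of_nonneg hs, Real.norm_of_nonneg ht,
          dist_eq_norm, dist_eq_norm]

/-- In every direction (given by a unit normal vector n), the set of
offsets d for which the line {z : ⟪z,n⟫ = d} is useful for the pair (a,b) is a
nonempty closed interval: the useful lines form a closed strip. -/
theorem useful_offsets_eq_Icc (v : ℝ) (hv : 1 < v)
    (a b : EuclideanSpace ℝ (Fin 2)) (n : EuclideanSpace ℝ (Fin 2)) (hn : ‖n‖ = 1) :
    ∃ d₁ d₂ : ℝ, d₁ ≤ d₂ ∧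
      {d : ℝ | ∃ p g : EuclideanSpace ℝ (Fin 2),
          (inner ℝ p n : ℝ) = d ∧ (inner ℝ g n : ℝ) = d ∧
          dist a p + dist p g / v + dist g b ≤ dist a b} = Set.Icc d₁ d₂ := by
  have hv0 : (0:ℝ) < v := lt_trans one_pos hv
  set D : Set ℝ := {d : ℝ | ∃ p g : EuclideanSpace ℝ (Fin 2),
      (inner ℝ p n : ℝ) = d ∧ (inner ℝ g n : ℝ) = d ∧
      dist a p + dist p g / v + dist g b ≤ dist a b} with hDdef
  -- nonempty
  have hmem : (inner ℝ a n : ℝ) ∈ D := ⟨a, a, rfl, rfl, by simp⟩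
  -- convex
  have hconv : Convex ℝ D := by
    rintro x ⟨p₁, g₁, hp₁, hg₁, hc₁⟩ y ⟨p₂, g₂, hp₂, hg₂, hc₂⟩ s t hs ht hst
    refine ⟨s • p₁ + t • p₂, s • g₁ + t • g₂, ?_, ?_, ?_⟩
    · rw [inner_add_left, real_inner_smul_left, real_inner_smul_left, hp₁, hp₂]; simp [smul_eq_mul]
    · rw [inner_add_left, real_inner_smul_left, real_inner_smul_left, hg₁, hg₂]; simp [smul_eq_mul]
    · have ha : s • a + t • a = a := by rw [← add_smul, hst, one_smul]
      have hb : s • b + t • b = b := by rw [← add_smul, hst, one_smul]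
      have h1 : dist a (s • p₁ + t • p₂) ≤ s * dist a p₁ + t * dist a p₂ := by
        have := dist_combo  a a p₁ p₂ hs ht hst
        rwa [ha] at this
      have h2 : dist (s • p₁ + t • p₂) (s • g₁ + t • g₂) ≤ s * dist p₁ g₁ + t * dist p₂ g₂ :=
        dist_combo p₁ p₂ g₁ g₂ hs ht hst
      have h3 : dist (s • g₁ + t • g₂) b ≤ s * dist g₁ b + t * dist g₂ b := by
        have := dist_combo  g₁ g₂ b b hs ht hst
        rwa [hb] at this
      have h2' : dist (s • p₁ + t • p₂) (s • g₁ + t • g₂) / v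
          ≤ s * (dist p₁ g₁ / v) + t * (dist p₂ g₂ / v) := by
        rw [← mul_div_assoc, ← mul_div_assoc, ← add_div]
        exact div_le_div_of_nonneg_right h2 hv0.le
      have hm1 : s * (dist a p₁ + dist p₁ g₁ / v + dist g₁ b) ≤ s * dist a b :=
        mul_le_mul_of_nonneg_left hc₁ hs
      have hm2 : t * (dist a p₂ + dist p₂ g₂ / v + dist g₂ b) ≤ t * dist a b :=
        mul_le_mul_of_nonneg_left hc₂ ht
      have hdd : s * dist a b + t * dist a b = dist a b := by rw [← add_mul, hst, one_mul]
      have e1 : s * (dist a p₁ + dist p₁ g₁ / v + dist g₁ b)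
          = s * dist a p₁ + s * (dist p₁ g₁ / v) + s * dist g₁ b := by ring
      have e2 : t * (dist a p₂ + dist p₂ g₂ / v + dist g₂ b)
          = t * dist a p₂ + t * (dist p₂ g₂ / v) + t * dist g₂ b := by ring
      rw [e1] at hm1; rw [e2] at hm2
      linarith
  -- compact: D is the image of a compact set
  set f : EuclideanSpace ℝ (Fin 2) × EuclideanSpace ℝ (Fin 2) → ℝ := fun pg => (inner ℝ pg.1 n : ℝ) with hf
  set K : Set (EuclideanSpace ℝ (Fin 2) × EuclideanSpace ℝ (Fin 2)) := {pg | (inner ℝ pg.1 n : ℝ) = (inner ℝ pg.2 n : ℝ) ∧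
      dist a pg.1 + dist pg.1 pg.2 / v + dist pg.2 b ≤ dist a b} with hK
  have hDK : D = f '' K := by
    ext d
    constructor
    · rintro ⟨p, g, hp, hg, hc⟩
      exact ⟨(p, g), ⟨hp.trans hg.symm, hc⟩, hp⟩
    · rintro ⟨⟨p, g⟩, ⟨heq, hc⟩, hd⟩
      exact ⟨p, g, hd, heq ▸ hd, hc⟩
  have hfc : Continuous f := (continuous_fst.inner continuous_const)
  have hKclosed : IsClosed K := by
    have h1 : IsClosed {pg : EuclideanSpace ℝ (Fin 2) × EuclideanSpace ℝ (Fin 2) | (inner ℝ pg.1 n : ℝ) = (inner ℝ pg.2 n : ℝ)} :=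
      isClosed_eq (continuous_fst.inner continuous_const)
        (continuous_snd.inner continuous_const)
    have h2 : IsClosed {pg : EuclideanSpace ℝ (Fin 2) × EuclideanSpace ℝ (Fin 2) |
        dist a pg.1 + dist pg.1 pg.2 / v + dist pg.2 b ≤ dist a b} := by
      apply isClosed_le _ continuous_const
      exact ((continuous_const.dist continuous_fst).add
        ((continuous_fst.dist continuous_snd).div_const v)).add
        (continuous_snd.dist continuous_const)
    exact h1.inter h2
  have hKsub : K ⊆ Metric.closedBall a (dist a b) ×ˢ Metric.closedBall b (dist a b) := by
    rintro ⟨p, g⟩ ⟨-, hc⟩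
    have h1 : 0 ≤ dist p g / v := div_nonneg dist_nonneg hv0.le
    constructor
    · simp only [Metric.mem_closedBall]
      have := dist_nonneg (x := g) (y := b)
      rw [dist_comm]
      linarith [dist_nonneg (x := a) (y := p)]
    · simp only [Metric.mem_closedBall]
      have := dist_nonneg (x := a) (y := p)
      linarith
  have hKcpt : IsCompact K :=
    ((isCompact_closedBall a (dist a b)).prod (isCompact_closedBall b (dist a b))).of_isClosed_subset
      hKclosed hKsub
  have hDcpt : IsCompact D := hDK ▸ hKcpt.image hfc
  have hDconn : IsConnected D := hconv.isConnected ⟨_, hmem⟩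
  refine ⟨sInf D, sSup D, ?_, eq_Icc_of_connected_compact hDconn hDcpt⟩
  exact le_trans (csInf_le hDcpt.bddBelow hmem) (le_csSup hDcpt.bddAbove hmem)
end

section
/- Let S ⊆ ℝ² be a finite set, let z ∈ ℝ² with z ∉ convexHull ℝ S, and let a, b ∈ convexHull ℝ S. Then there exist p, q ∈ S such that ∠ p z q ≥ ∠ a z b. (The maximum aperture angle under which a point outside the convex hull sees the hull is attained at a pair of points of S; this is the key step in the proof of Theorem 3 on computing the useful region.) -/
open EuclideanGeometry

open scoped RealInnerProductSpace

private lemma sqrt_aux (c s : ℝ) (hc : 0 < c) :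
    Real.sqrt (c ^ 2 + s ^ 2) = c * Real.sqrt (1 + (s / c) ^ 2) := by
  rw [← Real.sqrt_sq hc.le, ← Real.sqrt_mul (by positivity)]
  congr 1
  field_simp
  exact Real.sq_sqrt (by positivity)

private lemma arccos_aux (c1 s1 c2 s2 : ℝ) (h1 : 0 < c1) (h2 : 0 < c2) :
    Real.arccos ((c1 * c2 + s1 * s2) /
        (Real.sqrt (c1 ^ 2 + s1 ^ 2) * Real.sqrt (c2 ^ 2 + s2 ^ 2)))
      = |Real.arctan (s1 / c1) - Real.arctan (s2 / c2)| := by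
  set t1 := s1 / c1 with ht1
  set t2 := s2 / c2 with ht2
  have hcos : Real.cos (Real.arctan t1 - Real.arctan t2)
      = (c1 * c2 + s1 * s2) /
        (Real.sqrt (c1 ^ 2 + s1 ^ 2) * Real.sqrt (c2 ^ 2 + s2 ^ 2)) := by
    rw [Real.cos_sub, Real.cos_arctan, Real.cos_arctan, Real.sin_arctan, Real.sin_arctan,
      sqrt_aux c1 s1 h1, sqrt_aux c2 s2 h2, ← ht1, ← ht2]
    have hs1 : (0:ℝ) < Real.sqrt (1 + t1 ^ 2) := by positivity
    have hs2 : (0:ℝ) < Real.sqrt (1 + t2 ^ 2) := by positivity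
    have hnum : c1 * c2 + s1 * s2 = c1 * c2 * (1 + t1 * t2) := by
      rw [ht1, ht2]; field_simp
    rw [hnum]
    field_simp
  have hb1 := Real.arctan_lt_pi_div_two t1
  have hb1' := Real.neg_pi_div_two_lt_arctan t1
  have hb2 := Real.arctan_lt_pi_div_two t2
  have hb2' := Real.neg_pi_div_two_lt_arctan t2
  have habs : |Real.arctan t1 - Real.arctan t2| ≤ Real.pi := by
    rw [abs_sub_le_iff]
    constructor <;> linarith
  rw [← hcos, ← Real.cos_abs, Real.arccos_cos (abs_nonneg _) habs]

private lemma inner_two (x y : EuclideanSpace ℝ (Fin 2)) :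
    ⟪x, y⟫ = x 0 * y 0 + x 1 * y 1 := by
  simp [PiLp.inner_apply, Fin.sum_univ_two, RCLike.inner_apply]
  ring

/-- Angle between two vectors in the open half plane `⟪n, ·⟫ > 0` equals the
difference of their "arctan coordinates". -/
private lemma angle_eq_abs_sub (n w1 w2 : EuclideanSpace ℝ (Fin 2))
    (e : EuclideanSpace ℝ (Fin 2)) (he0 : e 0 = -(n 1)) (he1 : e 1 = n 0)
    (h1 : 0 < ⟪n, w1⟫) (h2 : 0 < ⟪n, w2⟫) :
    InnerProductGeometry.angle w1 w2
      = |Real.arctan (⟪e, w1⟫ / ⟪n, w1⟫) - Real.arctan (⟪e, w2⟫ / ⟪n, w2⟫)| := by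
  have hn : (0:ℝ) < Real.sqrt (n 0 ^ 2 + n 1 ^ 2) := by
    rcases lt_or_eq_of_le (Real.sqrt_nonneg (n 0 ^ 2 + n 1 ^ 2)) with h | h
    · exact h
    · exfalso
      have : n 0 ^ 2 + n 1 ^ 2 = 0 := by
        have := Real.sqrt_eq_zero (by positivity) |>.mp h.symm
        exact this
      have hn0 : n 0 = 0 := by nlinarith [sq_nonneg (n 0), sq_nonneg (n 1)]
      have hn1 : n 1 = 0 := by nlinarith [sq_nonneg (n 0), sq_nonneg (n 1)]
      rw [inner_two, hn0, hn1] at h1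
      simp at h1
  set N := Real.sqrt (n 0 ^ 2 + n 1 ^ 2) with hN
  have hN2 : N ^ 2 = n 0 ^ 2 + n 1 ^ 2 := Real.sq_sqrt (by positivity)
  have hnorm : ∀ w : EuclideanSpace ℝ (Fin 2),
      N * ‖w‖ = Real.sqrt (⟪n, w⟫ ^ 2 + ⟪e, w⟫ ^ 2) := by
    intro w
    have hw : ‖w‖ = Real.sqrt (w 0 ^ 2 + w 1 ^ 2) := by
      rw [← Real.sqrt_sq (norm_nonneg w), ← real_inner_self_eq_norm_sq, inner_two]
      ring_nf
    rw [hw, hN, ← Real.sqrt_mul (by positivity)]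
    congr 1
    rw [inner_two, inner_two, he0, he1]
    ring
  have hinner : ⟪w1, w2⟫ * N ^ 2 = ⟪n, w1⟫ * ⟪n, w2⟫ + ⟪e, w1⟫ * ⟪e, w2⟫ := by
    rw [hN2, inner_two, inner_two, inner_two, inner_two, inner_two, he0, he1]
    ring
  have key : ⟪w1, w2⟫ / (‖w1‖ * ‖w2‖)
      = (⟪n, w1⟫ * ⟪n, w2⟫ + ⟪e, w1⟫ * ⟪e, w2⟫) /
        (Real.sqrt (⟪n, w1⟫ ^ 2 + ⟪e, w1⟫ ^ 2) * Real.sqrt (⟪n, w2⟫ ^ 2 + ⟪e, w2⟫ ^ 2)) := by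
    rw [← hnorm, ← hnorm, ← hinner]
    rcases eq_or_ne ‖w1‖ 0 with hw1 | hw1
    · simp [hw1]
    rcases eq_or_ne ‖w2‖ 0 with hw2 | hw2
    · simp [hw2]
    field_simp
  rw [InnerProductGeometry.angle, key]
  exact arccos_aux _ _ _ _ h1 h2

/-- The maximum aperture angle under which a point z outside the convex
hull of a finite set S sees the hull is attained at a pair of points of S. -/
theorem angle_le_angle_of_mem_convexHull
    (S : Set (EuclideanSpace ℝ (Fin 2))) (hS : S.Finite)
    (z : EuclideanSpace ℝ (Fin 2)) (hz : z ∉ convexHull ℝ S)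
    (a b : EuclideanSpace ℝ (Fin 2))
    (ha : a ∈ convexHull ℝ S) (hb : b ∈ convexHull ℝ S) :
    ∃ p ∈ S, ∃ q ∈ S,
      EuclideanGeometry.angle a z b ≤ EuclideanGeometry.angle p z q := by
  have hSne : S.Nonempty := by
    rcases S.eq_empty_or_nonempty with h | h
    · rw [h, convexHull_empty] at ha; exact absurd ha (Set.notMem_empty a)
    · exact h
  -- separating hyperplane
  obtain ⟨f, u, hfz, hfS⟩ :=
    geometric_hahn_banach_point_closed (convex_convexHull ℝ S)
      (hS.isCompact_convexHull (𝕜 := ℝ)).isClosed hz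
  set n : EuclideanSpace ℝ (Fin 2) :=
    (InnerProductSpace.toDual ℝ (EuclideanSpace ℝ (Fin 2))).symm f with hn
  have hfn : ∀ x, ⟪n, x⟫ = f x := fun x => InnerProductSpace.toDual_symm_apply
  -- positivity of the "c coordinate" on the hull
  set c : EuclideanSpace ℝ (Fin 2) → ℝ := fun x => ⟪n, x - z⟫ with hc
  have hcpos : ∀ x ∈ convexHull ℝ S, 0 < c x := by
    intro x hx
    have : ⟪n, x - z⟫ = f x - f z := by rw [inner_sub_right, hfn, hfn]
    rw [hc]; dsimp only; rw [this]
    have := hfS x hx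
    linarith
  -- the rotated vector e
  set e : EuclideanSpace ℝ (Fin 2) := !₂[-(n 1), n 0] with he
  have he0 : e 0 = -(n 1) := rfl
  have he1 : e 1 = n 0 := rfl
  -- arctan coordinate
  set t : EuclideanSpace ℝ (Fin 2) → ℝ := fun x => ⟪e, x - z⟫ / c x with ht
  -- minimum and maximum of t on S
  obtain ⟨p, hpS, hp⟩ := Set.exists_min_image S t hS hSne
  obtain ⟨q, hqS, hq⟩ := Set.exists_max_image S t hS hSne
  refine ⟨p, hpS, q, hqS, ?_⟩
  have hpc := hcpos p (subset_convexHull ℝ S hpS)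
  have hqc := hcpos q (subset_convexHull ℝ S hqS)
  have hac := hcpos a ha
  have hbc := hcpos b hb
  -- membership of the hull in halfspaces
  have hhalf_le : ∀ x ∈ convexHull ℝ S, ⟪e, x - z⟫ ≤ t q * c x := by
    have hconv : Convex ℝ {x : EuclideanSpace ℝ (Fin 2) |
        (fun y => ⟪e, y⟫ - t q * ⟪n, y⟫) x ≤ ⟪e, z⟫ - t q * ⟪n, z⟫} := by
      apply convex_halfSpace_le
      constructor
      · intro x y; rw [inner_add_right, inner_add_right]; ring
      · intro r x; rw [inner_smul_right, inner_smul_right]; dsimp; ring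
    have hsub : S ⊆ {x : EuclideanSpace ℝ (Fin 2) |
        (fun y => ⟪e, y⟫ - t q * ⟪n, y⟫) x ≤ ⟪e, z⟫ - t q * ⟪n, z⟫} := by
      intro s hs
      have hsc := hcpos s (subset_convexHull ℝ S hs)
      have hts : t s ≤ t q := hq s hs
      have : ⟪e, s - z⟫ ≤ t q * c s := by
        have : t s * c s ≤ t q * c s := by
          exact mul_le_mul_of_nonneg_right hts hsc.le
        rwa [ht, div_mul_cancel₀ _ (ne_of_gt hsc)] at this
      simp only [Set.mem_setOf_eq]
      rw [inner_sub_right] at this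
      rw [hc] at this
      simp only at this
      rw [inner_sub_right] at this
      linarith
    intro x hx
    have := convexHull_min hsub hconv hx
    simp only [Set.mem_setOf_eq] at this
    rw [inner_sub_right, hc]
    simp only
    rw [inner_sub_right]
    linarith
  have hhalf_ge : ∀ x ∈ convexHull ℝ S, t p * c x ≤ ⟪e, x - z⟫ := by
    have hconv : Convex ℝ {x : EuclideanSpace ℝ (Fin 2) |
        (fun y => t p * ⟪n, y⟫ - ⟪e, y⟫) x ≤ t p * ⟪n, z⟫ - ⟪e, z⟫} := by
      apply convex_halfSpace_le
      constructor
      · intro x y; rw [inner_add_right, inner_add_right]; ring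
      · intro r x; rw [inner_smul_right, inner_smul_right]; dsimp; ring
    have hsub : S ⊆ {x : EuclideanSpace ℝ (Fin 2) |
        (fun y => t p * ⟪n, y⟫ - ⟪e, y⟫) x ≤ t p * ⟪n, z⟫ - ⟪e, z⟫} := by
      intro s hs
      have hsc := hcpos s (subset_convexHull ℝ S hs)
      have hts : t p ≤ t s := hp s hs
      have : t p * c s ≤ ⟪e, s - z⟫ := by
        have : t p * c s ≤ t s * c s :=
          mul_le_mul_of_nonneg_right hts hsc.le
        rwa [ht, div_mul_cancel₀ _ (ne_of_gt hsc)] at this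
      simp only [Set.mem_setOf_eq]
      rw [inner_sub_right] at this
      rw [hc] at this
      simp only at this
      rw [inner_sub_right] at this
      linarith
    intro x hx
    have := convexHull_min hsub hconv hx
    simp only [Set.mem_setOf_eq] at this
    rw [inner_sub_right, hc]
    simp only
    rw [inner_sub_right]
    linarith
  -- bounds on t a and t b
  have hta_le : t a ≤ t q := by
    rw [ht]; dsimp only; rw [div_le_iff₀ hac]; exact hhalf_le a ha
  have hta_ge : t p ≤ t a := by
    rw [ht]; dsimp only; rw [le_div_iff₀ hac]; exact hhalf_ge a ha
  have htb_le : t b ≤ t q := by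
    rw [ht]; dsimp only; rw [div_le_iff₀ hbc]; exact hhalf_le b hb
  have htb_ge : t p ≤ t b := by
    rw [ht]; dsimp only; rw [le_div_iff₀ hbc]; exact hhalf_ge b hb
  -- compute the angles
  have hang : ∀ x y : EuclideanSpace ℝ (Fin 2), 0 < c x → 0 < c y →
      EuclideanGeometry.angle x z y = |Real.arctan (t x) - Real.arctan (t y)| := by
    intro x y hx hy
    have : EuclideanGeometry.angle x z y = InnerProductGeometry.angle (x - z) (y - z) := by
      simp [EuclideanGeometry.angle, vsub_eq_sub]
    rw [this, angle_eq_abs_sub n (x - z) (y - z) e he0 he1 hx hy]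
  rw [hang a b hac hbc, hang p q hpc hqc]
  have m1 : Real.arctan (t p) ≤ Real.arctan (t a) := Real.arctan_strictMono.monotone hta_ge
  have m2 : Real.arctan (t a) ≤ Real.arctan (t q) := Real.arctan_strictMono.monotone hta_le
  have m3 : Real.arctan (t p) ≤ Real.arctan (t b) := Real.arctan_strictMono.monotone htb_ge
  have m4 : Real.arctan (t b) ≤ Real.arctan (t q) := Real.arctan_strictMono.monotone htb_le
  rw [abs_sub_comm (Real.arctan (t p))]
  rw [abs_of_nonneg (by linarith : (0:ℝ) ≤ Real.arctan (t q) - Real.arctan (t p))]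
  rw [abs_sub_le_iff]
  constructor <;> linarith
end

section
/- Let K ⊆ ℝ² be a convex set, let c ∈ K, and let γ ∈ ℝ. Then the set K ∪ {z ∈ ℝ² : ∃ a b, a ∈ K ∧ b ∈ K ∧ ∠ a z b ≥ γ} is star-shaped with respect to c (StarConvex ℝ c). (The region enclosed by the γ-cloud of a convex body — the set of points seeing the body with aperture angle at least γ — is star-shaped from any point of the body; this claim is used in the proof of Theorem 3.) -/
open EuclideanGeometry Real

section Aux

variable {V : Type*} {P : Type*} [NormedAddCommGroup V] [InnerProductSpace ℝ V]
  [MetricSpace P] [NormedAddTorsor V P]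

/-- Exterior angle inequality: moving from `z` towards `q` along the segment can only
increase the (unsigned) angle subtended at the moving point by `q` and a fixed point `d`. -/
lemma aux_angle_le_of_sbtw {z x q d : P} (h : Sbtw ℝ z x q) (hdz : d ≠ z) (hdx : d ≠ x) :
    ∠ d z q ≤ ∠ d x q := by
  have hπ : ∠ z x q = π := h.angle₁₂₃_eq_pi
  have h2 : ∠ d x z + ∠ d x q = π :=
    EuclideanGeometry.angle_add_angle_eq_pi_of_angle_eq_pi d hπ
  have h3 : ∠ d z x = ∠ d z q := EuclideanGeometry.angle_eq_angle_of_angle_eq_pi d hπ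
  have h4 : ∠ d x z + ∠ x z d + ∠ z d x = π :=
    EuclideanGeometry.angle_add_angle_add_angle_eq_pi z hdx.symm
  have h5 : ∠ x z d = ∠ d z x := EuclideanGeometry.angle_comm x z d
  have h6 : 0 ≤ ∠ z d x := EuclideanGeometry.angle_nonneg z d x
  linarith

/-- Adding a nonnegative multiple of `u` to a nonnegative multiple of `w` can only decrease
the angle with `u`. -/
lemma aux_angle_combo_le {u w : V} (hu : u ≠ 0) (hw : w ≠ 0) {p q : ℝ}
    (hp : 0 ≤ p) (hq : 0 ≤ q) (hv : p • u + q • w ≠ 0) :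
    InnerProductGeometry.angle u (p • u + q • w) ≤ InnerProductGeometry.angle u w := by
  have hU : (0:ℝ) < ‖u‖ := norm_pos_iff.mpr hu
  have hW : (0:ℝ) < ‖w‖ := norm_pos_iff.mpr hw
  have hV : (0:ℝ) < ‖p • u + q • w‖ := norm_pos_iff.mpr hv
  have hiv : (inner ℝ u (p • u + q • w) : ℝ) = p * (‖u‖ * ‖u‖) + q * inner ℝ u w := by
    rw [inner_add_right, real_inner_smul_right, real_inner_smul_right,
      real_inner_self_eq_norm_mul_norm]
  have htr1 : ‖p • u + q • w‖ ≤ p * ‖u‖ + q * ‖w‖ := by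
    calc ‖p • u + q • w‖ ≤ ‖p • u‖ + ‖q • w‖ := norm_add_le _ _
      _ = p * ‖u‖ + q * ‖w‖ := by
          rw [norm_smul, norm_smul, Real.norm_of_nonneg hp, Real.norm_of_nonneg hq]
  have htr2 : q * ‖w‖ ≤ ‖p • u + q • w‖ + p * ‖u‖ := by
    have h0 : ‖q • w‖ ≤ ‖p • u + q • w‖ + ‖p • u‖ := by
      conv_lhs => rw [← add_sub_cancel_left (p • u) (q • w)]
      exact norm_sub_le _ _
    rwa [norm_smul, norm_smul, Real.norm_of_nonneg hp, Real.norm_of_nonneg hq] at h0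
  have hCS : |(inner ℝ u w : ℝ)| ≤ ‖u‖ * ‖w‖ := abs_real_inner_le_norm u w
  obtain ⟨hCS1, hCS2⟩ := abs_le.mp hCS
  have mono : (inner ℝ u w : ℝ) / (‖u‖ * ‖w‖) ≤
      (inner ℝ u (p • u + q • w) : ℝ) / (‖u‖ * ‖p • u + q • w‖) := by
    rw [div_le_div_iff₀ (by positivity) (by positivity), hiv]
    rcases le_or_gt 0 ((inner ℝ u w : ℝ)) with hI | hI
    · have key := mul_le_mul_of_nonneg_left htr1 (mul_nonneg hI hU.le)
      nlinarith [mul_nonneg (sub_nonneg.mpr hCS2) (mul_nonneg hp (mul_nonneg hU.le hU.le)),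
        mul_nonneg (mul_nonneg hq hI) hW.le]
    · have ha : (inner ℝ u w : ℝ) * ‖u‖ ≤ 0 := by nlinarith
      have key : ((inner ℝ u w : ℝ) * ‖u‖) * ‖p • u + q • w‖ ≤
          ((inner ℝ u w : ℝ) * ‖u‖) * (q * ‖w‖ - p * ‖u‖) :=
        mul_le_mul_of_nonpos_left (by linarith) ha
      nlinarith [mul_nonneg (by linarith : (0:ℝ) ≤ ‖u‖ * ‖w‖ + (inner ℝ u w : ℝ))
        (mul_nonneg (mul_nonneg hp hU.le) hW.le)]
  show Real.arccos _ ≤ Real.arccos _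
  rw [Real.arccos, Real.arccos]
  linarith [Real.monotone_arcsin mono]

lemma aux_sign_pos_bounds {θ : Real.Angle} (h : θ.sign = 1) : 0 < θ.toReal ∧ θ.toReal < π := by
  have h0 : 0 ≤ θ.toReal := Real.Angle.toReal_nonneg_iff_sign_nonneg.mpr (by rw [h]; decide)
  have hne0 : θ.toReal ≠ 0 := by
    intro hh
    rw [Real.Angle.toReal_eq_zero_iff] at hh
    rw [hh, Real.Angle.sign_zero] at h
    exact absurd h (by decide)
  have hneπ : θ.toReal ≠ π := by
    intro hh
    rw [Real.Angle.toReal_eq_pi_iff] at hh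
    rw [hh, Real.Angle.sign_coe_pi] at h
    exact absurd h (by decide)
  exact ⟨h0.lt_of_ne (Ne.symm hne0), (Real.Angle.toReal_le_pi θ).lt_of_ne hneπ⟩

lemma aux_sign_neg_bounds {θ : Real.Angle} (h : θ.sign = -1) : -π < θ.toReal ∧ θ.toReal < 0 :=
  ⟨Real.Angle.neg_pi_lt_toReal θ, Real.Angle.toReal_neg_iff_sign_neg.mpr h⟩

variable [Fact (Module.finrank ℝ V = 2)] [Module.Oriented ℝ V (Fin 2)]

/-- Additivity of unsigned angles at a point subtended by a segment split at an
intermediate point. -/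
lemma aux_angle_add_of_wbtw {a q b p : P} (h : Wbtw ℝ a q b) (hpa : p ≠ a) (hpq : p ≠ q)
    (hpb : p ≠ b) : ∠ a p q + ∠ q p b = ∠ a p b := by
  by_cases hqa : q = a
  · subst hqa
    rw [EuclideanGeometry.angle_self_of_ne hpq.symm, zero_add]
  by_cases hqb : q = b
  · subst hqb
    rw [EuclideanGeometry.angle_self_of_ne hpq.symm, add_zero]
  have hsbtw : Sbtw ℝ a q b := ⟨h, hqa, hqb⟩
  have hadd : ∡ a p q + ∡ q p b = ∡ a p b :=
    EuclideanGeometry.oangle_add hpa.symm hpq.symm hpb.symm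
  have hs12 : (∡ a p q).sign = (∡ q p b).sign := hsbtw.oangle_sign_eq p
  have hs13 : (∡ a p q).sign = (∡ a p b).sign := hsbtw.oangle_sign_eq_left p
  have e1 : ∠ a p q = |(∡ a p q).toReal| :=
    EuclideanGeometry.angle_eq_abs_oangle_toReal hpa.symm hpq.symm
  have e2 : ∠ q p b = |(∡ q p b).toReal| :=
    EuclideanGeometry.angle_eq_abs_oangle_toReal hpq.symm hpb.symm
  have e3 : ∠ a p b = |(∡ a p b).toReal| :=
    EuclideanGeometry.angle_eq_abs_oangle_toReal hpa.symm hpb.symm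
  cases hsgn : (∡ a p q).sign with
  | zero =>
    have h1 : ∡ a p q = 0 ∨ ∡ a p q = π := Real.Angle.sign_eq_zero_iff.mp hsgn
    have h2 : ∡ q p b = 0 ∨ ∡ q p b = π :=
      Real.Angle.sign_eq_zero_iff.mp (hs12.symm.trans hsgn)
    rcases h1 with h1 | h1 <;> rcases h2 with h2 | h2
    · have h3 : ∡ a p b = 0 := by rw [← hadd, h1, h2, add_zero]
      rw [e1, e2, e3, h1, h2, h3, Real.Angle.toReal_zero]
      simp
    · have h3 : ∡ a p b = π := by rw [← hadd, h1, h2, zero_add]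
      rw [e1, e2, e3, h1, h2, h3, Real.Angle.toReal_zero]
      simp
    · have h3 : ∡ a p b = π := by rw [← hadd, h1, h2, add_zero]
      rw [e1, e2, e3, h1, h2, h3, Real.Angle.toReal_zero]
      simp
    · exfalso
      have hapq : Sbtw ℝ a p q := EuclideanGeometry.oangle_eq_pi_iff_sbtw.mp h1
      have hqpb : Sbtw ℝ q p b := EuclideanGeometry.oangle_eq_pi_iff_sbtw.mp h2
      have hapb : Sbtw ℝ a p b := hsbtw.trans_left hapq
      have h3 : ∡ a p b = 0 := by
        rw [← hadd, h1, h2, Real.Angle.coe_pi_add_coe_pi]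
      rcases EuclideanGeometry.oangle_eq_zero_iff_wbtw.mp h3 with hwb | hwb
      · exact hapb.not_swap_left hwb
      · exact hapb.not_swap_right hwb.symm
  | pos =>
    have hsgn1 : (∡ a p q).sign = 1 := by rw [hsgn]; rfl
    obtain ⟨p1, p1'⟩ := aux_sign_pos_bounds hsgn1
    obtain ⟨p2, p2'⟩ := aux_sign_pos_bounds (hs12.symm.trans hsgn1)
    obtain ⟨p3, _⟩ := aux_sign_pos_bounds (hs13.symm.trans hsgn1)
    have hco : ∡ a p b = ↑((∡ a p q).toReal + (∡ q p b).toReal) := by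
      rw [Real.Angle.coe_add, Real.Angle.coe_toReal, Real.Angle.coe_toReal, hadd]
    have hsum_le : (∡ a p q).toReal + (∡ q p b).toReal ≤ π := by
      by_contra hgt
      push_neg at hgt
      have hshift : (((∡ a p q).toReal + (∡ q p b).toReal : ℝ) : Real.Angle) =
          (((∡ a p q).toReal + (∡ q p b).toReal - 2 * π : ℝ) : Real.Angle) := by
        rw [Real.Angle.angle_eq_iff_two_pi_dvd_sub]
        exact ⟨1, by ring⟩
      have hval : (∡ a p b).toReal = (∡ a p q).toReal + (∡ q p b).toReal - 2 * π := by
        rw [hco, hshift]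
        exact Real.Angle.toReal_coe_eq_self_iff.mpr ⟨by linarith [Real.pi_pos], by linarith⟩
      linarith
    have h3v : (∡ a p b).toReal = (∡ a p q).toReal + (∡ q p b).toReal := by
      rw [hco]
      exact Real.Angle.toReal_coe_eq_self_iff.mpr ⟨by linarith, hsum_le⟩
    rw [e1, e2, e3, h3v, abs_of_pos p1, abs_of_pos p2, abs_of_pos (by linarith)]
  | neg =>
    have hsgn1 : (∡ a p q).sign = -1 := by rw [hsgn]; rfl
    obtain ⟨n1, n1'⟩ := aux_sign_neg_bounds hsgn1
    obtain ⟨n2, n2'⟩ := aux_sign_neg_bounds (hs12.symm.trans hsgn1)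
    obtain ⟨_, n3'⟩ := aux_sign_neg_bounds (hs13.symm.trans hsgn1)
    have hco : ∡ a p b = ↑((∡ a p q).toReal + (∡ q p b).toReal) := by
      rw [Real.Angle.coe_add, Real.Angle.coe_toReal, Real.Angle.coe_toReal, hadd]
    have hsum_gt : -π < (∡ a p q).toReal + (∡ q p b).toReal := by
      by_contra hge
      push_neg at hge
      have hshift : (((∡ a p q).toReal + (∡ q p b).toReal : ℝ) : Real.Angle) =
          (((∡ a p q).toReal + (∡ q p b).toReal + 2 * π : ℝ) : Real.Angle) := by
        rw [Real.Angle.angle_eq_iff_two_pi_dvd_sub]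
        exact ⟨-1, by ring⟩
      have hval : (∡ a p b).toReal = (∡ a p q).toReal + (∡ q p b).toReal + 2 * π := by
        rw [hco, hshift]
        exact Real.Angle.toReal_coe_eq_self_iff.mpr ⟨by linarith [Real.pi_pos], by linarith⟩
      linarith [Real.pi_pos]
    have h3v : (∡ a p b).toReal = (∡ a p q).toReal + (∡ q p b).toReal := by
      rw [hco]
      exact Real.Angle.toReal_coe_eq_self_iff.mpr ⟨hsum_gt, by linarith [Real.pi_pos]⟩
    rw [e1, e2, e3, h3v, abs_of_neg n1', abs_of_neg n2', abs_of_neg (by linarith)]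
    ring

end Aux

set_option maxHeartbeats 1000000 in
/-- The region enclosed by the γ-cloud of a convex body K (the set of
points seeing K with aperture angle at least γ, together with K itself) is
star-shaped from any point c of K. -/
theorem cloud_starShaped (K : Set (EuclideanSpace ℝ (Fin 2))) (hK : Convex ℝ K)
    (c : EuclideanSpace ℝ (Fin 2)) (hc : c ∈ K) (γ : ℝ) :
    StarConvex ℝ c
      (K ∪ {z | ∃ a b, a ∈ K ∧ b ∈ K ∧ γ ≤ EuclideanGeometry.angle a z b}) := by
  haveI : Fact (Module.finrank ℝ (EuclideanSpace ℝ (Fin 2)) = 2) :=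
    ⟨finrank_euclideanSpace_fin⟩
  haveI : Module.Oriented ℝ (EuclideanSpace ℝ (Fin 2)) (Fin 2) :=
    ⟨Module.Basis.orientation (EuclideanSpace.basisFun (Fin 2) ℝ).toBasis⟩
  intro y hy s t hs ht hst
  by_cases hyK : y ∈ K
  · exact Or.inl (hK hc hyK hs ht hst)
  rcases hy with hy | hy
  · exact absurd hy hyK
  obtain ⟨a, b, ha, hb, hab⟩ := hy
  by_cases hxK : s • c + t • y ∈ K
  · exact Or.inl hxK
  rcases hs.eq_or_lt with hs0 | hs0
  · refine Or.inr ?_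
    have ht1 : t = 1 := by linarith
    rw [← hs0, ht1, zero_smul, one_smul, zero_add]
    exact ⟨a, b, ha, hb, hab⟩
  rcases ht.eq_or_lt with ht0 | ht0
  · exfalso
    apply hxK
    have hs1 : s = 1 := by linarith
    rw [← ht0, hs1, zero_smul, one_smul, add_zero]
    exact hc
  have hs1 : s < 1 := by linarith
  have hts : t = 1 - s := by linarith
  set x := s • c + t • y with hxdef
  -- basic distinctness facts
  have hay : a ≠ y := fun h => hyK (h ▸ ha)
  have hby : b ≠ y := fun h => hyK (h ▸ hb)
  have hcy : c ≠ y := fun h => hyK (h ▸ hc)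
  have hxa : x ≠ a := fun h => hxK (h ▸ ha)
  have hxb : x ≠ b := fun h => hxK (h ▸ hb)
  have hxc : x ≠ c := fun h => hxK (h ▸ hc)
  have hu : a -ᵥ y ≠ 0 := vsub_ne_zero.mpr hay
  have hv : b -ᵥ y ≠ 0 := vsub_ne_zero.mpr hby
  have hw : c -ᵥ y ≠ 0 := vsub_ne_zero.mpr hcy
  have hxy' : x -ᵥ y = s • (c -ᵥ y) := by
    simp only [hxdef, vsub_eq_sub, hts]
    module
  have hxy : x ≠ y := by
    intro h
    rw [h, vsub_self] at hxy'
    exact hw ((smul_eq_zero.mp hxy'.symm).resolve_left hs0.ne')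
  have hsbtw : Sbtw ℝ y x c := by
    have hline : x = AffineMap.lineMap y c s := by
      rw [AffineMap.lineMap_apply_module', hxdef, hts]
      module
    rw [hline]
    exact sbtw_lineMap_iff.mpr ⟨hcy.symm, hs0, hs1⟩
  -- degenerate angle cases
  by_cases h0 : EuclideanGeometry.angle a y b = 0
  · refine Or.inr ⟨a, c, ha, hc, ?_⟩
    have := EuclideanGeometry.angle_nonneg a x c
    rw [h0] at hab
    linarith
  by_cases hπ : EuclideanGeometry.angle a y b = π
  · exfalso
    have := (EuclideanGeometry.angle_eq_pi_iff_sbtw.mp hπ).wbtw.mem_segment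
    exact hyK (hK.segment_subset ha hb this)
  -- linear independence and decomposition
  have hone : (∡ a y b) ≠ 0 := by
    intro h
    exact h0 ((EuclideanGeometry.oangle_eq_zero_iff_angle_eq_zero hay hby).mp h)
  have honeπ : (∡ a y b) ≠ π := fun h =>
    hπ (EuclideanGeometry.oangle_eq_pi_iff_angle_eq_pi.mp h)
  have hli : LinearIndependent ℝ ![a -ᵥ y, b -ᵥ y] :=
    (Orientation.oangle_ne_zero_and_ne_pi_iff_linearIndependent _).mp ⟨hone, honeπ⟩
  have hspan : Submodule.span ℝ (Set.range ![a -ᵥ y, b -ᵥ y]) = ⊤ :=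
    hli.span_eq_top_of_card_eq_finrank (by simp [finrank_euclideanSpace_fin])
  have hmem : c -ᵥ y ∈ Submodule.span ℝ (Set.range ![a -ᵥ y, b -ᵥ y]) := by
    rw [hspan]; exact Submodule.mem_top
  obtain ⟨f, hf⟩ := (Submodule.mem_span_range_iff_exists_fun ℝ).mp hmem
  set α := f 0 with hα'
  set β := f 1 with hβ'
  have hfw : α • (a -ᵥ y) + β • (b -ᵥ y) = c -ᵥ y := by
    simpa [Fin.sum_univ_two] using hf
  rcases le_or_gt 0 α with hα | hα <;> rcases le_or_gt 0 β with hβ | hβ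
  · -- cone case : 0 ≤ α, 0 ≤ β
    have hσ : 0 < α + β := by
      rcases (add_nonneg hα hβ).lt_or_eq with h | h
      · exact h
      · exfalso
        have hα0 : α = 0 := by linarith
        have hβ0 : β = 0 := by linarith
        rw [hα0, hβ0, zero_smul, zero_smul, add_zero] at hfw
        exact hw hfw.symm
    have hσ' : α + β ≠ 0 := hσ.ne'
    set q := AffineMap.lineMap a b (β / (α + β)) with hqdef
    have hqseg : q ∈ segment ℝ a b := by
      rw [segment_eq_image_lineMap]
      exact ⟨β / (α + β), ⟨div_nonneg hβ hσ.le, (div_le_one hσ).mpr (by linarith)⟩, rfl⟩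
    have hqK : q ∈ K := hK.segment_subset ha hb hqseg
    have hqy : q -ᵥ y = (α + β)⁻¹ • (c -ᵥ y) := by
      rw [← hfw, hqdef]
      simp only [AffineMap.lineMap_apply_module', vsub_eq_sub]
      match_scalars <;> field_simp <;> ring
    have hqney : q ≠ y := by
      intro h
      rw [h, vsub_self] at hqy
      exact hw ((smul_eq_zero.mp hqy.symm).resolve_left (inv_ne_zero hσ'))
    have hxq' : x ≠ q := fun h => hxK (h ▸ hqK)
    rcases le_or_gt ((α + β)⁻¹) s with hcase | hcase
    · -- x lies between q and c, hence in K : contradiction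
      exfalso
      apply hxK
      have hμ0 : 0 < (α + β)⁻¹ := inv_pos.mpr hσ
      have hμ1 : (α + β)⁻¹ < 1 := lt_of_le_of_lt hcase hs1
      have hne : (1:ℝ) - (α + β)⁻¹ ≠ 0 := by
        have : (0:ℝ) < 1 - (α + β)⁻¹ := by linarith
        exact this.ne'
      have e_q : q = (α + β)⁻¹ • (c - y) + y := by
        have hh := hqy
        simp only [vsub_eq_sub] at hh
        linear_combination (norm := module) hh
      have e_x : x = s • (c - y) + y := by
        have hh := hxy'
        simp only [vsub_eq_sub] at hh
        linear_combination (norm := module) hh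
      have hkey : (1 - (α + β)⁻¹) • x = (1 - s) • q + (s - (α + β)⁻¹) • c := by
        rw [e_q, e_x]
        module
      have hxcomb : x = ((1 - s) / (1 - (α + β)⁻¹)) • q +
          ((s - (α + β)⁻¹) / (1 - (α + β)⁻¹)) • c := by
        calc x = (1 - (α + β)⁻¹)⁻¹ • ((1 - (α + β)⁻¹) • x) := by
              rw [smul_smul, inv_mul_cancel₀ hne, one_smul]
          _ = (1 - (α + β)⁻¹)⁻¹ • ((1 - s) • q + (s - (α + β)⁻¹) • c) := by rw [hkey]
          _ = _ := by
              rw [smul_add, smul_smul, smul_smul, div_eq_inv_mul, div_eq_inv_mul]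
      rw [hxcomb]
      have hmul : (α + β)⁻¹ * (α + β) = 1 := inv_mul_cancel₀ hσ'
      have hgt1 : 1 < α + β := by nlinarith
      have hne1 : α + β - 1 ≠ 0 := (by linarith : (0:ℝ) < α + β - 1).ne'
      exact hK hqK hc (div_nonneg (by linarith) (by linarith))
        (div_nonneg (by linarith) (by linarith)) (by field_simp; ring)
    · -- x lies strictly between y and q
      have hsbtw2 : Sbtw ℝ y x q := by
        have hline : x = AffineMap.lineMap y q (s * (α + β)) := by
          rw [AffineMap.lineMap_apply_module']
          have hh := hqy
          simp only [vsub_eq_sub] at hh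
          rw [hh, smul_smul, mul_assoc, mul_inv_cancel₀ hσ', mul_one]
          have hx := hxy'
          simp only [vsub_eq_sub] at hx
          linear_combination (norm := module) hx
        rw [hline]
        refine sbtw_lineMap_iff.mpr ⟨hqney.symm, mul_pos hs0 hσ, ?_⟩
        have := mul_lt_mul_of_pos_right hcase hσ
        rwa [inv_mul_cancel₀ hσ'] at this
      have hWq : Wbtw ℝ a q b := mem_segment_iff_wbtw.mp hqseg
      have hy_add : ∠ a y q + ∠ q y b = ∠ a y b :=
        aux_angle_add_of_wbtw hWq hay.symm hqney.symm hby.symm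
      have hx_add : ∠ a x q + ∠ q x b = ∠ a x b :=
        aux_angle_add_of_wbtw hWq hxa hxq' hxb
      have hE1 : ∠ a y q ≤ ∠ a x q := aux_angle_le_of_sbtw hsbtw2 hay hxa.symm
      have hE2 : ∠ b y q ≤ ∠ b x q := aux_angle_le_of_sbtw hsbtw2 hby hxb.symm
      have c1 : ∠ q y b = ∠ b y q := EuclideanGeometry.angle_comm _ _ _
      have c2 : ∠ q x b = ∠ b x q := EuclideanGeometry.angle_comm _ _ _
      exact Or.inr ⟨a, b, ha, hb, by linarith⟩
  · -- 0 ≤ α, β < 0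
    rcases hα.eq_or_lt with hα0 | hα0
    · -- α = 0 : then ∠ b y c = π, use the pair (b, c)
      refine Or.inr ⟨b, c, hb, hc, ?_⟩
      have hE : ∠ b y c ≤ ∠ b x c := aux_angle_le_of_sbtw hsbtw hby hxb.symm
      have hwv : (c -ᵥ y) = β • (b -ᵥ y) := by
        rw [← hfw, ← hα0, zero_smul, zero_add]
      have hbyc : ∠ b y c = π := by
        show InnerProductGeometry.angle (b -ᵥ y) (c -ᵥ y) = π
        rw [hwv, InnerProductGeometry.angle_smul_right_of_neg _ _ hβ,
          InnerProductGeometry.angle_self_neg_of_nonzero hv]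
      have hπv : ∠ a y b ≤ π := EuclideanGeometry.angle_le_pi a y b
      linarith
    · refine Or.inr ⟨b, c, hb, hc, ?_⟩
      have hE : ∠ b y c ≤ ∠ b x c := aux_angle_le_of_sbtw hsbtw hby hxb.symm
      suffices hyy : γ ≤ ∠ b y c by linarith
      rw [EuclideanGeometry.angle_comm] at hab
      have hux : (-β / α) • (b -ᵥ y) + α⁻¹ • (c -ᵥ y) = (a -ᵥ y) := by
        rw [← hfw]
        match_scalars <;> field_simp <;> ring
      have hcombo := aux_angle_combo_le (p := -β / α) (q := α⁻¹) hv hw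
        (div_nonneg (by linarith) hα0.le) (inv_nonneg.mpr hα0.le) (by rw [hux]; exact hu)
      rw [hux] at hcombo
      calc γ ≤ ∠ b y a := hab
        _ = InnerProductGeometry.angle (b -ᵥ y) (a -ᵥ y) := rfl
        _ ≤ InnerProductGeometry.angle (b -ᵥ y) (c -ᵥ y) := hcombo
        _ = ∠ b y c := rfl
  · -- α < 0, 0 ≤ β
    rcases hβ.eq_or_lt with hβ0 | hβ0
    · -- β = 0 : then ∠ a y c = π, use the pair (a, c)
      refine Or.inr ⟨a, c, ha, hc, ?_⟩
      have hE : ∠ a y c ≤ ∠ a x c := aux_angle_le_of_sbtw hsbtw hay hxa.symm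
      have hwv : (c -ᵥ y) = α • (a -ᵥ y) := by
        rw [← hfw, ← hβ0, zero_smul, add_zero]
      have hayc : ∠ a y c = π := by
        show InnerProductGeometry.angle (a -ᵥ y) (c -ᵥ y) = π
        rw [hwv, InnerProductGeometry.angle_smul_right_of_neg _ _ hα,
          InnerProductGeometry.angle_self_neg_of_nonzero hu]
      have hπv : ∠ a y b ≤ π := EuclideanGeometry.angle_le_pi a y b
      linarith
    · refine Or.inr ⟨a, c, ha, hc, ?_⟩
      have hE : ∠ a y c ≤ ∠ a x c := aux_angle_le_of_sbtw hsbtw hay hxa.symm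
      suffices hyy : γ ≤ ∠ a y c by linarith
      have hux : (-α / β) • (a -ᵥ y) + β⁻¹ • (c -ᵥ y) = (b -ᵥ y) := by
        rw [← hfw]
        match_scalars <;> field_simp <;> ring
      have hcombo := aux_angle_combo_le (p := -α / β) (q := β⁻¹) hu hw
        (div_nonneg (by linarith) hβ0.le) (inv_nonneg.mpr hβ0.le) (by rw [hux]; exact hv)
      rw [hux] at hcombo
      calc γ ≤ ∠ a y b := hab
        _ = InnerProductGeometry.angle (a -ᵥ y) (b -ᵥ y) := rfl
        _ ≤ InnerProductGeometry.angle (a -ᵥ y) (c -ᵥ y) := hcombo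
        _ = ∠ a y c := rfl
  · -- α < 0, β < 0 : y would be in K, contradiction
    exfalso
    apply hyK
    have hσ : (0:ℝ) < 1 - α - β := by linarith
    have hσ' : (1:ℝ) - α - β ≠ 0 := hσ.ne'
    have hαβ : α + β < 0 := by linarith
    have hαβ' : α + β ≠ 0 := hαβ.ne
    have hab' : α • a + β • b + (1 - α - β) • y = c := by
      have hh := hfw
      simp only [vsub_eq_sub, smul_sub] at hh
      linear_combination (norm := module) hh
    have hm : (α / (α + β)) • a + (β / (α + β)) • b ∈ K :=
      hK ha hb (by rw [div_nonneg_iff]; exact Or.inr ⟨hα.le, hαβ.le⟩)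
        (by rw [div_nonneg_iff]; exact Or.inr ⟨hβ.le, hαβ.le⟩) (by field_simp)
    have hyc : y = (1 / (1 - α - β)) • c +
        ((-α - β) / (1 - α - β)) • ((α / (α + β)) • a + (β / (α + β)) • b) := by
      rw [← hab']
      match_scalars <;> field_simp <;> ring
    rw [hyc]
    exact hK hc hm (by positivity)
      (div_nonneg (by linarith) hσ.le) (by field_simp; ring)
end

section
/- Let v > 1 and let a = (a₁, a₂) and b = (b₁, b₂) be points of ℝ² with a₂ ≥ 0, b₂ ≥ 0 and b₁ − a₁ ≥ (a₂ + b₂)/√(v² − 1). Then for all s, t ∈ ℝ, √((s − a₁)² + a₂²) + |t − s|/v + √((b₁ − t)² + b₂²) ≥ (a₂ + b₂)·√(v² − 1)/v + (b₁ − a₁)/v, and equality holds for s = a₁ + a₂/√(v² − 1) and t = b₁ − b₂/√(v² − 1). (Snell's law of refraction: the optimal shortest path using the highway enters and exits the highway with angle of incidence α = arcsin(1/v).) -/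
open Real

lemma snell_key (v w x c : ℝ) (hv : 1 < v) (hw : 0 < w) (hw2 : w ^ 2 = v ^ 2 - 1)
    (hc : 0 ≤ c) : (x + c * w) / v ≤ Real.sqrt (x ^ 2 + c ^ 2) := by
  have hv0 : (0:ℝ) < v := by linarith
  rcases le_or_gt (x + c * w) 0 with h | h
  · exact le_trans (div_nonpos_of_nonpos_of_nonneg h hv0.le) (Real.sqrt_nonneg _)
  · rw [div_le_iff₀ hv0, ← Real.sqrt_sq hv0.le, ← Real.sqrt_mul (by positivity)]
    apply Real.le_sqrt' h |>.mpr
    nlinarith [sq_nonneg (x * w - c), sq_nonneg x, sq_nonneg c]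

/-- Snell's law of refraction for a highway on the x-axis: the travel
time of any path from a = (a₁,a₂) to b = (b₁,b₂) using the highway is at least
(a₂+b₂)·√(v²−1)/v + (b₁−a₁)/v, with equality for the entry and exit points given by
the incidence angle arcsin(1/v). -/
theorem snell_law (v a₁ a₂ b₁ b₂ : ℝ) (hv : 1 < v)
    (ha : 0 ≤ a₂) (hb : 0 ≤ b₂)
    (hsep : (a₂ + b₂) / Real.sqrt (v ^ 2 - 1) ≤ b₁ - a₁) :
    (∀ s t : ℝ,
      (a₂ + b₂) * Real.sqrt (v ^ 2 - 1) / v + (b₁ - a₁) / v ≤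
        Real.sqrt ((s - a₁) ^ 2 + a₂ ^ 2) + |t - s| / v +
          Real.sqrt ((b₁ - t) ^ 2 + b₂ ^ 2)) ∧
    Real.sqrt ((a₁ + a₂ / Real.sqrt (v ^ 2 - 1) - a₁) ^ 2 + a₂ ^ 2) +
        |b₁ - b₂ / Real.sqrt (v ^ 2 - 1) - (a₁ + a₂ / Real.sqrt (v ^ 2 - 1))| / v +
        Real.sqrt ((b₁ - (b₁ - b₂ / Real.sqrt (v ^ 2 - 1))) ^ 2 + b₂ ^ 2) =
      (a₂ + b₂) * Real.sqrt (v ^ 2 - 1) / v + (b₁ - a₁) / v := by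
  have hv0 : (0:ℝ) < v := by linarith
  set w := Real.sqrt (v ^ 2 - 1) with hwdef
  have hw : 0 < w := Real.sqrt_pos.mpr (by nlinarith)
  have hw2 : w ^ 2 = v ^ 2 - 1 := Real.sq_sqrt (by nlinarith)
  constructor
  · intro s t
    have h1 := snell_key v w (s - a₁) a₂ hv hw hw2 ha
    have h2 := snell_key v w (b₁ - t) b₂ hv hw hw2 hb
    have : (a₂ + b₂) * w / v + (b₁ - a₁) / v =
        ((s - a₁) + a₂ * w) / v + (t - s) / v + ((b₁ - t) + b₂ * w) / v := by
      field_simp; ring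
    rw [this]
    gcongr
    · exact le_abs_self _
  · have key : ∀ c : ℝ, 0 ≤ c → Real.sqrt ((c / w) ^ 2 + c ^ 2) = c * v / w := by
      intro c hc
      have : (c / w) ^ 2 + c ^ 2 = (c * v / w) ^ 2 := by
        field_simp
        nlinarith
      rw [this, Real.sqrt_sq (by positivity)]
    have e1 : a₁ + a₂ / w - a₁ = a₂ / w := by ring
    have e2 : b₁ - (b₁ - b₂ / w) = b₂ / w := by ring
    rw [e1, e2, key a₂ ha, key b₂ hb]
    have hmid : 0 ≤ b₁ - b₂ / w - (a₁ + a₂ / w) := by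
      have : (a₂ + b₂) / w = a₂ / w + b₂ / w := by ring
      linarith [hsep.trans_eq' this, this ▸ hsep]
    rw [abs_of_nonneg hmid]
    field_simp
    linear_combination (-(a₂ + b₂)) * hw2
end

section
/- Let a = (a₁, a₂), b = (b₁, b₂), q = (q₁, q₂) ∈ ℝ² with b₁ ≤ a₁, 0 ≤ b₂ ≤ a₂, q₁ ≥ a₁ and q₂ ≥ 0, and let dist denote the Euclidean distance. If dist q b ≤ b₂ + q₂, then dist q a ≤ a₂ + q₂. (The Euclidean analogue, for infinite highway speed, of Observation 1: if a is above and to the right of b, then to the right of a the walking region of b is contained in that of a.) -/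
/-- A point of the Euclidean plane given by its coordinates. -/
noncomputable def pt (x y : ℝ) : EuclideanSpace ℝ (Fin 2) := !₂[x, y]

lemma pt_dist (x y u v : ℝ) :
    dist (pt x y) (pt u v) = Real.sqrt ((x - u) ^ 2 + (y - v) ^ 2) := by
  rw [EuclideanSpace.dist_eq]
  congr 1
  simp [pt, Fin.sum_univ_two, Real.dist_eq, sq_abs]

/-- (Euclidean analogue of Observation 1, infinite highway speed.)
If a = (a₁,a₂) is above and to the right of b = (b₁,b₂), then any point q = (q₁,q₂)
to the right of a and above the highway that lies in the walking region of b also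
lies in the walking region of a. -/
theorem euclidean_walking_region_mono (a₁ a₂ b₁ b₂ q₁ q₂ : ℝ)
    (hx : b₁ ≤ a₁) (hb2 : 0 ≤ b₂) (hab : b₂ ≤ a₂)
    (hq1 : a₁ ≤ q₁) (hq2 : 0 ≤ q₂)
    (h : dist (pt q₁ q₂) (pt b₁ b₂) ≤ b₂ + q₂) :
    dist (pt q₁ q₂) (pt a₁ a₂) ≤ a₂ + q₂ := by
  rw [pt_dist] at h ⊢
  have hb : (q₁ - b₁) ^ 2 + (q₂ - b₂) ^ 2 ≤ (b₂ + q₂) ^ 2 := by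
    have := Real.sq_sqrt (by positivity : (0 : ℝ) ≤ (q₁ - b₁) ^ 2 + (q₂ - b₂) ^ 2)
    nlinarith [Real.sqrt_nonneg ((q₁ - b₁) ^ 2 + (q₂ - b₂) ^ 2)]
  have h1 : (q₁ - a₁) ^ 2 ≤ (q₁ - b₁) ^ 2 := by nlinarith
  have h2 : b₂ * q₂ ≤ a₂ * q₂ := by nlinarith
  have key : (q₁ - a₁) ^ 2 + (q₂ - a₂) ^ 2 ≤ (a₂ + q₂) ^ 2 := by nlinarith
  calc Real.sqrt ((q₁ - a₁) ^ 2 + (q₂ - a₂) ^ 2) ≤ Real.sqrt ((a₂ + q₂) ^ 2) :=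
        Real.sqrt_le_sqrt key
    _ = a₂ + q₂ := Real.sqrt_sq (by linarith)
end

section
/- Let a = (a₁, a₂) and b = (b₁, b₂) be points of ℝ² with a₂ > 0 and b₂ > 0, and for a point x = (x₁,x₂) with x₂ > 0 let W(x) = {q = (q₁,q₂) ∈ ℝ² : 0 ≤ q₂ ∧ dist q x ≤ x₂ + q₂} denote its walking region restricted to the closed upper half-plane. Then ⋃_{x ∈ segment ℝ a b} W(x) = convexHull ℝ (W(a) ∪ W(b)). (For infinite highway speed, the walking region of a segment is the convex hull of the walking regions of its endpoints; its right boundary consists of two parabolic arcs joined by a common tangent segment.) -/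
/-- For infinite highway speed, the walking region of a segment
(the union, restricted to the closed upper half-plane, of the walking regions of
its points) is the convex hull of the walking regions of its endpoints. -/
theorem walking_region_segment_eq_convexHull
    (a b : EuclideanSpace ℝ (Fin 2)) (ha : 0 < a 1) (hb : 0 < b 1)
    (W : EuclideanSpace ℝ (Fin 2) → Set (EuclideanSpace ℝ (Fin 2)))
    (hW : W = fun x => {q | 0 ≤ q 1 ∧ dist q x ≤ x 1 + q 1}) :
    (⋃ x ∈ segment ℝ a b, W x) = convexHull ℝ (W a ∪ W b) := by
  subst hW
  apply Set.Subset.antisymm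
  · rintro q hq
    simp only [Set.mem_iUnion, Set.mem_setOf_eq, exists_prop] at hq
    obtain ⟨x, ⟨t1, t2, ht1, ht2, hsum, hxeq⟩, hq1, hq2⟩ := hq
    have hx1 : x 1 = t1 * a 1 + t2 * b 1 := by
      rw [← hxeq]; simp [PiLp.add_apply, PiLp.smul_apply]
    have hx1pos : 0 < x 1 := by
      nlinarith [mul_le_mul_of_nonneg_left (min_le_left (a 1) (b 1)) ht1,
        mul_le_mul_of_nonneg_left (min_le_right (a 1) (b 1)) ht2,
        lt_min ha hb]
    set p := a + (a 1 / x 1) • (q - x) with hp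
    set r := b + (b 1 / x 1) • (q - x) with hr
    have hnorm : dist q x = ‖q - x‖ := dist_eq_norm q x
    have hp1 : p 1 = a 1 * q 1 / x 1 := by
      simp only [hp, PiLp.add_apply, PiLp.smul_apply, PiLp.sub_apply, smul_eq_mul]
      field_simp; ring
    have hr1 : r 1 = b 1 * q 1 / x 1 := by
      simp only [hr, PiLp.add_apply, PiLp.smul_apply, PiLp.sub_apply, smul_eq_mul]
      field_simp; ring
    have hpmem : p ∈ {q : EuclideanSpace ℝ (Fin 2) | 0 ≤ q 1 ∧ dist q a ≤ a 1 + q 1} := by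
      constructor
      · rw [hp1]; positivity
      · have hd : dist p a = (a 1 / x 1) * ‖q - x‖ := by
          rw [dist_eq_norm]
          have h2 : p - a = (a 1 / x 1) • (q - x) := by rw [hp]; abel
          rw [h2, norm_smul, Real.norm_eq_abs, abs_of_nonneg (by positivity)]
        rw [hd, hp1, hnorm] at *
        have h1 : a 1 / x 1 * ‖q - x‖ ≤ a 1 / x 1 * (x 1 + q 1) :=
          mul_le_mul_of_nonneg_left hq2 (by positivity)
        refine h1.trans (le_of_eq ?_)
        field_simp
    have hrmem : r ∈ {q : EuclideanSpace ℝ (Fin 2) | 0 ≤ q 1 ∧ dist q b ≤ b 1 + q 1} := by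
      constructor
      · rw [hr1]; positivity
      · have hd : dist r b = (b 1 / x 1) * ‖q - x‖ := by
          rw [dist_eq_norm]
          have h2 : r - b = (b 1 / x 1) • (q - x) := by rw [hr]; abel
          rw [h2, norm_smul, Real.norm_eq_abs, abs_of_nonneg (by positivity)]
        rw [hd, hr1, hnorm] at *
        have h1 : b 1 / x 1 * ‖q - x‖ ≤ b 1 / x 1 * (x 1 + q 1) :=
          mul_le_mul_of_nonneg_left hq2 (by positivity)
        refine h1.trans (le_of_eq ?_)
        field_simp
    have hc : t1 * (a 1 / x 1) + t2 * (b 1 / x 1) = 1 := by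
      field_simp
      linarith [hx1]
    have step : t1 • p + t2 • r
        = (t1 • a + t2 • b) + (t1 * (a 1 / x 1) + t2 * (b 1 / x 1)) • (q - x) := by
      rw [hp, hr]; module
    have hkey : t1 • p + t2 • r = q := by
      rw [step, hc, one_smul, hxeq, add_sub_cancel]
    rw [← hkey]
    have hPa : p ∈ convexHull ℝ ({q : EuclideanSpace ℝ (Fin 2) | 0 ≤ q 1 ∧ dist q a ≤ a 1 + q 1} ∪ {q : EuclideanSpace ℝ (Fin 2) | 0 ≤ q 1 ∧ dist q b ≤ b 1 + q 1}) :=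
      subset_convexHull ℝ _ (Or.inl hpmem)
    have hPb : r ∈ convexHull ℝ ({q : EuclideanSpace ℝ (Fin 2) | 0 ≤ q 1 ∧ dist q a ≤ a 1 + q 1} ∪ {q : EuclideanSpace ℝ (Fin 2) | 0 ≤ q 1 ∧ dist q b ≤ b 1 + q 1}) :=
      subset_convexHull ℝ _ (Or.inr hrmem)
    exact convex_convexHull ℝ _ hPa hPb ht1 ht2 hsum
  · apply convexHull_min
    · rintro q (hq | hq)
      · exact Set.mem_biUnion (left_mem_segment ℝ a b) hq
      · exact Set.mem_biUnion (right_mem_segment ℝ a b) hq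
    · intro u hu v hv t1 t2 ht1 ht2 hsum
      simp only [Set.mem_iUnion, Set.mem_setOf_eq, exists_prop] at hu hv ⊢
      obtain ⟨x, hx, hu1, hu2⟩ := hu
      obtain ⟨y, hy, hv1, hv2⟩ := hv
      refine ⟨t1 • x + t2 • y, (convex_segment a b) hx hy ht1 ht2 hsum, ?_, ?_⟩
      · simp only [PiLp.add_apply, PiLp.smul_apply, smul_eq_mul]
        exact add_nonneg (mul_nonneg ht1 hu1) (mul_nonneg ht2 hv1)
      · calc dist (t1 • u + t2 • v) (t1 • x + t2 • y)
            ≤ t1 * dist u x + t2 * dist v y := by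
              rw [dist_eq_norm, dist_eq_norm, dist_eq_norm]
              have h2 : (t1 • u + t2 • v) - (t1 • x + t2 • y)
                  = t1 • (u - x) + t2 • (v - y) := by module
              rw [h2]
              refine (norm_add_le _ _).trans ?_
              rw [norm_smul, norm_smul, Real.norm_eq_abs, Real.norm_eq_abs,
                abs_of_nonneg ht1, abs_of_nonneg ht2]
          _ ≤ t1 * (x 1 + u 1) + t2 * (y 1 + v 1) := by
              have := mul_le_mul_of_nonneg_left hu2 ht1
              have := mul_le_mul_of_nonneg_left hv2 ht2
              linarith
          _ = (t1 • x + t2 • y) 1 + (t1 • u + t2 • v) 1 := by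
              simp only [PiLp.add_apply, PiLp.smul_apply, smul_eq_mul]; ring
end
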